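/- arXiv:2304.10577 — 15 statements merged into one kernel-verified Lean document; each statement's English description precedes it below -/
import Mathlib

section
/- For every t ∈ ℝ one has g_α(t) ≤ g_α(q_{1-α}); that is, the (1-α)-quantile q_{1-α} maximizes over ℝ the function t ↦ t + (1-α)⁻¹·E[min(Y - t, 0)], whose maximum value is the lower Conditional Value at Risk CVaR₋ of Y. (This is the envelope property ρ₋*(x,a) = sup_q ρ₋*(x,a,q) used for the lower-bound pseudo-outcomes in Appendix B.) -/
open MeasureTheory Filter Topology

private lemma integrable_min_sub' {Ω : Type*} [MeasurableSpace Ω] {P : Measure Ω}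
    [IsFiniteMeasure P] {Y : Ω → ℝ} (hY : Integrable Y P) (t : ℝ) :
    Integrable (fun ω => min (Y ω - t) 0) P := by
  have h : (fun ω => min (Y ω - t) 0) = fun ω => ((Y ω - t) - |Y ω - t|) / 2 := by
    funext ω
    rcases le_total (Y ω - t) 0 with h | h
    · rw [min_eq_left h, abs_of_nonpos h]; ring
    · rw [min_eq_right h, abs_of_nonneg h]; ring
  rw [h]
  exact ((hY.sub (integrable_const t)).sub (hY.sub (integrable_const t)).abs).div_const 2

/-- The (1-α)-quantile maximizes the lower-CVaR objective
`g_α(t) = t + (1-α)⁻¹ E[min(Y - t, 0)]`, whose maximum is `CVaR₋`. -/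
theorem quantile_maximizes_lower_cvar_objective
    {Ω : Type*} [MeasurableSpace Ω] (P : Measure Ω) [IsProbabilityMeasure P]
    (Y : Ω → ℝ) (hY : Integrable Y P)
    (α : ℝ) (hα : α ∈ Set.Ioo (0 : ℝ) 1)
    (g : ℝ → ℝ)
    (gdef : ∀ t : ℝ, g t = t + (1 - α)⁻¹ * ∫ ω, min (Y ω - t) 0 ∂P)
    (q : ℝ)
    (hq : q = sInf {β : ℝ | 1 - α ≤ (P {ω | Y ω ≤ β}).toReal}) :
    ∀ t : ℝ, g t ≤ g q := by
  obtain ⟨hα0, hα1⟩ := hα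
  set c : ℝ := 1 - α with hcdef
  have hc : 0 < c := by simp only [hcdef]; linarith
  have hc1 : c < 1 := by simp only [hcdef]; linarith
  -- measurable representative Z of Y
  have hYm := hY.aestronglyMeasurable
  set Z : Ω → ℝ := hYm.mk Y with hZdef
  have hZsm : StronglyMeasurable Z := hYm.stronglyMeasurable_mk
  have hZmeas : Measurable Z := hZsm.measurable
  have hYZ : Y =ᵐ[P] Z := hYm.ae_eq_mk
  have hZint : Integrable Z P := hY.congr hYZ
  -- sets agree in measure
  have hsets : ∀ β : ℝ, P {ω | Y ω ≤ β} = P {ω | Z ω ≤ β} := by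
    intro β
    apply measure_congr
    filter_upwards [hYZ] with ω h
    show (Y ω ≤ β) = (Z ω ≤ β)
    rw [h]
  -- integrals agree
  have hints : ∀ t : ℝ, (∫ ω, min (Y ω - t) 0 ∂P) = ∫ ω, min (Z ω - t) 0 ∂P := by
    intro t
    apply integral_congr_ae
    filter_upwards [hYZ] with ω h
    rw [h]
  have hmle : ∀ β : ℝ, MeasurableSet {ω | Z ω ≤ β} := fun β =>
    measurableSet_le hZmeas measurable_const
  set F : ℝ → ℝ := fun β => (P {ω | Z ω ≤ β}).toReal with hFdef
  have hFmono : Monotone F := by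
    intro a b hab
    refine ENNReal.toReal_mono (measure_ne_top P _) (measure_mono fun ω h => ?_)
    simp only [Set.mem_setOf_eq] at h ⊢
    linarith
  set S : Set ℝ := {β : ℝ | c ≤ F β} with hSdef
  have hqS : q = sInf S := by
    rw [hq]
    congr 1
    ext β
    simp only [hSdef, Set.mem_setOf_eq, hFdef, hsets β]
  -- S nonempty
  have hSne : S.Nonempty := by
    have hmon : Monotone (fun n : ℕ => {ω | Z ω ≤ (n : ℝ)}) := by
      intro a b hab ω h
      simp only [Set.mem_setOf_eq] at h ⊢
      have : (a : ℝ) ≤ b := by exact_mod_cast hab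
      linarith
    have huniv : (⋃ n : ℕ, {ω | Z ω ≤ (n : ℝ)}) = Set.univ := by
      ext ω
      simp only [Set.mem_iUnion, Set.mem_setOf_eq, Set.mem_univ, iff_true]
      exact exists_nat_ge (Z ω)
    have htend := tendsto_measure_iUnion_atTop (μ := P) hmon
    rw [huniv, measure_univ] at htend
    have htr : Tendsto (fun n : ℕ => F n) atTop (𝓝 1) := by
      have := (ENNReal.tendsto_toReal (a := 1) (by simp)).comp htend
      simpa [Function.comp_def, hFdef] using this
    obtain ⟨n, hn⟩ := (htr.eventually (eventually_ge_nhds hc1)).exists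
    exact ⟨n, hn⟩
  -- S bounded below
  have hSbdd : BddBelow S := by
    have hant : Antitone (fun n : ℕ => {ω | Z ω ≤ -(n : ℝ)}) := by
      intro a b hab ω h
      simp only [Set.mem_setOf_eq] at h ⊢
      have : (a : ℝ) ≤ b := by exact_mod_cast hab
      linarith
    have hempty : (⋂ n : ℕ, {ω | Z ω ≤ -(n : ℝ)}) = ∅ := by
      ext ω
      simp only [Set.mem_iInter, Set.mem_setOf_eq, Set.mem_empty_iff_false, iff_false, not_forall]
      obtain ⟨n, hn⟩ := exists_nat_gt (-(Z ω))
      exact ⟨n, by push_neg; linarith⟩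
    have htend := tendsto_measure_iInter_atTop (μ := P)
      (fun n => (hmle _).nullMeasurableSet) hant ⟨0, measure_ne_top P _⟩
    rw [hempty, measure_empty] at htend
    have htr : Tendsto (fun n : ℕ => F (-(n : ℝ))) atTop (𝓝 0) := by
      have := (ENNReal.tendsto_toReal (a := 0) (by simp)).comp htend
      simpa [Function.comp_def, hFdef] using this
    obtain ⟨n, hn⟩ := (htr.eventually (eventually_lt_nhds hc)).exists
    refine ⟨-(n : ℝ), fun β hβ => ?_⟩
    by_contra hcon
    push_neg at hcon
    exact absurd (le_trans hβ (hFmono hcon.le)) (not_le.mpr hn)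
  -- Fact A : c ≤ F q
  have hFq : c ≤ F q := by
    have hstep : ∀ n : ℕ, c ≤ F (q + 1 / ((n : ℝ) + 1)) := by
      intro n
      have hpos : (0 : ℝ) < 1 / ((n : ℝ) + 1) := by positivity
      obtain ⟨β, hβS, hβlt⟩ := exists_lt_of_csInf_lt hSne
        (show sInf S < q + 1 / ((n : ℝ) + 1) by rw [← hqS]; linarith)
      exact le_trans hβS (hFmono hβlt.le)
    have hant : Antitone (fun n : ℕ => {ω | Z ω ≤ q + 1 / ((n : ℝ) + 1)}) := by
      intro a b hab ω h
      simp only [Set.mem_setOf_eq] at h ⊢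
      have hba : (a : ℝ) ≤ b := by exact_mod_cast hab
      have : 1 / ((b : ℝ) + 1) ≤ 1 / ((a : ℝ) + 1) :=
        one_div_le_one_div_of_le (by positivity) (by linarith)
      linarith
    have hiInter : (⋂ n : ℕ, {ω | Z ω ≤ q + 1 / ((n : ℝ) + 1)}) = {ω | Z ω ≤ q} := by
      ext ω
      simp only [Set.mem_iInter, Set.mem_setOf_eq]
      constructor
      · intro h
        refine le_of_forall_pos_le_add fun ε hε => ?_
        obtain ⟨n, hn⟩ := exists_nat_one_div_lt hε
        exact le_trans (h n) (by linarith)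
      · intro h n
        have : (0:ℝ) < 1 / ((n:ℝ) + 1) := by positivity
        linarith
    have htend := tendsto_measure_iInter_atTop (μ := P)
      (fun n => (hmle _).nullMeasurableSet) hant ⟨0, measure_ne_top P _⟩
    rw [hiInter] at htend
    have htr : Tendsto (fun n : ℕ => F (q + 1 / ((n : ℝ) + 1))) atTop (𝓝 (F q)) := by
      have := (ENNReal.tendsto_toReal (measure_ne_top P _)).comp htend
      simpa [Function.comp_def, hFdef] using this
    exact ge_of_tendsto htr (Eventually.of_forall hstep)
  -- Fact B : (P {Z < q}).toReal ≤ c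
  have hFq' : (P {ω | Z ω < q}).toReal ≤ c := by
    have hstep : ∀ n : ℕ, F (q - 1 / ((n : ℝ) + 1)) ≤ c := by
      intro n
      have hpos : (0 : ℝ) < 1 / ((n : ℝ) + 1) := by positivity
      by_contra hcon
      push_neg at hcon
      have hmem : q - 1 / ((n : ℝ) + 1) ∈ S := le_of_lt hcon
      have h2 := csInf_le hSbdd hmem
      rw [← hqS] at h2
      linarith
    have hmon : Monotone (fun n : ℕ => {ω | Z ω ≤ q - 1 / ((n : ℝ) + 1)}) := by
      intro a b hab ω h
      simp only [Set.mem_setOf_eq] at h ⊢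
      have hba : (a : ℝ) ≤ b := by exact_mod_cast hab
      have : 1 / ((b : ℝ) + 1) ≤ 1 / ((a : ℝ) + 1) :=
        one_div_le_one_div_of_le (by positivity) (by linarith)
      linarith
    have hiUnion : (⋃ n : ℕ, {ω | Z ω ≤ q - 1 / ((n : ℝ) + 1)}) = {ω | Z ω < q} := by
      ext ω
      simp only [Set.mem_iUnion, Set.mem_setOf_eq]
      constructor
      · rintro ⟨n, hn⟩
        have : (0:ℝ) < 1 / ((n:ℝ) + 1) := by positivity
        linarith
      · intro h
        obtain ⟨n, hn⟩ := exists_nat_one_div_lt (show (0:ℝ) < q - Z ω by linarith)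
        exact ⟨n, by linarith⟩
    have htend := tendsto_measure_iUnion_atTop (μ := P) hmon
    rw [hiUnion] at htend
    have htr : Tendsto (fun n : ℕ => F (q - 1 / ((n : ℝ) + 1))) atTop
        (𝓝 ((P {ω | Z ω < q}).toReal)) := by
      have := (ENNReal.tendsto_toReal (measure_ne_top P _)).comp htend
      simpa [Function.comp_def, hFdef] using this
    exact le_of_tendsto htr (Eventually.of_forall hstep)
  -- main computation
  intro t
  rw [gdef t, gdef q, hints t, hints q]
  set It : ℝ := ∫ ω, min (Z ω - t) 0 ∂P with hIt
  set Iq : ℝ := ∫ ω, min (Z ω - q) 0 ∂P with hIq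
  have hintt := integrable_min_sub' hZint t
  have hintq := integrable_min_sub' hZint q
  have hsubint : Integrable (fun ω => min (Z ω - q) 0 - min (Z ω - t) 0) P := hintq.sub hintt
  have hsubeq : ∫ ω, (min (Z ω - q) 0 - min (Z ω - t) 0) ∂P = Iq - It :=
    integral_sub hintq hintt
  have hkey : c * (t - q) ≤ Iq - It := by
    rcases le_total t q with hle | hle
    · -- t ≤ q : use indicator of {Z < q}
      have hmeaslt : MeasurableSet {ω | Z ω < q} :=
        measurableSet_lt hZmeas measurable_const
      have hptw : ∀ ω, ({ω | Z ω < q}.indicator (fun _ => t - q)) ω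
          ≤ min (Z ω - q) 0 - min (Z ω - t) 0 := by
        intro ω
        simp only [Set.indicator_apply, Set.mem_setOf_eq, min_def]
        split_ifs <;> linarith
      have hmono : ∫ ω, ({ω | Z ω < q}.indicator (fun _ => t - q)) ω ∂P
          ≤ ∫ ω, (min (Z ω - q) 0 - min (Z ω - t) 0) ∂P :=
        integral_mono ((integrable_const (t - q)).indicator hmeaslt) hsubint hptw
      rw [integral_indicator_const (t - q) hmeaslt, hsubeq, smul_eq_mul, measureReal_def] at hmono
      have h2 : c * (t - q) ≤ (P {ω | Z ω < q}).toReal * (t - q) :=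
        mul_le_mul_of_nonpos_right hFq' (by linarith)
      linarith
    · -- q ≤ t : use indicator of {Z ≤ q}
      have hptw : ∀ ω, ({ω | Z ω ≤ q}.indicator (fun _ => t - q)) ω
          ≤ min (Z ω - q) 0 - min (Z ω - t) 0 := by
        intro ω
        simp only [Set.indicator_apply, Set.mem_setOf_eq, min_def]
        split_ifs <;> linarith
      have hmono : ∫ ω, ({ω | Z ω ≤ q}.indicator (fun _ => t - q)) ω ∂P
          ≤ ∫ ω, (min (Z ω - q) 0 - min (Z ω - t) 0) ∂P :=
        integral_mono ((integrable_const (t - q)).indicator (hmle q)) hsubint hptw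
      rw [integral_indicator_const (t - q) (hmle q), hsubeq, smul_eq_mul, measureReal_def] at hmono
      have h2 : c * (t - q) ≤ (P {ω | Z ω ≤ q}).toReal * (t - q) :=
        mul_le_mul_of_nonneg_right hFq (by linarith)
      linarith
  -- conclude
  have h1 : c⁻¹ * (c * (t - q)) ≤ c⁻¹ * (Iq - It) :=
    mul_le_mul_of_nonneg_left hkey (inv_nonneg.mpr hc.le)
  rw [← mul_assoc, inv_mul_cancel₀ hc.ne', one_mul] at h1
  have hgoal : t + c⁻¹ * It ≤ q + c⁻¹ * Iq := by nlinarith [mul_sub (c⁻¹) Iq It]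
  exact hgoal
end

section
/- Suppose the cumulative distribution function F(s) := P(Y ≤ s) is Lipschitz continuous with constant B ≥ 0 and that q ∈ ℝ satisfies F(q) = α. Then for every t ∈ ℝ, 0 ≤ h_α(t) - h_α(q) ≤ (B / (2(1-α)))·(t - q)². (This second-order dependence of the CVaR objective on the quantile argument produces the (q̂ - q*)² terms in the bias bound of Theorem 4.2.) -/
open MeasureTheory

private lemma maxsub_eq (a u v : ℝ) (huv : u ≤ v) :
    max (a - u) 0 - max (a - v) 0
      = ∫ s in Set.Ioc u v, (Set.Iio a).indicator (fun _ => (1:ℝ)) s := by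
  rw [MeasureTheory.setIntegral_indicator measurableSet_Iio]
  rcases le_or_gt a u with h | h
  · have he : Set.Ioc u v ∩ Set.Iio a = ∅ := by
      ext s
      simp only [Set.mem_inter_iff, Set.mem_Ioc, Set.mem_Iio, Set.mem_empty_iff_false, iff_false,
        not_and]
      rintro ⟨h1, _⟩ h2; linarith
    rw [he]
    simp only [Measure.restrict_empty, integral_zero_measure]
    rw [max_eq_right (by linarith), max_eq_right (by linarith)]
    ring
  rcases le_or_gt a v with h2 | h2
  · have he : Set.Ioc u v ∩ Set.Iio a = Set.Ioo u a := by
      ext s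
      simp only [Set.mem_inter_iff, Set.mem_Ioc, Set.mem_Iio, Set.mem_Ioo]
      constructor
      · rintro ⟨⟨h3, h4⟩, h5⟩; exact ⟨h3, h5⟩
      · rintro ⟨h3, h5⟩; exact ⟨⟨h3, by linarith⟩, h5⟩
    rw [he, MeasureTheory.setIntegral_const, measureReal_def, Real.volume_Ioo, smul_eq_mul, mul_one,
      ENNReal.toReal_ofReal (by linarith)]
    rw [max_eq_left (by linarith), max_eq_right (by linarith)]
    ring
  · have he : Set.Ioc u v ∩ Set.Iio a = Set.Ioc u v := by
      apply Set.inter_eq_left.mpr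
      intro s hs
      exact lt_of_le_of_lt hs.2 h2
    rw [he, MeasureTheory.setIntegral_const, measureReal_def, Real.volume_Ioc, smul_eq_mul, mul_one,
      ENNReal.toReal_ofReal (by linarith)]
    rw [max_eq_left (by linarith), max_eq_left (by linarith)]
    ring

private lemma g_diff {Ω : Type*} [MeasurableSpace Ω] (P : Measure Ω) [IsProbabilityMeasure P]
    (Y : Ω → ℝ) (hYm : Measurable Y) (hY : Integrable Y P) (u v : ℝ) (huv : u ≤ v) :
    (∫ ω, max (Y ω - u) 0 ∂P) - ∫ ω, max (Y ω - v) 0 ∂P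
      = ∫ s in Set.Ioc u v, (P {ω | s < Y ω}).toReal := by
  have h1 : Integrable (fun ω => max (Y ω - u) 0) P := (hY.sub (integrable_const u)).pos_part
  have h2 : Integrable (fun ω => max (Y ω - v) 0) P := (hY.sub (integrable_const v)).pos_part
  rw [← integral_sub h1 h2]
  have hstep : ∫ ω, (max (Y ω - u) 0 - max (Y ω - v) 0) ∂P
      = ∫ ω, (∫ s in Set.Ioc u v, (Set.Iio (Y ω)).indicator (fun _ => (1:ℝ)) s) ∂P :=
    integral_congr_ae (Filter.Eventually.of_forall fun ω => maxsub_eq (Y ω) u v huv)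
  rw [hstep]
  haveI : Fact ((volume : Measure ℝ) (Set.Ioc u v) < ⊤) := ⟨measure_Ioc_lt_top⟩
  have hM : MeasurableSet {p : Ω × ℝ | p.2 < Y p.1} :=
    measurableSet_lt measurable_snd (hYm.comp measurable_fst)
  have hint : Integrable
      (Function.uncurry fun ω s => (Set.Iio (Y ω)).indicator (fun _ => (1:ℝ)) s)
      (P.prod (volume.restrict (Set.Ioc u v))) := by
    have heq : (Function.uncurry fun ω s => (Set.Iio (Y ω)).indicator (fun _ => (1:ℝ)) s)
        = Set.indicator {p : Ω × ℝ | p.2 < Y p.1} (fun _ => (1:ℝ)) := by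
      ext p
      by_cases hp : p.2 < Y p.1 <;>
        simp [Function.uncurry, Set.indicator, hp, Set.mem_Iio]
    rw [heq]
    exact (integrable_const 1).indicator hM
  rw [MeasureTheory.integral_integral_swap hint]
  refine setIntegral_congr_fun measurableSet_Ioc fun s _ => ?_
  have hpt : ∀ ω, (Set.Iio (Y ω)).indicator (fun _ => (1:ℝ)) s
      = ({ω | s < Y ω}).indicator (fun _ => (1:ℝ)) ω := by
    intro ω
    by_cases hω : s < Y ω <;> simp [Set.indicator, hω, Set.mem_Iio]
  calc ∫ ω, (Set.Iio (Y ω)).indicator (fun _ => (1:ℝ)) s ∂P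
      = ∫ ω, ({ω | s < Y ω}).indicator (fun _ => (1:ℝ)) ω ∂P :=
        integral_congr_ae (Filter.Eventually.of_forall hpt)
    _ = (P {ω | s < Y ω}).toReal := by
        have : MeasurableSet {ω | s < Y ω} := measurableSet_lt measurable_const hYm
        rw [← measureReal_def, ← MeasureTheory.integral_indicator_one this]
        rfl

/-- Second-order dependence of the CVaR objective on the quantile argument:
if the cdf is `B`-Lipschitz and `F q = α`, then
`0 ≤ h_α(t) - h_α(q) ≤ (B / (2(1-α))) (t - q)²`. -/
theorem cvar_objective_second_order
    {Ω : Type*} [MeasurableSpace Ω] (P : Measure Ω) [IsProbabilityMeasure P]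
    (Y : Ω → ℝ) (hY : Integrable Y P)
    (α : ℝ) (hα : α ∈ Set.Ioo (0 : ℝ) 1)
    (h : ℝ → ℝ)
    (hdef : ∀ t : ℝ, h t = t + (1 - α)⁻¹ * ∫ ω, max (Y ω - t) 0 ∂P)
    (F : ℝ → ℝ) (hF : ∀ s : ℝ, F s = (P {ω | Y ω ≤ s}).toReal)
    (B : ℝ) (hB : 0 ≤ B)
    (hLip : ∀ s t : ℝ, |F s - F t| ≤ B * |s - t|)
    (q : ℝ) (hq : F q = α) :
    ∀ t : ℝ, 0 ≤ h t - h q ∧ h t - h q ≤ B / (2 * (1 - α)) * (t - q) ^ 2 := by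
  obtain ⟨hα0, hα1⟩ := hα
  have h1α : 0 < 1 - α := by linarith
  -- measurable version of Y
  set Y' : Ω → ℝ := hY.1.mk Y with hY'def
  have hYY' : Y =ᵐ[P] Y' := hY.1.ae_eq_mk
  have hY'm : Measurable Y' := hY.1.stronglyMeasurable_mk.measurable
  have hY'int : Integrable Y' P := hY.congr hYY'
  -- F in terms of Y'
  have hFs : ∀ s, F s = (P {ω | Y' ω ≤ s}).toReal := by
    intro s
    rw [hF s]
    congr 1
    apply measure_congr
    rw [Filter.eventuallyEq_set]
    filter_upwards [hYY'] with ω hω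
    simp [hω, Set.mem_setOf_eq]
  -- F is monotone
  have hFmono : Monotone F := by
    intro s u hsu
    rw [hF s, hF u]
    exact ENNReal.toReal_mono (measure_ne_top _ _)
      (measure_mono fun ω hω => le_trans hω hsu)
  -- F is continuous (Lipschitz)
  have hFlip : LipschitzWith (Real.toNNReal B) F :=
    LipschitzWith.of_dist_le_mul fun s t => by
      rw [Real.dist_eq, Real.dist_eq, Real.coe_toNNReal B hB]
      exact hLip s t
  have hFcont : Continuous F := hFlip.continuous
  -- tail probability identity
  have hcompl : ∀ s, (P {ω | s < Y' ω}).toReal = 1 - F s := by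
    intro s
    have hms : MeasurableSet {ω | Y' ω ≤ s} := hY'm measurableSet_Iic
    have hset : {ω | s < Y' ω} = {ω | Y' ω ≤ s}ᶜ := by
      ext ω; simp [not_le]
    rw [hset, prob_compl_eq_one_sub hms,
      ENNReal.toReal_sub_of_le prob_le_one ENNReal.one_ne_top, ENNReal.toReal_one, hFs s]
  -- key identity
  have key : ∀ u v : ℝ, u ≤ v → h v - h u = (1 - α)⁻¹ * ∫ s in u..v, (F s - α) := by
    intro u v huv
    have hgu : ∫ ω, max (Y ω - u) 0 ∂P = ∫ ω, max (Y' ω - u) 0 ∂P :=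
      integral_congr_ae (by filter_upwards [hYY'] with ω hω; rw [hω])
    have hgv : ∫ ω, max (Y ω - v) 0 ∂P = ∫ ω, max (Y' ω - v) 0 ∂P :=
      integral_congr_ae (by filter_upwards [hYY'] with ω hω; rw [hω])
    have hdiff := g_diff P Y' hY'm hY'int u v huv
    have hdiff2 : (∫ ω, max (Y' ω - u) 0 ∂P) - ∫ ω, max (Y' ω - v) 0 ∂P
        = ∫ s in Set.Ioc u v, (1 - F s) := by
      rw [hdiff]
      exact setIntegral_congr_fun measurableSet_Ioc fun s _ => hcompl s
    have hFint : IntegrableOn F (Set.Ioc u v) volume :=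
      (hFcont.intervalIntegrable u v).1
    have hIoc : (volume (Set.Ioc u v)).toReal = v - u := by
      rw [Real.volume_Ioc, ENNReal.toReal_ofReal (by linarith)]
    have e1 : ∫ s in Set.Ioc u v, (1 - F s)
        = (v - u) - ∫ s in Set.Ioc u v, F s := by
      rw [integral_sub (integrableOn_const (C := (1:ℝ)) measure_Ioc_lt_top.ne) hFint,
        MeasureTheory.setIntegral_const, measureReal_def, hIoc, smul_eq_mul, mul_one]
    have e2 : ∫ s in u..v, (F s - α)
        = (∫ s in Set.Ioc u v, F s) - (v - u) * α := by
      rw [intervalIntegral.integral_of_le huv,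
        integral_sub hFint (integrableOn_const measure_Ioc_lt_top.ne),
        MeasureTheory.setIntegral_const, measureReal_def, hIoc, smul_eq_mul]
    rw [hdef u, hdef v, hgu, hgv, e2]
    have hsub : (∫ ω, max (Y' ω - v) 0 ∂P)
        = (∫ ω, max (Y' ω - u) 0 ∂P) - ((v - u) - ∫ s in Set.Ioc u v, F s) := by
      rw [← e1]; linarith [hdiff2]
    rw [hsub]
    field_simp
    ring
  intro t
  rcases le_total q t with hqt | htq
  · -- case q ≤ t
    have hk := key q t hqt
    have hbound : ∀ s ∈ Set.Icc q t, F s - α ≤ B * (s - q) := by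
      intro s hs
      have h1 := hLip s q
      rw [hq, abs_of_nonneg (by linarith [hs.1] : (0:ℝ) ≤ s - q)] at h1
      calc F s - α ≤ |F s - α| := le_abs_self _
        _ ≤ B * (s - q) := h1
    have hnn : 0 ≤ ∫ s in q..t, (F s - α) := by
      apply intervalIntegral.integral_nonneg hqt
      intro s hs
      have : F q ≤ F s := hFmono hs.1
      rw [hq] at this
      linarith
    have hub : (∫ s in q..t, (F s - α)) ≤ B / 2 * (t - q) ^ 2 := by
      have hmono := intervalIntegral.integral_mono_on hqt
        ((hFcont.sub continuous_const).intervalIntegrable (μ := volume) q t)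
        ((continuous_const.mul (continuous_id.sub continuous_const)).intervalIntegrable (μ := volume) q t)
        hbound
      have hcalc : (∫ s in q..t, B * (s - q)) = B / 2 * (t - q) ^ 2 := by
        rw [intervalIntegral.integral_const_mul]
        rw [intervalIntegral.integral_sub intervalIntegral.intervalIntegrable_id
          (intervalIntegrable_const)]
        rw [integral_id, intervalIntegral.integral_const, smul_eq_mul]
        ring
      calc (∫ s in q..t, (F s - α)) ≤ ∫ s in q..t, B * (s - q) := hmono
        _ = B / 2 * (t - q) ^ 2 := hcalc
    constructor
    · rw [hk]
      positivity
    · rw [hk]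
      have h1 : (1 - α)⁻¹ * (∫ s in q..t, (F s - α))
          ≤ (1 - α)⁻¹ * (B / 2 * (t - q) ^ 2) :=
        mul_le_mul_of_nonneg_left hub (by positivity)
      calc (1 - α)⁻¹ * (∫ s in q..t, (F s - α))
          ≤ (1 - α)⁻¹ * (B / 2 * (t - q) ^ 2) := h1
        _ = B / (2 * (1 - α)) * (t - q) ^ 2 := by
            rw [div_eq_mul_inv, div_eq_mul_inv, mul_inv]; ring
  · -- case t ≤ q
    have hk := key t q htq
    have hk' : h t - h q = (1 - α)⁻¹ * ∫ s in t..q, (α - F s) := by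
      have : (∫ s in t..q, (α - F s)) = -∫ s in t..q, (F s - α) := by
        rw [← intervalIntegral.integral_neg]
        congr 1; ext s; ring
      rw [this]; linarith [hk]
    have hbound : ∀ s ∈ Set.Icc t q, α - F s ≤ B * (q - s) := by
      intro s hs
      have h1 := hLip q s
      rw [hq, abs_of_nonneg (by linarith [hs.2] : (0:ℝ) ≤ q - s)] at h1
      calc α - F s ≤ |α - F s| := le_abs_self _
        _ ≤ B * (q - s) := h1
    have hnn : 0 ≤ ∫ s in t..q, (α - F s) := by
      apply intervalIntegral.integral_nonneg htq
      intro s hs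
      have : F s ≤ F q := hFmono hs.2
      rw [hq] at this
      linarith
    have hub : (∫ s in t..q, (α - F s)) ≤ B / 2 * (t - q) ^ 2 := by
      have hmono := intervalIntegral.integral_mono_on htq
        ((continuous_const.sub hFcont).intervalIntegrable (μ := volume) t q)
        ((continuous_const.mul (continuous_const.sub continuous_id)).intervalIntegrable (μ := volume) t q)
        hbound
      have hcalc : (∫ s in t..q, B * (q - s)) = B / 2 * (t - q) ^ 2 := by
        rw [intervalIntegral.integral_const_mul]
        rw [intervalIntegral.integral_sub intervalIntegrable_const
          intervalIntegral.intervalIntegrable_id]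
        rw [integral_id, intervalIntegral.integral_const, smul_eq_mul]
        ring
      calc (∫ s in t..q, (α - F s)) ≤ ∫ s in t..q, B * (q - s) := hmono
        _ = B / 2 * (t - q) ^ 2 := hcalc
    constructor
    · rw [hk']
      positivity
    · rw [hk']
      have h1 : (1 - α)⁻¹ * (∫ s in t..q, (α - F s))
          ≤ (1 - α)⁻¹ * (B / 2 * (t - q) ^ 2) :=
        mul_le_mul_of_nonneg_left hub (by positivity)
      calc (1 - α)⁻¹ * (∫ s in t..q, (α - F s))
          ≤ (1 - α)⁻¹ * (B / 2 * (t - q) ^ 2) := h1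
        _ = B / (2 * (1 - α)) * (t - q) ^ 2 := by
            rw [div_eq_mul_inv, div_eq_mul_inv, mul_inv]; ring
end

section
/- Suppose the cumulative distribution function F(s) := P(Y ≤ s) is Lipschitz continuous with constant B ≥ 0 and that q ∈ ℝ satisfies F(q) = 1-α. Then for every t ∈ ℝ, 0 ≤ g_α(q) - g_α(t) ≤ (B / (2(1-α)))·(t - q)². (This second-order dependence of the lower CVaR objective on the quantile argument produces the (q̂ - q*)² terms in the lower-bound version of Theorem 4.2 stated in Appendix B.) -/
open MeasureTheory

lemma cvar_aux_pointwise (y a b : ℝ) (hab : a ≤ b) :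
    min (y - a) 0 - min (y - b) 0
      = ∫ s in Set.Ioc a b, Set.indicator (Set.Ici y) (fun _ => (1:ℝ)) s := by
  rw [MeasureTheory.setIntegral_indicator measurableSet_Ici, MeasureTheory.setIntegral_const,
    smul_eq_mul, mul_one]
  rcases le_or_gt y a with h | h
  · have hset : Set.Ioc a b ∩ Set.Ici y = Set.Ioc a b := by
      ext s; simp only [Set.mem_inter_iff, Set.mem_Ioc, Set.mem_Ici]
      constructor
      · exact fun hs => hs.1
      · exact fun hs => ⟨hs, by linarith [hs.1]⟩
    rw [hset, measureReal_def, Real.volume_Ioc, ENNReal.toReal_ofReal (by linarith)]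
    rw [min_eq_left (by linarith), min_eq_left (by linarith)]; ring
  · have hset : Set.Ioc a b ∩ Set.Ici y = Set.Icc y b := by
      ext s; simp only [Set.mem_inter_iff, Set.mem_Ioc, Set.mem_Ici, Set.mem_Icc]
      constructor
      · exact fun hs => ⟨hs.2, hs.1.2⟩
      · exact fun hs => ⟨⟨by linarith [hs.1], hs.2⟩, hs.1⟩
    rw [hset, measureReal_def, Real.volume_Icc]
    rcases le_or_gt y b with h2 | h2
    · rw [ENNReal.toReal_ofReal (by linarith)]
      rw [min_eq_right (by linarith), min_eq_left (by linarith)]; ring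
    · rw [ENNReal.ofReal_eq_zero.mpr (by linarith), ENNReal.toReal_zero]
      rw [min_eq_right (by linarith), min_eq_right (by linarith)]; ring

lemma cvar_aux_swap {Ω : Type*} [MeasurableSpace Ω] (P : Measure Ω) [IsProbabilityMeasure P]
    (Y : Ω → ℝ) (hYm : Measurable Y) (a b : ℝ) (hab : a ≤ b) :
    ∫ ω, (min (Y ω - a) 0 - min (Y ω - b) 0) ∂P
      = ∫ s in Set.Ioc a b, (P {ω | Y ω ≤ s}).toReal := by
  have h1 : ∀ ω, min (Y ω - a) 0 - min (Y ω - b) 0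
      = ∫ s in Set.Ioc a b, Set.indicator (Set.Ici (Y ω)) (fun _ => (1:ℝ)) s :=
    fun ω => cvar_aux_pointwise _ _ _ hab
  simp_rw [h1]
  haveI : IsFiniteMeasure ((volume : Measure ℝ).restrict (Set.Ioc a b)) :=
    ⟨by simp [measure_Ioc_lt_top]⟩
  rw [MeasureTheory.integral_integral_swap]
  · refine setIntegral_congr_fun measurableSet_Ioc (fun s _ => ?_)
    have h2 : (fun ω => Set.indicator (Set.Ici (Y ω)) (fun _ => (1:ℝ)) s)
        = Set.indicator {ω | Y ω ≤ s} (fun _ => (1:ℝ)) := by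
      funext ω
      simp only [Set.indicator_apply, Set.mem_Ici, Set.mem_setOf_eq]
    rw [h2]
    simpa [measureReal_def] using MeasureTheory.integral_indicator_const (μ := P) (1:ℝ)
      (measurableSet_le hYm measurable_const)
  · have hS : MeasurableSet {p : Ω × ℝ | Y p.1 ≤ p.2} :=
      measurableSet_le (hYm.comp measurable_fst) measurable_snd
    have h3 : (Function.uncurry fun ω s => Set.indicator (Set.Ici (Y ω)) (fun _ => (1:ℝ)) s)
        = Set.indicator {p : Ω × ℝ | Y p.1 ≤ p.2} (fun _ => (1:ℝ)) := by
      funext p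
      simp only [Function.uncurry, Set.indicator_apply, Set.mem_Ici, Set.mem_setOf_eq]
    rw [h3]
    exact (integrable_const (1:ℝ)).indicator hS

/-- Second-order dependence of the lower CVaR objective on the quantile argument:
if the cdf is `B`-Lipschitz and `F q = 1 - α`, then
`0 ≤ g_α(q) - g_α(t) ≤ (B / (2(1-α))) (t - q)²`. -/
theorem lower_cvar_objective_second_order
    {Ω : Type*} [MeasurableSpace Ω] (P : Measure Ω) [IsProbabilityMeasure P]
    (Y : Ω → ℝ) (hY : Integrable Y P)
    (α : ℝ) (hα : α ∈ Set.Ioo (0 : ℝ) 1)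
    (g : ℝ → ℝ)
    (gdef : ∀ t : ℝ, g t = t + (1 - α)⁻¹ * ∫ ω, min (Y ω - t) 0 ∂P)
    (F : ℝ → ℝ) (hF : ∀ s : ℝ, F s = (P {ω | Y ω ≤ s}).toReal)
    (B : ℝ) (hB : 0 ≤ B)
    (hLip : ∀ s t : ℝ, |F s - F t| ≤ B * |s - t|)
    (q : ℝ) (hq : F q = 1 - α) :
    ∀ t : ℝ, 0 ≤ g q - g t ∧ g q - g t ≤ B / (2 * (1 - α)) * (t - q) ^ 2 := by
  intro t
  obtain ⟨hα0, hα1⟩ := hα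
  have hαpos : (0:ℝ) < 1 - α := by linarith
  have hαne : (1:ℝ) - α ≠ 0 := ne_of_gt hαpos
  -- measurable version of Y
  have hYae : AEMeasurable Y P := hY.aemeasurable
  set Y' : Ω → ℝ := hYae.mk Y with hY'def
  have hY'm : Measurable Y' := hYae.measurable_mk
  have hYY' : Y =ᵐ[P] Y' := hYae.ae_eq_mk
  have hY' : Integrable Y' P := hY.congr hYY'
  have hFeq : ∀ s : ℝ, P {ω | Y ω ≤ s} = P {ω | Y' ω ≤ s} := by
    intro s
    apply measure_congr
    filter_upwards [hYY'] with ω hω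
    change (Y ω ≤ s) = (Y' ω ≤ s)
    rw [hω]
  have hmin : ∀ c : ℝ, Integrable (fun ω => min (Y' ω - c) 0) P := by
    intro c
    have h1 : (fun ω => min (Y' ω - c) 0) = fun ω => (Y' ω - c) - max (Y' ω - c) 0 := by
      funext ω; rcases le_total (Y' ω - c) 0 with h | h
      · rw [min_eq_left h, max_eq_right h]; ring
      · rw [min_eq_right h, max_eq_left h]; ring
    rw [h1]
    exact (hY'.sub (integrable_const c)).sub (hY'.sub (integrable_const c)).pos_part
  have hIeq : ∀ c : ℝ, (∫ ω, min (Y ω - c) 0 ∂P) = ∫ ω, min (Y' ω - c) 0 ∂P := by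
    intro c
    apply integral_congr_ae
    filter_upwards [hYY'] with ω hω
    rw [hω]
  -- continuity and monotonicity of F
  have hFcont : Continuous F := by
    have : LipschitzWith (Real.toNNReal B) F := by
      apply LipschitzWith.of_dist_le_mul
      intro x y
      rw [Real.dist_eq, Real.dist_eq, Real.coe_toNNReal B hB]
      exact hLip x y
    exact this.continuous
  have hFmono : Monotone F := by
    intro x y hxy
    rw [hF x, hF y]
    exact ENNReal.toReal_mono (measure_ne_top P _)
      (measure_mono (fun ω hω => le_trans hω hxy))
  -- the key difference formula
  have hdiff : ∀ a b : ℝ, a ≤ b →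
      g a - g b = (1 - α)⁻¹ * ∫ s in a..b, (F s - (1 - α)) := by
    intro a b hab
    have hswap := cvar_aux_swap P Y' hY'm a b hab
    have hsub : ∫ ω, (min (Y' ω - a) 0 - min (Y' ω - b) 0) ∂P
        = (∫ ω, min (Y' ω - a) 0 ∂P) - ∫ ω, min (Y' ω - b) 0 ∂P :=
      integral_sub (hmin a) (hmin b)
    have hsetint : ∫ s in Set.Ioc a b, (P {ω | Y' ω ≤ s}).toReal = ∫ s in a..b, F s := by
      rw [intervalIntegral.integral_of_le hab]
      refine setIntegral_congr_fun measurableSet_Ioc (fun s _ => ?_)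
      rw [hF s, hFeq s]
    have hkey : (∫ ω, min (Y' ω - a) 0 ∂P) - (∫ ω, min (Y' ω - b) 0 ∂P)
        = ∫ s in a..b, F s := by
      rw [← hsub, hswap, hsetint]
    rw [gdef a, gdef b, hIeq a, hIeq b,
      intervalIntegral.integral_sub (hFcont.intervalIntegrable a b) intervalIntegrable_const,
      intervalIntegral.integral_const]
    rw [mul_sub, ← hkey]
    field_simp
    ring
  -- value of the quadratic integral
  have hquad : ∀ a b : ℝ, (∫ s in a..b, B * (s - a)) = B * (b - a) ^ 2 / 2 := by
    intro a b
    rw [intervalIntegral.integral_const_mul]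
    have h1 : (∫ s in a..b, (s - a)) = (b ^ 2 - a ^ 2) / 2 - (b - a) * a := by
      rw [intervalIntegral.integral_sub intervalIntegral.intervalIntegrable_id
        intervalIntegrable_const, integral_id, intervalIntegral.integral_const, smul_eq_mul]
    rw [h1]; ring
  rcases le_total q t with h | h
  · rw [hdiff q t h]
    have hJ0 : 0 ≤ ∫ s in q..t, (F s - (1 - α)) := by
      apply intervalIntegral.integral_nonneg h
      intro s hs
      rw [← hq]
      exact sub_nonneg.mpr (hFmono hs.1)
    have hJle : (∫ s in q..t, (F s - (1 - α))) ≤ ∫ s in q..t, B * (s - q) := by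
      apply intervalIntegral.integral_mono_on h
        ((hFcont.sub continuous_const).intervalIntegrable q t)
        ((continuous_const.mul (continuous_id.sub continuous_const)).intervalIntegrable q t)
      intro s hs
      calc F s - (1 - α) = F s - F q := by rw [hq]
        _ ≤ |F s - F q| := le_abs_self _
        _ ≤ B * |s - q| := hLip s q
        _ = B * (s - q) := by rw [abs_of_nonneg (by linarith [hs.1])]
    constructor
    · exact mul_nonneg (inv_nonneg.mpr hαpos.le) hJ0
    · calc (1 - α)⁻¹ * ∫ s in q..t, (F s - (1 - α))
          ≤ (1 - α)⁻¹ * (B * (t - q) ^ 2 / 2) :=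
            mul_le_mul_of_nonneg_left (hJle.trans_eq (hquad q t)) (inv_nonneg.mpr hαpos.le)
        _ = B / (2 * (1 - α)) * (t - q) ^ 2 := by field_simp
  · have hgd : g q - g t = (1 - α)⁻¹ * ∫ s in t..q, ((1 - α) - F s) := by
      have h1 := hdiff t q h
      have h2 : (∫ s in t..q, ((1 - α) - F s)) = - ∫ s in t..q, (F s - (1 - α)) := by
        rw [← intervalIntegral.integral_neg]
        congr 1; funext s; ring
      rw [h2, mul_neg, ← h1]; ring
    rw [hgd]
    have hJ0 : 0 ≤ ∫ s in t..q, ((1 - α) - F s) := by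
      apply intervalIntegral.integral_nonneg h
      intro s hs
      rw [← hq]
      exact sub_nonneg.mpr (hFmono hs.2)
    have hJle : (∫ s in t..q, ((1 - α) - F s)) ≤ ∫ s in t..q, B * (q - s) := by
      apply intervalIntegral.integral_mono_on h
        ((continuous_const.sub hFcont).intervalIntegrable t q)
        ((continuous_const.mul (continuous_const.sub continuous_id)).intervalIntegrable t q)
      intro s hs
      calc (1 - α) - F s = F q - F s := by rw [hq]
        _ ≤ |F q - F s| := le_abs_self _
        _ ≤ B * |q - s| := hLip q s
        _ = B * (q - s) := by rw [abs_of_nonneg (by linarith [hs.2])]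
    have hquad' : (∫ s in t..q, B * (q - s)) = B * (t - q) ^ 2 / 2 := by
      rw [intervalIntegral.integral_const_mul]
      have h1 : (∫ s in t..q, (q - s)) = (q - t) * q - (q ^ 2 - t ^ 2) / 2 := by
        rw [intervalIntegral.integral_sub intervalIntegrable_const
          intervalIntegral.intervalIntegrable_id, integral_id,
          intervalIntegral.integral_const, smul_eq_mul]
      rw [h1]; ring
    constructor
    · exact mul_nonneg (inv_nonneg.mpr hαpos.le) hJ0
    · calc (1 - α)⁻¹ * ∫ s in t..q, ((1 - α) - F s)
          ≤ (1 - α)⁻¹ * (B * (t - q) ^ 2 / 2) :=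
            mul_le_mul_of_nonneg_left (hJle.trans_eq hquad') (inv_nonneg.mpr hαpos.le)
        _ = B / (2 * (1 - α)) * (t - q) ^ 2 := by field_simp
end

section
/- For every q ∈ ℝ, E[W·Y] ≤ Λ⁻¹·E[Y] + (1-Λ⁻¹)·(q + (Λ+1)·E[max(Y - q, 0)]) = E[R₊(Y, q)]. In particular, E[R₊(Y, q)] evaluated at ANY putative quantile q is a valid upper bound on every reweighted mean E[W·Y] allowed by the marginal sensitivity model: a wrong quantile moves the bound in a conservative but valid direction, as claimed in Sections 2.2 and 3. -/
open MeasureTheory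

/-- Validity of the MSM upper bound functional: for any MSM-feasible weight `W`
(`Λ⁻¹ ≤ W ≤ Λ` a.s., `E[W] = 1`) and any putative quantile `q`,
`E[W·Y] ≤ Λ⁻¹·E[Y] + (1-Λ⁻¹)·(q + (Λ+1)·E[max(Y - q, 0)]) = E[R₊(Y, q)]`. -/
theorem msm_upper_bound_valid
    {Ω : Type*} [MeasurableSpace Ω] (P : Measure Ω) [IsProbabilityMeasure P]
    (Y : Ω → ℝ) (hY : Integrable Y P)
    (Λ : ℝ) (hΛ : 1 ≤ Λ)
    (W : Ω → ℝ) (hW : Measurable W)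
    (hWbd : ∀ᵐ ω ∂P, Λ⁻¹ ≤ W ω ∧ W ω ≤ Λ)
    (hWmean : ∫ ω, W ω ∂P = 1) :
    ∀ q : ℝ,
      ∫ ω, W ω * Y ω ∂P ≤
        Λ⁻¹ * ∫ ω, Y ω ∂P +
          (1 - Λ⁻¹) * (q + (Λ + 1) * ∫ ω, max (Y ω - q) 0 ∂P) := by
  intro q
  have hΛ0 : (0:ℝ) < Λ := lt_of_lt_of_le one_pos hΛ
  have hΛi : Λ⁻¹ ≤ Λ := le_trans (inv_le_one_of_one_le₀ hΛ) hΛ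
  -- integrability facts
  have hWint : Integrable W P := by
    refine (integrable_const Λ).mono' hW.aestronglyMeasurable ?_
    filter_upwards [hWbd] with ω ⟨h1, h2⟩
    rw [Real.norm_eq_abs, abs_of_nonneg (le_trans (inv_nonneg.mpr hΛ0.le) h1)]
    exact h2
  have hWY : Integrable (fun ω => W ω * Y ω) P := by
    refine (hY.abs.const_mul Λ).mono' (hW.aestronglyMeasurable.mul hY.aestronglyMeasurable) ?_
    filter_upwards [hWbd] with ω ⟨h1, h2⟩
    rw [Real.norm_eq_abs, abs_mul]
    have : |W ω| ≤ Λ := by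
      rw [abs_of_nonneg (le_trans (inv_nonneg.mpr hΛ0.le) h1)]; exact h2
    exact mul_le_mul_of_nonneg_right this (abs_nonneg _) |>.trans (le_of_eq rfl)
  have hM : Integrable (fun ω => max (Y ω - q) 0) P := (hY.sub (integrable_const q)).pos_part
  -- pointwise inequality
  have hpt : ∀ᵐ ω ∂P, W ω * Y ω ≤
      Λ⁻¹ * Y ω + (W ω - Λ⁻¹) * q + (Λ - Λ⁻¹) * max (Y ω - q) 0 := by
    filter_upwards [hWbd] with ω ⟨h1, h2⟩
    rcases le_or_gt (Y ω - q) 0 with h | h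
    · rw [max_eq_right h]
      nlinarith [mul_nonneg (sub_nonneg.mpr h1) (neg_nonneg.mpr h)]
    · rw [max_eq_left h.le]
      nlinarith [mul_le_mul_of_nonneg_right (sub_le_sub_right h2 Λ⁻¹) h.le]
  have hRint : Integrable
      (fun ω => Λ⁻¹ * Y ω + (W ω - Λ⁻¹) * q + (Λ - Λ⁻¹) * max (Y ω - q) 0) P :=
    (((hY.const_mul _).add ((hWint.sub (integrable_const _)).mul_const q)).add
      (hM.const_mul _))
  have hle := integral_mono_ae hWY hRint hpt
  have i1 : Integrable (fun ω => Λ⁻¹ * Y ω) P := hY.const_mul _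
  have i2 : Integrable (fun ω => (W ω - Λ⁻¹) * q) P := (hWint.sub (integrable_const _)).mul_const q
  have i3 : Integrable (fun ω => (Λ - Λ⁻¹) * max (Y ω - q) 0) P := hM.const_mul _
  have hcalc : ∫ ω, (Λ⁻¹ * Y ω + (W ω - Λ⁻¹) * q + (Λ - Λ⁻¹) * max (Y ω - q) 0) ∂P
      = Λ⁻¹ * ∫ ω, Y ω ∂P + (1 - Λ⁻¹) * q + (Λ - Λ⁻¹) * ∫ ω, max (Y ω - q) 0 ∂P := by
    have i12 : Integrable (fun ω => Λ⁻¹ * Y ω + (W ω - Λ⁻¹) * q) P := i1.add i2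
    rw [integral_add i12 i3, integral_add i1 i2,
      integral_const_mul, integral_const_mul, integral_mul_const,
      integral_sub hWint (integrable_const _), hWmean, integral_const]
    simp
  rw [hcalc] at hle
  have hΛne : Λ ≠ 0 := ne_of_gt hΛ0
  calc ∫ ω, W ω * Y ω ∂P ≤ _ := hle
    _ = Λ⁻¹ * ∫ ω, Y ω ∂P + (1 - Λ⁻¹) * (q + (Λ + 1) * ∫ ω, max (Y ω - q) 0 ∂P) := by
        field_simp
        ring
end

section
/- Suppose q ∈ ℝ satisfies P(Y > q) = 1/(Λ+1) (equivalently P(Y ≤ q) = α). Then the weight W★ := Λ⁻¹ + (Λ - Λ⁻¹)·1{Y > q} satisfies Λ⁻¹ ≤ W★ ≤ Λ, E[W★] = 1, and E[W★·Y] = Λ⁻¹·E[Y] + (1-Λ⁻¹)·(q + (Λ+1)·E[max(Y - q, 0)]) = E[R₊(Y, q)]. Combined with the validity inequality, this shows E[R₊(Y, q)] is the sharp, attained supremum of E[W·Y] over all MSM-feasible weights, which is the conditional content of Result 2.3 (the sharp upper bound ρ₊* = Λ⁻¹μ* + (1-Λ⁻¹)CVaR₊). -/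
open MeasureTheory

/-- Sharpness of the MSM upper bound: if `P(Y > q) = 1/(Λ+1)`, the weight
`W★ = Λ⁻¹ + (Λ - Λ⁻¹)·1{Y > q}` is MSM-feasible and attains
`E[W★·Y] = Λ⁻¹·E[Y] + (1-Λ⁻¹)·(q + (Λ+1)·E[max(Y - q, 0)]) = E[R₊(Y, q)]`. -/
theorem msm_upper_bound_sharp
    {Ω : Type*} [MeasurableSpace Ω] (P : Measure Ω) [IsProbabilityMeasure P]
    (Y : Ω → ℝ) (hY : Integrable Y P) (hYm : Measurable Y)
    (Λ : ℝ) (hΛ : 1 ≤ Λ)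
    (q : ℝ) (hq : (P {ω | q < Y ω}).toReal = 1 / (Λ + 1))
    (Wstar : Ω → ℝ)
    (hWstar : ∀ ω, Wstar ω = Λ⁻¹ + (Λ - Λ⁻¹) * (if q < Y ω then (1 : ℝ) else 0)) :
    (∀ ω, Λ⁻¹ ≤ Wstar ω ∧ Wstar ω ≤ Λ) ∧
    (∫ ω, Wstar ω ∂P = 1) ∧
    (∫ ω, Wstar ω * Y ω ∂P =
      Λ⁻¹ * ∫ ω, Y ω ∂P +
        (1 - Λ⁻¹) * (q + (Λ + 1) * ∫ ω, max (Y ω - q) 0 ∂P)) := by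
  have hΛ0 : (0:ℝ) < Λ := lt_of_lt_of_le one_pos hΛ
  have hΛΛ : Λ * Λ⁻¹ = 1 := mul_inv_cancel₀ hΛ0.ne'
  have hS : MeasurableSet {ω | q < Y ω} := hYm measurableSet_Ioi
  -- indicator rewritings
  have hind1 : (fun ω => if q < Y ω then (1:ℝ) else 0)
      = Set.indicator {ω | q < Y ω} (fun _ => (1:ℝ)) := by
    funext ω; simp [Set.indicator_apply, Set.mem_setOf_eq]
  have hindY : (fun ω => if q < Y ω then Y ω else 0)
      = Set.indicator {ω | q < Y ω} Y := by
    funext ω; simp [Set.indicator_apply, Set.mem_setOf_eq]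
  have hintindY : Integrable (Set.indicator {ω | q < Y ω} Y) P := hY.indicator hS
  refine ⟨?_, ?_, ?_⟩
  · intro ω
    rw [hWstar ω]
    have hinv1 : Λ⁻¹ ≤ 1 := by
      rw [← hΛΛ]; nlinarith [inv_pos.mpr hΛ0]
    split <;> constructor <;> nlinarith [inv_pos.mpr hΛ0]
  · have : ∫ ω, Wstar ω ∂P
        = ∫ ω, (Λ⁻¹ + (Λ - Λ⁻¹) * Set.indicator {ω | q < Y ω} (fun _ => (1:ℝ)) ω) ∂P := by
      refine integral_congr_ae (Filter.Eventually.of_forall fun ω => ?_)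
      rw [hWstar ω, ← hind1]
    rw [this, integral_add (integrable_const _)
        (((integrable_indicator_iff hS).2 (integrable_const _).integrableOn).const_mul _),
      integral_const, integral_const_mul, integral_indicator hS, setIntegral_const]
    simp only [measureReal_def, measure_univ, ENNReal.toReal_one, smul_eq_mul, hq]
    field_simp
    ring
  · have hWY : ∫ ω, Wstar ω * Y ω ∂P
        = ∫ ω, (Λ⁻¹ * Y ω + (Λ - Λ⁻¹) * Set.indicator {ω | q < Y ω} Y ω) ∂P := by
      refine integral_congr_ae (Filter.Eventually.of_forall fun ω => ?_)
      show Wstar ω * Y ω = _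
      rw [hWstar ω]
      by_cases h : q < Y ω <;>
        simp [Set.indicator_apply, Set.mem_setOf_eq, h] <;> ring
    have hmax : ∫ ω, max (Y ω - q) 0 ∂P
        = (∫ ω, Set.indicator {ω | q < Y ω} Y ω ∂P) - q * (1/(Λ+1)) := by
      have h1 : (fun ω => max (Y ω - q) 0)
          = fun ω => Set.indicator {ω | q < Y ω} Y ω
              - Set.indicator {ω | q < Y ω} (fun _ => q) ω := by
        funext ω
        by_cases h : q < Y ω <;>
          simp [Set.indicator_apply, Set.mem_setOf_eq, h, max_eq_left, sub_nonpos]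
        · exact le_of_lt h
        · linarith
      have hc : ∫ ω, Set.indicator {ω | q < Y ω} (fun _ => q) ω ∂P = q * (1/(Λ+1)) := by
        rw [integral_indicator hS, setIntegral_const, measureReal_def, hq, smul_eq_mul, mul_comm]
      rw [h1, integral_sub hintindY
          ((integrable_indicator_iff hS).2 (integrable_const _).integrableOn), hc]
    rw [hWY, integral_add (hY.const_mul _) (hintindY.const_mul _),
      integral_const_mul, integral_const_mul, hmax]
    field_simp
    ring
end

section
/- For every q ∈ ℝ, E[W·Y] ≥ Λ⁻¹·E[Y] + (1-Λ⁻¹)·(q + (Λ+1)·E[min(Y - q, 0)]) = E[R₋(Y, q)]. In particular, E[R₋(Y, q)] evaluated at ANY putative quantile q is a valid lower bound on every reweighted mean E[W·Y] allowed by the marginal sensitivity model, the lower-bound analogue from Appendix B of the validity claim of Sections 2.2 and 3. -/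
open MeasureTheory

/-- Validity of the MSM lower bound functional: for any MSM-feasible weight `W`
(`Λ⁻¹ ≤ W ≤ Λ` a.s., `E[W] = 1`) and any putative quantile `q`,
`E[W·Y] ≥ Λ⁻¹·E[Y] + (1-Λ⁻¹)·(q + (Λ+1)·E[min(Y - q, 0)]) = E[R₋(Y, q)]`. -/
theorem msm_lower_bound_valid
    {Ω : Type*} [MeasurableSpace Ω] (P : Measure Ω) [IsProbabilityMeasure P]
    (Y : Ω → ℝ) (hY : Integrable Y P)
    (Λ : ℝ) (hΛ : 1 ≤ Λ)
    (W : Ω → ℝ) (hW : Measurable W)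
    (hWbd : ∀ᵐ ω ∂P, Λ⁻¹ ≤ W ω ∧ W ω ≤ Λ)
    (hWmean : ∫ ω, W ω ∂P = 1) :
    ∀ q : ℝ,
      Λ⁻¹ * ∫ ω, Y ω ∂P +
          (1 - Λ⁻¹) * (q + (Λ + 1) * ∫ ω, min (Y ω - q) 0 ∂P) ≤
        ∫ ω, W ω * Y ω ∂P := by
  intro q
  have hΛ0 : (0:ℝ) < Λ := lt_of_lt_of_le one_pos hΛ
  have hΛi : (0:ℝ) < Λ⁻¹ := inv_pos.mpr hΛ0
  have hnorm : ∀ᵐ ω ∂P, ‖W ω‖ ≤ Λ := by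
    filter_upwards [hWbd] with ω ⟨h1, h2⟩
    rw [Real.norm_eq_abs, abs_le]
    exact ⟨by linarith, h2⟩
  have hmin : Integrable (fun ω => min (Y ω - q) 0) P :=
    (hY.sub (integrable_const q)).inf (integrable_const 0)
  have hWY : Integrable (fun ω => W ω * Y ω) P :=
    hY.bdd_mul (c := Λ) hW.aestronglyMeasurable hnorm
  have hWI : Integrable W P :=
    (integrable_const Λ).mono' hW.aestronglyMeasurable hnorm
  set g : Ω → ℝ := fun ω =>
    Λ⁻¹ * Y ω + q * W ω - q * Λ⁻¹ + (Λ - Λ⁻¹) * min (Y ω - q) 0 with hg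
  have h1 : Integrable (fun ω => Λ⁻¹ * Y ω + q * W ω) P :=
    (hY.const_mul _).add (hWI.const_mul _)
  have h2 : Integrable (fun ω => Λ⁻¹ * Y ω + q * W ω - q * Λ⁻¹) P :=
    h1.sub (integrable_const _)
  have h3 : Integrable (fun ω => (Λ - Λ⁻¹) * min (Y ω - q) 0) P := hmin.const_mul _
  have hgI : Integrable g P := h2.add h3
  have hle : ∀ᵐ ω ∂P, g ω ≤ W ω * Y ω := by
    filter_upwards [hWbd] with ω ⟨h1, h2⟩
    simp only [hg]
    rcases le_or_gt (Y ω - q) 0 with h | h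
    · rw [min_eq_left h]; nlinarith
    · rw [min_eq_right h.le]; nlinarith
  have key := integral_mono_ae hgI hWY hle
  have hgint : ∫ ω, g ω ∂P =
      Λ⁻¹ * ∫ ω, Y ω ∂P + q * 1 - q * Λ⁻¹ + (Λ - Λ⁻¹) * ∫ ω, min (Y ω - q) 0 ∂P := by
    simp only [hg]
    rw [integral_add h2 h3, integral_sub h1 (integrable_const _),
      integral_add (hY.const_mul _) (hWI.const_mul _),
      MeasureTheory.integral_const_mul, MeasureTheory.integral_const_mul, MeasureTheory.integral_const_mul, hWmean]
    rw [MeasureTheory.integral_const]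
    simp
    rw [MeasureTheory.integral_const_mul]
  rw [hgint] at key
  calc Λ⁻¹ * ∫ ω, Y ω ∂P + (1 - Λ⁻¹) * (q + (Λ + 1) * ∫ ω, min (Y ω - q) 0 ∂P)
      = Λ⁻¹ * ∫ ω, Y ω ∂P + q * 1 - q * Λ⁻¹ + (Λ - Λ⁻¹) * ∫ ω, min (Y ω - q) 0 ∂P := by
        field_simp
        ring
    _ ≤ ∫ ω, W ω * Y ω ∂P := key
end

section
/- Suppose q ∈ ℝ satisfies P(Y < q) = 1/(Λ+1). Then the weight W★ := Λ⁻¹ + (Λ - Λ⁻¹)·1{Y < q} satisfies Λ⁻¹ ≤ W★ ≤ Λ, E[W★] = 1, and E[W★·Y] = Λ⁻¹·E[Y] + (1-Λ⁻¹)·(q + (Λ+1)·E[min(Y - q, 0)]) = E[R₋(Y, q)]. Combined with the lower validity inequality, this shows E[R₋(Y, q)] is the sharp, attained infimum of E[W·Y] over all MSM-feasible weights, the lower-bound content of Result 2.3 for ρ₋* in Appendix B. -/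
open MeasureTheory

/-- Sharpness of the MSM lower bound: if `P(Y < q) = 1/(Λ+1)`, the weight
`W★ = Λ⁻¹ + (Λ - Λ⁻¹)·1{Y < q}` is MSM-feasible and attains
`E[W★·Y] = Λ⁻¹·E[Y] + (1-Λ⁻¹)·(q + (Λ+1)·E[min(Y - q, 0)]) = E[R₋(Y, q)]`. -/
theorem msm_lower_bound_sharp
    {Ω : Type*} [MeasurableSpace Ω] (P : Measure Ω) [IsProbabilityMeasure P]
    (Y : Ω → ℝ) (hY : Integrable Y P) (hYm : Measurable Y)
    (Λ : ℝ) (hΛ : 1 ≤ Λ)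
    (q : ℝ) (hq : (P {ω | Y ω < q}).toReal = 1 / (Λ + 1))
    (Wstar : Ω → ℝ)
    (hWstar : ∀ ω, Wstar ω = Λ⁻¹ + (Λ - Λ⁻¹) * (if Y ω < q then (1 : ℝ) else 0)) :
    (∀ ω, Λ⁻¹ ≤ Wstar ω ∧ Wstar ω ≤ Λ) ∧
    (∫ ω, Wstar ω ∂P = 1) ∧
    (∫ ω, Wstar ω * Y ω ∂P =
      Λ⁻¹ * ∫ ω, Y ω ∂P +
        (1 - Λ⁻¹) * (q + (Λ + 1) * ∫ ω, min (Y ω - q) 0 ∂P)) := by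
  have hΛ0 : (0:ℝ) < Λ := lt_of_lt_of_le one_pos hΛ
  have hΛne : Λ ≠ 0 := ne_of_gt hΛ0
  have hΛ1ne : Λ + 1 ≠ 0 := by positivity
  have hinvle : Λ⁻¹ ≤ Λ := le_trans (inv_le_one_of_one_le₀ hΛ) hΛ
  have hc : (0:ℝ) ≤ Λ - Λ⁻¹ := sub_nonneg.mpr hinvle
  set s : Set Ω := {ω | Y ω < q} with hs_def
  have hs : MeasurableSet s := measurableSet_lt hYm measurable_const
  -- pointwise rewrites
  have hW1 : ∀ ω, Wstar ω = Λ⁻¹ + (Λ - Λ⁻¹) * s.indicator (fun _ => (1:ℝ)) ω := by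
    intro ω; rw [hWstar ω]; by_cases h : Y ω < q <;>
      simp [Set.indicator, hs_def, h]
  have hW2 : ∀ ω, Wstar ω * Y ω = Λ⁻¹ * Y ω + (Λ - Λ⁻¹) * s.indicator Y ω := by
    intro ω; rw [hWstar ω]; by_cases h : Y ω < q <;>
      simp [Set.indicator, hs_def, h] <;> ring
  have hmin : ∀ ω, min (Y ω - q) 0 = s.indicator (fun ω => Y ω - q) ω := by
    intro ω; by_cases h : Y ω < q
    · simp [Set.indicator, hs_def, h, min_eq_left, le_of_lt (sub_neg.mpr h)]
    · simp [Set.indicator, hs_def, h, min_eq_right, sub_nonneg.mpr (le_of_not_gt h)]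
  -- integrability
  have hiY : Integrable (s.indicator Y) P := hY.indicator hs
  have hiYq : Integrable (s.indicator (fun ω => Y ω - q)) P :=
    (hY.sub (integrable_const q)).indicator hs
  refine ⟨?_, ?_, ?_⟩
  · intro ω
    rw [hWstar ω]
    by_cases h : Y ω < q <;> simp [h] <;>
      first | exact hinvle | exact ⟨le_rfl, hinvle⟩ | constructor <;> nlinarith
  · have : ∫ ω, Wstar ω ∂P
        = Λ⁻¹ + (Λ - Λ⁻¹) * ∫ ω, s.indicator (fun _ => (1:ℝ)) ω ∂P := by
      simp_rw [hW1]
      rw [integral_add (integrable_const _)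
        (((integrable_const (1:ℝ)).indicator hs).const_mul _),
        integral_const, integral_const_mul]
      simp
    rw [this, integral_indicator_const _ hs]
    simp only [smul_eq_mul, mul_one]
    rw [measureReal_def, hq]
    field_simp
    ring
  · have hI : ∫ ω, Wstar ω * Y ω ∂P
        = Λ⁻¹ * ∫ ω, Y ω ∂P + (Λ - Λ⁻¹) * ∫ ω, s.indicator Y ω ∂P := by
      simp_rw [hW2]
      rw [integral_add (hY.const_mul _) (hiY.const_mul _),
        integral_const_mul, integral_const_mul]
    have hM : ∫ ω, min (Y ω - q) 0 ∂P
        = (∫ ω, s.indicator Y ω ∂P) - q * (P s).toReal := by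
      simp_rw [hmin]
      rw [integral_indicator hs, integral_indicator hs]
      rw [integral_sub hY.integrableOn (integrableOn_const (measure_lt_top P s).ne)]
      rw [setIntegral_const]
      simp [mul_comm, measureReal_def]
    rw [hI, hM, hq]
    field_simp
    ring
end

section
/- For Λ ≥ 1 define ρ₊(Λ) := Λ⁻¹·E[Y] + (1-Λ⁻¹)·inf_{t ∈ ℝ}(t + (Λ+1)·E[max(Y - t, 0)]) and ρ₋(Λ) := Λ⁻¹·E[Y] + (1-Λ⁻¹)·sup_{t ∈ ℝ}(t + (Λ+1)·E[min(Y - t, 0)]); both are finite, since the infimum is bounded below by E[Y] and the supremum bounded above by E[Y]. Then for all 1 ≤ Λ ≤ Λ′, ρ₊(Λ) ≤ ρ₊(Λ′) and ρ₋(Λ′) ≤ ρ₋(Λ): the sharp MSM bounds widen monotonically as the sensitivity parameter Λ increases, as asserted in Remark 2.2 ('our intervals increase with Λ') and illustrated in Figure 1. -/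
open MeasureTheory

/-- Pointwise monotonicity in `Λ` of the objective for the upper bound. -/
lemma msm_aux_pointwise_plus (E a b t Mt : ℝ) (ha : 1 ≤ a) (hab : a ≤ b)
    (hMt : 0 ≤ Mt) (hE : E ≤ t + Mt) :
    a⁻¹ * E + (1 - a⁻¹) * (t + (a + 1) * Mt) ≤
      b⁻¹ * E + (1 - b⁻¹) * (t + (b + 1) * Mt) := by
  have ha0 : (0:ℝ) < a := by linarith
  have hb0 : (0:ℝ) < b := by linarith
  have hinv : b⁻¹ ≤ a⁻¹ := by
    apply inv_anti₀ ha0 hab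
  have e1 : (1 - a⁻¹) * (t + (a + 1) * Mt) = (1 - a⁻¹) * t + (a - a⁻¹) * Mt := by
    field_simp
    ring
  have e2 : (1 - b⁻¹) * (t + (b + 1) * Mt) = (1 - b⁻¹) * t + (b - b⁻¹) * Mt := by
    field_simp
    ring
  rw [e1, e2]
  have h1 : 0 ≤ (a⁻¹ - b⁻¹) * (t + Mt - E) := mul_nonneg (by linarith) (by linarith)
  have h2 : 0 ≤ (b - a) * Mt := mul_nonneg (by linarith) hMt
  nlinarith [h1, h2]

/-- Pointwise antitonicity in `Λ` of the objective for the lower bound. -/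
lemma msm_aux_pointwise_minus (E a b t mt : ℝ) (ha : 1 ≤ a) (hab : a ≤ b)
    (hmt : mt ≤ 0) (hE : t + mt ≤ E) :
    b⁻¹ * E + (1 - b⁻¹) * (t + (b + 1) * mt) ≤
      a⁻¹ * E + (1 - a⁻¹) * (t + (a + 1) * mt) := by
  have ha0 : (0:ℝ) < a := by linarith
  have hb0 : (0:ℝ) < b := by linarith
  have hinv : b⁻¹ ≤ a⁻¹ := by
    apply inv_anti₀ ha0 hab
  have e1 : (1 - a⁻¹) * (t + (a + 1) * mt) = (1 - a⁻¹) * t + (a - a⁻¹) * mt := by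
    field_simp
    ring
  have e2 : (1 - b⁻¹) * (t + (b + 1) * mt) = (1 - b⁻¹) * t + (b - b⁻¹) * mt := by
    field_simp
    ring
  rw [e1, e2]
  have h1 : 0 ≤ (a⁻¹ - b⁻¹) * (E - t - mt) := mul_nonneg (by linarith) (by linarith)
  have h2 : 0 ≤ (b - a) * (-mt) := mul_nonneg (by linarith) (by linarith)
  nlinarith [h1, h2]

/-- Monotonicity of the sharp MSM bounds in the sensitivity parameter: for
`1 ≤ Λ ≤ Λ'`, `ρ₊(Λ) ≤ ρ₊(Λ')` and `ρ₋(Λ') ≤ ρ₋(Λ)`, where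
`ρ₊(Λ) = Λ⁻¹E[Y] + (1-Λ⁻¹)·inf_t (t + (Λ+1)E[max(Y-t,0)])` and
`ρ₋(Λ) = Λ⁻¹E[Y] + (1-Λ⁻¹)·sup_t (t + (Λ+1)E[min(Y-t,0)])`. -/
theorem msm_sharp_bounds_monotone_in_lambda
    {Ω : Type*} [MeasurableSpace Ω] (P : Measure Ω) [IsProbabilityMeasure P]
    (Y : Ω → ℝ) (hY : Integrable Y P)
    (ρp ρm : ℝ → ℝ)
    (hρp : ∀ Λ : ℝ, ρp Λ =
      Λ⁻¹ * (∫ ω, Y ω ∂P) +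
        (1 - Λ⁻¹) *
          sInf (Set.range fun t : ℝ => t + (Λ + 1) * ∫ ω, max (Y ω - t) 0 ∂P))
    (hρm : ∀ Λ : ℝ, ρm Λ =
      Λ⁻¹ * (∫ ω, Y ω ∂P) +
        (1 - Λ⁻¹) *
          sSup (Set.range fun t : ℝ => t + (Λ + 1) * ∫ ω, min (Y ω - t) 0 ∂P)) :
    ∀ Λ Λ' : ℝ, 1 ≤ Λ → Λ ≤ Λ' → ρp Λ ≤ ρp Λ' ∧ ρm Λ' ≤ ρm Λ := by
  intro Λ Λ' hΛ hΛΛ'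
  have hΛ'1 : (1:ℝ) ≤ Λ' := hΛ.trans hΛΛ'
  set E : ℝ := ∫ ω, Y ω ∂P with hEdef
  set M : ℝ → ℝ := fun t => ∫ ω, max (Y ω - t) 0 ∂P with hMdef
  set m : ℝ → ℝ := fun t => ∫ ω, min (Y ω - t) 0 ∂P with hmdef
  have hint : ∀ t : ℝ, Integrable (fun ω => Y ω - t) P :=
    fun t => hY.sub (integrable_const t)
  have hintM : ∀ t : ℝ, Integrable (fun ω => max (Y ω - t) 0) P :=
    fun t => (hint t).pos_part
  have hintm : ∀ t : ℝ, Integrable (fun ω => min (Y ω - t) 0) P := by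
    intro t
    have h : Integrable (fun ω => -max (-(Y ω - t)) 0) P := ((hint t).neg_part).neg
    have he : (fun ω => -max (-(Y ω - t)) 0) = fun ω => min (Y ω - t) 0 := by
      funext ω
      rcases le_total (Y ω - t) 0 with h'|h'
      · rw [min_eq_left h', max_eq_left (by linarith), neg_neg]
      · rw [min_eq_right h', max_eq_right (by linarith), neg_zero]
    rwa [he] at h
  have hIsub : ∀ t : ℝ, (∫ ω, (Y ω - t) ∂P) = E - t := by
    intro t
    rw [integral_sub hY (integrable_const t), integral_const]
    simp
    rfl
  have hM0 : ∀ t, 0 ≤ M t := fun t => integral_nonneg fun ω => le_max_right _ _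
  have hm0 : ∀ t, m t ≤ 0 := fun t => integral_nonpos fun ω => min_le_right _ _
  have hEM : ∀ t, E ≤ t + M t := by
    intro t
    have h1 : (∫ ω, (Y ω - t) ∂P) ≤ M t :=
      integral_mono (hint t) (hintM t) fun ω => le_max_left _ _
    rw [hIsub t] at h1
    linarith
  have hEm : ∀ t, t + m t ≤ E := by
    intro t
    have h1 : m t ≤ ∫ ω, (Y ω - t) ∂P :=
      integral_mono (hintm t) (hint t) fun ω => min_le_left _ _
    rw [hIsub t] at h1
    linarith
  -- the objective functions
  have keyfact : ∀ c : ℝ, 1 ≤ c → ∀ t : ℝ, E ≤ t + (c + 1) * M t := by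
    intro c hc t
    have : M t ≤ (c + 1) * M t := by nlinarith [hM0 t]
    linarith [hEM t]
  have keyfact' : ∀ c : ℝ, 1 ≤ c → ∀ t : ℝ, t + (c + 1) * m t ≤ E := by
    intro c hc t
    have : (c + 1) * m t ≤ m t := by nlinarith [hm0 t]
    linarith [hEm t]
  -- the image lemma for sInf
  have himg : ∀ c : ℝ, 1 ≤ c →
      c⁻¹ * E + (1 - c⁻¹) * sInf (Set.range fun t : ℝ => t + (c + 1) * M t) =
        sInf (Set.range fun t : ℝ => c⁻¹ * E + (1 - c⁻¹) * (t + (c + 1) * M t)) := by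
    intro c hc
    have hc0 : (0:ℝ) < c := by linarith
    have hcoef : (0:ℝ) ≤ 1 - c⁻¹ := by
      have : c⁻¹ ≤ 1 := inv_le_one_of_one_le₀ hc
      linarith
    have mono : Monotone (fun s : ℝ => c⁻¹ * E + (1 - c⁻¹) * s) := fun x y hxy =>
      add_le_add_right (mul_le_mul_of_nonneg_left hxy hcoef) _
    have cont : ContinuousAt (fun s : ℝ => c⁻¹ * E + (1 - c⁻¹) * s)
        (sInf (Set.range fun t : ℝ => t + (c + 1) * M t)) := by fun_prop
    have hne : (Set.range fun t : ℝ => t + (c + 1) * M t).Nonempty := Set.range_nonempty _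
    have hbdd : BddBelow (Set.range fun t : ℝ => t + (c + 1) * M t) := by
      refine ⟨E, ?_⟩
      rintro x ⟨t, rfl⟩
      exact keyfact c hc t
    rw [Monotone.map_csInf_of_continuousAt cont mono hne hbdd, ← Set.range_comp]
    rfl
  have himg' : ∀ c : ℝ, 1 ≤ c →
      c⁻¹ * E + (1 - c⁻¹) * sSup (Set.range fun t : ℝ => t + (c + 1) * m t) =
        sSup (Set.range fun t : ℝ => c⁻¹ * E + (1 - c⁻¹) * (t + (c + 1) * m t)) := by
    intro c hc
    have hc0 : (0:ℝ) < c := by linarith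
    have hcoef : (0:ℝ) ≤ 1 - c⁻¹ := by
      have : c⁻¹ ≤ 1 := inv_le_one_of_one_le₀ hc
      linarith
    have mono : Monotone (fun s : ℝ => c⁻¹ * E + (1 - c⁻¹) * s) := fun x y hxy =>
      add_le_add_right (mul_le_mul_of_nonneg_left hxy hcoef) _
    have cont : ContinuousAt (fun s : ℝ => c⁻¹ * E + (1 - c⁻¹) * s)
        (sSup (Set.range fun t : ℝ => t + (c + 1) * m t)) := by fun_prop
    have hne : (Set.range fun t : ℝ => t + (c + 1) * m t).Nonempty := Set.range_nonempty _
    have hbdd : BddAbove (Set.range fun t : ℝ => t + (c + 1) * m t) := by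
      refine ⟨E, ?_⟩
      rintro x ⟨t, rfl⟩
      exact keyfact' c hc t
    rw [Monotone.map_csSup_of_continuousAt cont mono hne hbdd, ← Set.range_comp]
    rfl
  constructor
  · -- upper bound is monotone increasing
    rw [hρp Λ, hρp Λ']
    have h1 := himg Λ hΛ
    have h2 := himg Λ' hΛ'1
    rw [← hEdef, ← hMdef] at *
    rw [h1, h2]
    apply le_csInf (Set.range_nonempty _)
    rintro b ⟨t, rfl⟩
    have hbdd : BddBelow (Set.range fun t : ℝ => Λ⁻¹ * E + (1 - Λ⁻¹) * (t + (Λ + 1) * M t)) := by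
      refine ⟨Λ⁻¹ * E + (1 - Λ⁻¹) * E, ?_⟩
      rintro x ⟨s, rfl⟩
      have hcoef : (0:ℝ) ≤ 1 - Λ⁻¹ := by
        have : Λ⁻¹ ≤ 1 := inv_le_one_of_one_le₀ hΛ
        linarith
      exact add_le_add_right (mul_le_mul_of_nonneg_left (keyfact Λ hΛ s) hcoef) _
    refine (csInf_le hbdd ⟨t, rfl⟩).trans ?_
    exact msm_aux_pointwise_plus E Λ Λ' t (M t) hΛ hΛΛ' (hM0 t) (hEM t)
  · -- lower bound is monotone decreasing
    rw [hρm Λ, hρm Λ']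
    have h1 := himg' Λ hΛ
    have h2 := himg' Λ' hΛ'1
    rw [← hEdef, ← hmdef] at *
    rw [h1, h2]
    apply csSup_le (Set.range_nonempty _)
    rintro b ⟨t, rfl⟩
    have hbdd : BddAbove (Set.range fun t : ℝ => Λ⁻¹ * E + (1 - Λ⁻¹) * (t + (Λ + 1) * m t)) := by
      refine ⟨Λ⁻¹ * E + (1 - Λ⁻¹) * E, ?_⟩
      rintro x ⟨s, rfl⟩
      have hcoef : (0:ℝ) ≤ 1 - Λ⁻¹ := by
        have : Λ⁻¹ ≤ 1 := inv_le_one_of_one_le₀ hΛ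
        linarith
      exact add_le_add_right (mul_le_mul_of_nonneg_left (keyfact' Λ hΛ s) hcoef) _
    refine le_trans ?_ (le_csSup hbdd ⟨t, rfl⟩)
    exact msm_aux_pointwise_minus E Λ Λ' t (m t) hΛ hΛΛ' (hm0 t) (hEm t)
end

section
/- The expected control-arm pseudo-outcome satisfies the exact identity E[φ₀⁻] = (1 - e★)·μ★₀ + (1 - (1 - e★)/(1 - ê))·(ρ̂ - ρ̄₋(q̂)) + e★·ρ̄₋(q̂). (This is the exact conditional-bias decomposition, symmetric to the treated arm, derived in the proof of Theorem 4.2.) -/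
open MeasureTheory

/-- Exact conditional-bias decomposition of the control-arm pseudo-outcome:
`E[φ₀⁻] = (1 - e★)·μ★₀ + (1 - (1 - e★)/(1 - ê))·(ρ̂ - ρ̄₋(q̂)) + e★·ρ̄₋(q̂)`. -/
theorem control_pseudo_outcome_decomposition
    {Ω : Type*} [MeasurableSpace Ω] (P : Measure Ω) [IsProbabilityMeasure P]
    (Y : Ω → ℝ) (hY : Integrable Y P)
    (T : Set Ω) (hT : MeasurableSet T)
    (estar : ℝ) (hestar : estar = (P T).toReal) (he : estar ∈ Set.Ioo (0 : ℝ) 1)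
    (Λ : ℝ) (hΛ : 1 ≤ Λ)
    (Rm : ℝ → ℝ → ℝ)
    (hRm : ∀ y q : ℝ, Rm y q = Λ⁻¹ * y + (1 - Λ⁻¹) * (q + (Λ + 1) * min (y - q) 0))
    (ehat : ℝ) (hehat : ehat ∈ Set.Ioo (0 : ℝ) 1) (ρhat qhat : ℝ)
    (μstar0 : ℝ) (hμstar0 : μstar0 = (∫ ω in Tᶜ, Y ω ∂P) / (1 - estar))
    (ρbarm : ℝ → ℝ)
    (hρbarm : ∀ q : ℝ, ρbarm q = (∫ ω in Tᶜ, Rm (Y ω) q ∂P) / (1 - estar))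
    (φ : Ω → ℝ)
    (hφ : ∀ ω, φ ω =
      Tᶜ.indicator (fun _ => (1 : ℝ)) ω * Y ω +
        T.indicator (fun _ => (1 : ℝ)) ω * ρhat +
        (ehat / (1 - ehat)) * Tᶜ.indicator (fun _ => (1 : ℝ)) ω *
          (Rm (Y ω) qhat - ρhat)) :
    ∫ ω, φ ω ∂P =
      (1 - estar) * μstar0 +
        (1 - (1 - estar) / (1 - ehat)) * (ρhat - ρbarm qhat) +
        estar * ρbarm qhat := by
  obtain ⟨he0, he1⟩ := he
  obtain ⟨heh0, heh1⟩ := hehat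
  have hTc : MeasurableSet Tᶜ := hT.compl
  have hPT : (P T).toReal = estar := hestar.symm
  have hPTc : (P Tᶜ).toReal = 1 - estar := by
    rw [prob_compl_eq_one_sub hT]
    rw [ENNReal.toReal_sub_of_le prob_le_one (by simp)]
    simp [hPT]
  -- integrability of Rm (Y ·) qhat
  have hRmEq : (fun ω => Rm (Y ω) qhat)
      = fun ω => Λ⁻¹ * Y ω + (1 - Λ⁻¹) * (qhat + (Λ + 1) * min (Y ω - qhat) 0) := by
    funext ω; rw [hRm]
  have hmin : Integrable (fun ω => min (Y ω - qhat) 0) P := by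
    have h1 : Integrable (fun ω => Y ω - qhat) P := hY.sub (integrable_const _)
    have h2 : Integrable (fun ω => (Y ω - qhat - |Y ω - qhat|) / 2) P :=
      (h1.sub h1.abs).div_const 2
    refine h2.congr (Filter.Eventually.of_forall fun ω => ?_)
    dsimp only
    rcases le_or_gt (Y ω - qhat) 0 with h | h
    · rw [min_eq_left h, abs_of_nonpos h]; ring
    · rw [min_eq_right h.le, abs_of_pos h]; ring
  have hRmInt : Integrable (fun ω => Rm (Y ω) qhat) P := by
    rw [hRmEq]
    exact (hY.const_mul _).add
      (((integrable_const qhat).add (hmin.const_mul (Λ + 1))).const_mul _)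
  set c := ehat / (1 - ehat) with hc
  set f1 : Ω → ℝ := Tᶜ.indicator Y with hf1
  set f2 : Ω → ℝ := T.indicator (fun _ => ρhat) with hf2
  set f3 : Ω → ℝ := Tᶜ.indicator (fun ω => c * (Rm (Y ω) qhat - ρhat)) with hf3
  have hφ' : φ = f1 + f2 + f3 := by
    funext ω
    by_cases hω : ω ∈ T
    · simp [hφ, hf1, hf2, hf3, Set.indicator_of_mem, Set.indicator_of_notMem, hω]
    · simp only [hφ, hf1, hf2, hf3, Pi.add_apply,
        Set.indicator_of_mem (Set.mem_compl hω), Set.indicator_of_notMem hω]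
      ring
  have hI1 : Integrable f1 P := hY.indicator hTc
  have hI2 : Integrable f2 P := (integrable_const _).indicator hT
  have hI3 : Integrable f3 P :=
    (((hRmInt.sub (integrable_const _)).const_mul c)).indicator hTc
  have hint1 : ∫ ω, f1 ω ∂P = ∫ ω in Tᶜ, Y ω ∂P := integral_indicator hTc
  have hint2 : ∫ ω, f2 ω ∂P = estar * ρhat := by
    rw [hf2, integral_indicator_const _ hT, smul_eq_mul, measureReal_def, hPT]
  have hint3 : ∫ ω, f3 ω ∂P
      = c * ((∫ ω in Tᶜ, Rm (Y ω) qhat ∂P) - (1 - estar) * ρhat) := by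
    rw [hf3, integral_indicator hTc]
    rw [integral_const_mul]
    rw [integral_sub hRmInt.integrableOn (integrableOn_const (measure_ne_top P Tᶜ))]
    rw [setIntegral_const, smul_eq_mul, measureReal_def, hPTc]
  have hsplit : ∫ ω, φ ω ∂P
      = (∫ ω in Tᶜ, Y ω ∂P) + estar * ρhat
        + c * ((∫ ω in Tᶜ, Rm (Y ω) qhat ∂P) - (1 - estar) * ρhat) := by
    rw [hφ', integral_add' (hI1.add hI2) hI3, integral_add' hI1 hI2, hint1, hint2, hint3]
  rw [hsplit, hμstar0, hρbarm]
  have h1 : (1 : ℝ) - estar ≠ 0 := by linarith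
  have h2 : (1 : ℝ) - ehat ≠ 0 := by linarith
  rw [hc]
  field_simp [hc]
  ring
end

section
/- The treated-arm pseudo-outcome is conservatively biased up to a product term: E[φ₁⁺] ≥ Y⁺ - (|ê - e★|/ê)·|ρ̂ - ρ̄(q̂)|. That is, any bias of the pseudo-outcome in the undesirable direction (below the sharp conditional upper bound Y⁺) is controlled by the product of the propensity error and the error of ρ̂ relative to ρ̄(q̂) = ρ₊*(x, 1, q̂), even if the estimated quantile q̂ is arbitrary. This is the second display (the favorable signed bias bound) of Theorem 4.2 for the treated arm, at the point x. -/
open MeasureTheory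

/-- Favorable signed bias bound for the treated arm: the pseudo-outcome is
conservatively biased up to a product term,
`E[φ₁⁺] ≥ Y⁺ - (|ê - e★|/ê)·|ρ̂ - ρ̄(q̂)|`. -/
theorem treated_pseudo_outcome_valid_bias_bound
    {Ω : Type*} [MeasurableSpace Ω] (P : Measure Ω) [IsProbabilityMeasure P]
    (Y : Ω → ℝ) (hY : Integrable Y P)
    (T : Set Ω) (hT : MeasurableSet T)
    (estar : ℝ) (hestar : estar = (P T).toReal) (he : estar ∈ Set.Ioo (0 : ℝ) 1)
    (Λ : ℝ) (hΛ : 1 ≤ Λ)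
    (Rp : ℝ → ℝ → ℝ)
    (hRp : ∀ y q : ℝ, Rp y q = Λ⁻¹ * y + (1 - Λ⁻¹) * (q + (Λ + 1) * max (y - q) 0))
    (ehat : ℝ) (hehat : ehat ∈ Set.Ioo (0 : ℝ) 1) (ρhat qhat : ℝ)
    (μstar : ℝ) (hμstar : μstar = (∫ ω in T, Y ω ∂P) / estar)
    (ρbar : ℝ → ℝ)
    (hρbar : ∀ q : ℝ, ρbar q = (∫ ω in T, Rp (Y ω) q ∂P) / estar)
    (φ : Ω → ℝ)
    (hφ : ∀ ω, φ ω =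
      T.indicator (fun _ => (1 : ℝ)) ω * Y ω +
        (1 - T.indicator (fun _ => (1 : ℝ)) ω) * ρhat +
        ((1 - ehat) / ehat) * T.indicator (fun _ => (1 : ℝ)) ω *
          (Rp (Y ω) qhat - ρhat))
    (ρstar : ℝ) (hρstar : ρstar = sInf (Set.range ρbar))
    (Yplus : ℝ) (hYplus : Yplus = estar * μstar + (1 - estar) * ρstar) :
    Yplus - (|ehat - estar| / ehat) * |ρhat - ρbar qhat| ≤ ∫ ω, φ ω ∂P := by
  have hes : (0:ℝ) < estar := he.1
  have hes1 : estar < 1 := he.2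
  have heh : (0:ℝ) < ehat := hehat.1
  have hehne : ehat ≠ 0 := ne_of_gt heh
  have hesne : estar ≠ 0 := ne_of_gt hes
  have hΛ0 : (0:ℝ) < Λ := lt_of_lt_of_le one_pos hΛ
  have hΛinv : Λ⁻¹ ≤ 1 := by
    rw [inv_le_one_iff₀]; right; exact hΛ
  have hΛinv0 : (0:ℝ) < Λ⁻¹ := inv_pos.mpr hΛ0
  -- pointwise lower bound Rp y q ≥ y
  have hRge : ∀ y q : ℝ, y ≤ Rp y q := by
    intro y q
    rw [hRp]
    have hm0 : 0 ≤ max (y - q) 0 := le_max_right _ _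
    have hm1 : y - q ≤ max (y - q) 0 := le_max_left _ _
    nlinarith [mul_nonneg (sub_nonneg.mpr hΛinv) hm0]
  -- integrability of Rp (Y ·) q
  have hInt : ∀ q : ℝ, Integrable (fun ω => Rp (Y ω) q) P := by
    intro q
    have : (fun ω => Rp (Y ω) q)
        = fun ω => (Λ⁻¹ * Y ω + (1 - Λ⁻¹) * q)
            + ((1 - Λ⁻¹) * (Λ + 1)) * max (Y ω - q) 0 := by
      funext ω; rw [hRp]; ring
    rw [this]
    exact ((hY.const_mul _).add (integrable_const _)).add
      (((hY.sub (integrable_const q)).pos_part).const_mul _)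
  have hPT : (P T).toReal = estar := hestar.symm
  have hsetInt : ∀ q, (∫ ω in T, Y ω ∂P) ≤ ∫ ω in T, Rp (Y ω) q ∂P := by
    intro q
    exact setIntegral_mono_on hY.integrableOn (hInt q).integrableOn hT
      (fun ω _ => hRge (Y ω) q)
  -- ρbar q ≥ μstar for all q, so range is bounded below
  have hbdd : BddBelow (Set.range ρbar) := by
    refine ⟨μstar, ?_⟩
    rintro r ⟨q, rfl⟩
    rw [hρbar, hμstar]
    exact div_le_div_of_nonneg_right (hsetInt q) hes.le
  have hρle : ρstar ≤ ρbar qhat := by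
    rw [hρstar]
    exact csInf_le hbdd ⟨qhat, rfl⟩
  -- compute the integral of φ
  set c : ℝ := (1 - ehat) / ehat with hc
  have hφeq : φ = fun ω =>
      T.indicator (fun ω => Y ω + c * (Rp (Y ω) qhat - ρhat) - ρhat) ω + ρhat := by
    funext ω
    rw [hφ]
    by_cases hω : ω ∈ T <;> simp [Set.indicator_of_mem, Set.indicator_of_notMem, hω]
  have hIntInd : Integrable (fun ω => Y ω + c * (Rp (Y ω) qhat - ρhat) - ρhat) P :=
    (hY.add (((hInt qhat).sub (integrable_const _)).const_mul c)).sub (integrable_const _)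
  have hIT : ∫ ω, φ ω ∂P
      = (∫ ω in T, (Y ω + c * (Rp (Y ω) qhat - ρhat) - ρhat) ∂P) + ρhat := by
    rw [hφeq]
    rw [integral_add (hIntInd.indicator hT) (integrable_const _)]
    rw [integral_indicator hT, integral_const, probReal_univ, one_smul]
  have i2 : Integrable (fun ω => c * (Rp (Y ω) qhat - ρhat)) (P.restrict T) :=
    (((hInt qhat).sub (integrable_const _)).const_mul c).integrableOn
  have i1 : Integrable (fun ω => Y ω + c * (Rp (Y ω) qhat - ρhat)) (P.restrict T) :=
    hY.integrableOn.add i2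
  have hsplit : ∫ ω in T, (Y ω + c * (Rp (Y ω) qhat - ρhat) - ρhat) ∂P
      = (∫ ω in T, Y ω ∂P) + c * ((∫ ω in T, Rp (Y ω) qhat ∂P) - estar * ρhat)
        - estar * ρhat := by
    rw [integral_sub i1 (integrable_const _),
      integral_add hY.integrableOn i2,
      integral_const_mul,
      integral_sub (hInt qhat).integrableOn (integrable_const _)]
    simp only [setIntegral_const, smul_eq_mul, Measure.real, hPT]
  have hTY : (∫ ω in T, Y ω ∂P) = estar * μstar := by
    rw [hμstar]; field_simp
  have hTR : (∫ ω in T, Rp (Y ω) qhat ∂P) = estar * ρbar qhat := by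
    rw [hρbar]; field_simp
  have hI : ∫ ω, φ ω ∂P
      = estar * μstar + (1 - estar) * ρhat + c * estar * (ρbar qhat - ρhat) := by
    rw [hIT, hsplit, hTY, hTR]; ring
  -- final algebra
  have hkey : ((1 - estar) - c * estar) = (ehat - estar) / ehat := by
    rw [hc]; field_simp; ring
  have habs : (ρbar qhat - ρhat) * ((ehat - estar) / ehat)
      ≤ (|ehat - estar| / ehat) * |ρhat - ρbar qhat| := by
    calc (ρbar qhat - ρhat) * ((ehat - estar) / ehat)
        ≤ |(ρbar qhat - ρhat) * ((ehat - estar) / ehat)| := le_abs_self _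
      _ = (|ehat - estar| / ehat) * |ρhat - ρbar qhat| := by
          rw [abs_mul, abs_div, abs_of_pos heh, abs_sub_comm (ρbar qhat) ρhat]
          ring
  have h2 : (ρbar qhat - ρhat) * ((1 - estar) - c * estar)
      ≤ (|ehat - estar| / ehat) * |ρhat - ρbar qhat| := by
    rw [hkey]; exact habs
  rw [hI, hYplus]
  nlinarith [mul_le_mul_of_nonneg_left hρle (le_of_lt (sub_pos.mpr hes1)), h2]
end

section
/- The control-arm pseudo-outcome is conservatively biased up to a product term: E[φ₀⁻] ≤ Y⁻₀ + (|ê - e★|/(1 - ê))·|ρ̂ - ρ̄₋(q̂)|. That is, any bias of the pseudo-outcome in the undesirable direction (above the sharp conditional lower bound Y⁻₀) is controlled by the product of the propensity error and the error of ρ̂ relative to ρ̄₋(q̂) = ρ₋*(x, 0, q̂), even if the estimated quantile q̂ is arbitrary. This is the second display (the favorable signed bias bound) of Theorem 4.2 for the control arm, at the point x. -/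
/-!
With `e = P(T)`, `c = ê/(1 - ê)` and `ρ̄ = ρ̄₋(q̂)`, averaging over the two arms gives
`E[φ₀⁻] = (1 - e)·μ★₀ + e·ρ̂ + c·(1 - e)·(ρ̄ - ρ̂)`, and the last two terms recombine exactly
into `e·ρ̄ + (e - ê)/(1 - ê)·(ρ̂ - ρ̄)`. Since `R₋(y, q) ≤ y` for `Λ ≥ 1`, every `ρ̄₋(q)` is at
most `μ★₀`, so `ρ̄ ≤ ρ★₋`, and what is left over is the product of the propensity and
regression errors.
-/

open MeasureTheory

section LowerRegression

noncomputable def lowerRegression (Λ y q : ℝ) : ℝ :=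
  Λ⁻¹ * y + (1 - Λ⁻¹) * (q + (Λ + 1) * min (y - q) 0)

lemma lowerRegression_le_self {Λ : ℝ} (hΛ : 1 ≤ Λ) (y q : ℝ) : lowerRegression Λ y q ≤ y := by
  have hΛinv : Λ⁻¹ ≤ 1 := inv_le_one_of_one_le₀ hΛ
  have hmin : (Λ + 1) * min (y - q) 0 ≤ y - q := by
    rcases le_total (y - q) 0 with h | h
    · rw [min_eq_left h]; nlinarith
    · rw [min_eq_right h]; linarith
  unfold lowerRegression
  nlinarith

variable {Ω : Type*} [MeasurableSpace Ω] {μ : Measure Ω} [IsFiniteMeasure μ]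

lemma MeasureTheory.Integrable.lowerRegression {Y : Ω → ℝ} (hY : Integrable Y μ) (Λ q : ℝ) :
    Integrable (fun ω => lowerRegression Λ (Y ω) q) μ :=
  (hY.const_mul _).add <| ((integrable_const q).add <|
    ((hY.sub (integrable_const q)).inf (integrable_const 0)).const_mul _).const_mul _

lemma setAverage_lowerRegression_le {Y : Ω → ℝ} (hY : Integrable Y μ) {Λ : ℝ} (hΛ : 1 ≤ Λ)
    (s : Set Ω) (q : ℝ) :
    ⨍ ω in s, lowerRegression Λ (Y ω) q ∂μ ≤ ⨍ ω in s, Y ω ∂μ := by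
  simp only [setAverage_eq, smul_eq_mul]
  exact mul_le_mul_of_nonneg_left
    (setIntegral_mono (hY.lowerRegression Λ q).integrableOn hY.integrableOn
      fun ω => lowerRegression_le_self hΛ (Y ω) q)
    (inv_nonneg.mpr measureReal_nonneg)

end LowerRegression

section PseudoOutcome

variable {Ω : Type*} [MeasurableSpace Ω]

noncomputable def controlPseudoOutcome (T : Set Ω) (ehat ρhat : ℝ) (Y R : Ω → ℝ) (ω : Ω) :
    ℝ :=
  Tᶜ.indicator (fun _ => (1 : ℝ)) ω * Y ω + T.indicator (fun _ => (1 : ℝ)) ω * ρhat +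
    (ehat / (1 - ehat)) * Tᶜ.indicator (fun _ => (1 : ℝ)) ω * (R ω - ρhat)

lemma integral_controlPseudoOutcome {μ : Measure Ω} [IsFiniteMeasure μ] {T : Set Ω}
    (hT : MeasurableSet T) {Y R : Ω → ℝ} (hY : Integrable Y μ) (hR : Integrable R μ)
    (ehat ρhat : ℝ) :
    ∫ ω, controlPseudoOutcome T ehat ρhat Y R ω ∂μ =
      μ.real Tᶜ * ⨍ ω in Tᶜ, Y ω ∂μ + μ.real T * ρhat +
        ehat / (1 - ehat) * μ.real Tᶜ * (⨍ ω in Tᶜ, R ω ∂μ - ρhat) := by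
  set c := ehat / (1 - ehat)
  have hsplit (ω : Ω) : controlPseudoOutcome T ehat ρhat Y R ω =
      Tᶜ.indicator (fun ω => Y ω + c * (R ω - ρhat)) ω + T.indicator (fun _ => ρhat) ω := by
    by_cases hω : ω ∈ T <;> simp [controlPseudoOutcome, hω, c]
  have hR' : Integrable (fun ω => c * (R ω - ρhat)) μ :=
    (hR.sub (integrable_const ρhat)).const_mul c
  have hYR : Integrable (fun ω => Y ω + c * (R ω - ρhat)) μ := hY.add hR'
  rw [integral_congr_ae (ae_of_all μ hsplit),
    integral_add (hYR.indicator hT.compl) ((integrable_const ρhat).indicator hT),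
    integral_indicator hT.compl, integral_indicator hT,
    integral_add hY.integrableOn hR'.integrableOn, integral_const_mul,
    integral_sub hR.integrableOn (integrable_const ρhat).integrableOn,
    setIntegral_const, setIntegral_const,
    ← measure_smul_setAverage Y (measure_ne_top μ _),
    ← measure_smul_setAverage R (measure_ne_top μ _)]
  simp only [smul_eq_mul]
  ring

end PseudoOutcome

lemma mul_add_odds_mul_sub_le {e e' r m M : ℝ} (he : 0 ≤ e) (he' : e' < 1) (hm : m ≤ M) :
    e * r + e' / (1 - e') * (1 - e) * (m - r) ≤ e * M + |e' - e| / (1 - e') * |r - m| := by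
  have hpos : 0 < 1 - e' := sub_pos.mpr he'
  have hid : e * r + e' / (1 - e') * (1 - e) * (m - r) = e * m + (e - e') * (r - m) / (1 - e') := by
    field_simp
    ring
  have hprod : (e - e') * (r - m) / (1 - e') ≤ |e' - e| / (1 - e') * |r - m| := by
    rw [div_mul_eq_mul_div, abs_sub_comm, ← abs_mul]
    exact div_le_div_of_nonneg_right (le_abs_self _) hpos.le
  rw [hid]
  linarith [mul_le_mul_of_nonneg_left hm he]

theorem control_pseudo_outcome_valid_bias_bound_general
    {Ω : Type*} [MeasurableSpace Ω] (P : Measure Ω) [IsProbabilityMeasure P]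
    (Y : Ω → ℝ) (hY : Integrable Y P)
    (T : Set Ω) (hT : MeasurableSet T)
    (estar : ℝ) (hestar : estar = (P T).toReal)
    (Λ : ℝ) (hΛ : 1 ≤ Λ)
    (Rm : ℝ → ℝ → ℝ)
    (hRm : ∀ y q : ℝ, Rm y q = Λ⁻¹ * y + (1 - Λ⁻¹) * (q + (Λ + 1) * min (y - q) 0))
    (ehat : ℝ) (hehat : ehat ∈ Set.Ioo (0 : ℝ) 1) (ρhat qhat : ℝ)
    (μstar0 : ℝ) (hμstar0 : μstar0 = (∫ ω in Tᶜ, Y ω ∂P) / (1 - estar))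
    (ρbarm : ℝ → ℝ)
    (hρbarm : ∀ q : ℝ, ρbarm q = (∫ ω in Tᶜ, Rm (Y ω) q ∂P) / (1 - estar))
    (φ : Ω → ℝ)
    (hφ : ∀ ω, φ ω =
      Tᶜ.indicator (fun _ => (1 : ℝ)) ω * Y ω +
        T.indicator (fun _ => (1 : ℝ)) ω * ρhat +
        (ehat / (1 - ehat)) * Tᶜ.indicator (fun _ => (1 : ℝ)) ω *
          (Rm (Y ω) qhat - ρhat))
    (ρstarm : ℝ) (hρstarm : ρstarm = sSup (Set.range ρbarm))
    (Yminus0 : ℝ) (hYminus0 : Yminus0 = (1 - estar) * μstar0 + estar * ρstarm) :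
    ∫ ω, φ ω ∂P ≤ Yminus0 + (|ehat - estar| / (1 - ehat)) * |ρhat - ρbarm qhat| := by
  obtain rfl : Rm = lowerRegression Λ := funext₂ hRm
  have hTc : 1 - estar = P.real Tᶜ := by
    rw [probReal_compl_eq_one_sub hT, hestar, measureReal_def]
  have hμ : μstar0 = ⨍ ω in Tᶜ, Y ω ∂P := by
    rw [hμstar0, hTc, setAverage_eq, smul_eq_mul, inv_mul_eq_div]
  have hρ (q : ℝ) : ρbarm q = ⨍ ω in Tᶜ, lowerRegression Λ (Y ω) q ∂P := by
    rw [hρbarm, hTc, setAverage_eq, smul_eq_mul, inv_mul_eq_div]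
  have hρ_le_ρstar : ρbarm qhat ≤ ρstarm := by
    refine hρstarm ▸ le_csSup ⟨μstar0, Set.forall_mem_range.mpr fun q => ?_⟩
      (Set.mem_range_self qhat)
    rw [hρ, hμ]
    exact setAverage_lowerRegression_le hY hΛ Tᶜ q
  have hφ_eq : φ = controlPseudoOutcome T ehat ρhat Y (fun ω => lowerRegression Λ (Y ω) qhat) :=
    funext hφ
  have hestar_nonneg : 0 ≤ estar := hestar ▸ ENNReal.toReal_nonneg
  calc ∫ ω, φ ω ∂P
      = (1 - estar) * μstar0 +
          (estar * ρhat + ehat / (1 - ehat) * (1 - estar) * (ρbarm qhat - ρhat)) := by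
        rw [hφ_eq, integral_controlPseudoOutcome hT hY (hY.lowerRegression Λ qhat), hρ, ← hμ,
          ← hTc, hestar, measureReal_def]
        ring
    _ ≤ (1 - estar) * μstar0 +
          (estar * ρstarm + |ehat - estar| / (1 - ehat) * |ρhat - ρbarm qhat|) :=
        add_le_add_right (mul_add_odds_mul_sub_le hestar_nonneg hehat.2 hρ_le_ρstar) _
    _ = Yminus0 + |ehat - estar| / (1 - ehat) * |ρhat - ρbarm qhat| := by rw [hYminus0]; ring

/-- Favorable signed bias bound for the control arm: the pseudo-outcome is
conservatively biased up to a product term,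
`E[φ₀⁻] ≤ Y⁻₀ + (|ê - e★|/(1 - ê))·|ρ̂ - ρ̄₋(q̂)|`. -/
theorem control_pseudo_outcome_valid_bias_bound
    {Ω : Type*} [MeasurableSpace Ω] (P : Measure Ω) [IsProbabilityMeasure P]
    (Y : Ω → ℝ) (hY : Integrable Y P)
    (T : Set Ω) (hT : MeasurableSet T)
    (estar : ℝ) (hestar : estar = (P T).toReal) (he : estar ∈ Set.Ioo (0 : ℝ) 1)
    (Λ : ℝ) (hΛ : 1 ≤ Λ)
    (Rm : ℝ → ℝ → ℝ)
    (hRm : ∀ y q : ℝ, Rm y q = Λ⁻¹ * y + (1 - Λ⁻¹) * (q + (Λ + 1) * min (y - q) 0))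
    (ehat : ℝ) (hehat : ehat ∈ Set.Ioo (0 : ℝ) 1) (ρhat qhat : ℝ)
    (μstar0 : ℝ) (hμstar0 : μstar0 = (∫ ω in Tᶜ, Y ω ∂P) / (1 - estar))
    (ρbarm : ℝ → ℝ)
    (hρbarm : ∀ q : ℝ, ρbarm q = (∫ ω in Tᶜ, Rm (Y ω) q ∂P) / (1 - estar))
    (φ : Ω → ℝ)
    (hφ : ∀ ω, φ ω =
      Tᶜ.indicator (fun _ => (1 : ℝ)) ω * Y ω +
        T.indicator (fun _ => (1 : ℝ)) ω * ρhat +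
        (ehat / (1 - ehat)) * Tᶜ.indicator (fun _ => (1 : ℝ)) ω *
          (Rm (Y ω) qhat - ρhat))
    (ρstarm : ℝ) (hρstarm : ρstarm = sSup (Set.range ρbarm))
    (Yminus0 : ℝ) (hYminus0 : Yminus0 = (1 - estar) * μstar0 + estar * ρstarm) :
    ∫ ω, φ ω ∂P ≤ Yminus0 + (|ehat - estar| / (1 - ehat)) * |ρhat - ρbarm qhat| :=
  control_pseudo_outcome_valid_bias_bound_general P Y hY T hT estar hestar Λ hΛ Rm hRm ehat hehat
    ρhat qhat μstar0 hμstar0 ρbarm hρbarm φ hφ ρstarm hρstarm Yminus0 hYminus0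
end

section
/- The CATE upper-bound pseudo-outcome φ_τ⁺ := φ₁⁺ - φ₀⁻ satisfies E[φ_τ⁺] ≥ τ⁺ - (|ê - e★|/ê)·|ρ̂₊ - ρ̄₊(q̂₊)| - (|ê - e★|/(1 - ê))·|ρ̂₋ - ρ̄₋(q̂₋)|, where τ⁺ := Y⁺ - Y⁻₀ is the sharp CATE upper bound at the point x. Thus the undesirable bias (below the sharp CATE upper bound) is bounded by products of the propensity error with the ρ-errors measured relative to ρ*(x, a, q̂), even when the estimated quantiles are inconsistent: this is the second display of Theorem 4.2 made explicit at the point x. -/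
open MeasureTheory

/-- Favorable signed bias bound for the CATE upper-bound pseudo-outcome
`φ_τ⁺ = φ₁⁺ - φ₀⁻`:
`E[φ_τ⁺] ≥ τ⁺ - (|ê - e★|/ê)·|ρ̂₊ - ρ̄₊(q̂₊)| - (|ê - e★|/(1-ê))·|ρ̂₋ - ρ̄₋(q̂₋)|`. -/
lemma aux_Rp_ge (Λ y q : ℝ) (hΛ : 1 ≤ Λ) :
    y ≤ Λ⁻¹ * y + (1 - Λ⁻¹) * (q + (Λ + 1) * max (y - q) 0) := by
  have hΛ0 : 0 < Λ := lt_of_lt_of_le one_pos hΛ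
  have hinv : Λ * Λ⁻¹ = 1 := mul_inv_cancel₀ hΛ0.ne'
  have hs1 : Λ⁻¹ ≤ 1 := inv_le_one_of_one_le₀ hΛ
  have hs0 : 0 < Λ⁻¹ := inv_pos.2 hΛ0
  have h1 : y - q ≤ max (y - q) 0 := le_max_left _ _
  have h2 : (0:ℝ) ≤ max (y - q) 0 := le_max_right _ _
  nlinarith [mul_nonneg (sub_nonneg.2 hs1) (sub_nonneg.2 h1),
    mul_nonneg (by linarith : (0:ℝ) ≤ Λ - 1) h2]
lemma aux_Rm_le (Λ y q : ℝ) (hΛ : 1 ≤ Λ) :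
    Λ⁻¹ * y + (1 - Λ⁻¹) * (q + (Λ + 1) * min (y - q) 0) ≤ y := by
  have hΛ0 : 0 < Λ := lt_of_lt_of_le one_pos hΛ
  have hinv : Λ * Λ⁻¹ = 1 := mul_inv_cancel₀ hΛ0.ne'
  have hs1 : Λ⁻¹ ≤ 1 := inv_le_one_of_one_le₀ hΛ
  have hs0 : 0 < Λ⁻¹ := inv_pos.2 hΛ0
  have h1 : min (y - q) 0 ≤ y - q := min_le_left _ _
  have h2 : min (y - q) 0 ≤ (0:ℝ) := min_le_right _ _
  nlinarith [mul_nonneg (sub_nonneg.2 hs1) (sub_nonneg.2 h1),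
    mul_nonneg (by linarith : (0:ℝ) ≤ Λ - 1) (neg_nonneg.2 h2)]


/-- Theorem 4.2 (second display) at the point x. -/
theorem cate_pseudo_outcome_valid_bias_bound
    {Ω : Type*} [MeasurableSpace Ω] (P : Measure Ω) [IsProbabilityMeasure P]
    (Y : Ω → ℝ) (hY : Integrable Y P)
    (T : Set Ω) (hT : MeasurableSet T)
    (estar : ℝ) (hestar : estar = (P T).toReal) (he : estar ∈ Set.Ioo (0 : ℝ) 1)
    (Λ : ℝ) (hΛ : 1 ≤ Λ)
    (Rp Rm : ℝ → ℝ → ℝ)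
    (hRp : ∀ y q : ℝ, Rp y q = Λ⁻¹ * y + (1 - Λ⁻¹) * (q + (Λ + 1) * max (y - q) 0))
    (hRm : ∀ y q : ℝ, Rm y q = Λ⁻¹ * y + (1 - Λ⁻¹) * (q + (Λ + 1) * min (y - q) 0))
    (ehat : ℝ) (hehat : ehat ∈ Set.Ioo (0 : ℝ) 1)
    (ρhatp qhatp ρhatm qhatm : ℝ)
    (μstar : ℝ) (hμstar : μstar = (∫ ω in T, Y ω ∂P) / estar)
    (μstar0 : ℝ) (hμstar0 : μstar0 = (∫ ω in Tᶜ, Y ω ∂P) / (1 - estar))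
    (ρbarp ρbarm : ℝ → ℝ)
    (hρbarp : ∀ q : ℝ, ρbarp q = (∫ ω in T, Rp (Y ω) q ∂P) / estar)
    (hρbarm : ∀ q : ℝ, ρbarm q = (∫ ω in Tᶜ, Rm (Y ω) q ∂P) / (1 - estar))
    (ρstarp : ℝ) (hρstarp : ρstarp = sInf (Set.range ρbarp))
    (ρstarm : ℝ) (hρstarm : ρstarm = sSup (Set.range ρbarm))
    (Yplus : ℝ) (hYplus : Yplus = estar * μstar + (1 - estar) * ρstarp)
    (Yminus0 : ℝ) (hYminus0 : Yminus0 = (1 - estar) * μstar0 + estar * ρstarm)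
    (τplus : ℝ) (hτplus : τplus = Yplus - Yminus0)
    (φ1 φ0 φτ : Ω → ℝ)
    (hφ1 : ∀ ω, φ1 ω =
      T.indicator (fun _ => (1 : ℝ)) ω * Y ω +
        (1 - T.indicator (fun _ => (1 : ℝ)) ω) * ρhatp +
        ((1 - ehat) / ehat) * T.indicator (fun _ => (1 : ℝ)) ω *
          (Rp (Y ω) qhatp - ρhatp))
    (hφ0 : ∀ ω, φ0 ω =
      Tᶜ.indicator (fun _ => (1 : ℝ)) ω * Y ω +
        T.indicator (fun _ => (1 : ℝ)) ω * ρhatm +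
        (ehat / (1 - ehat)) * Tᶜ.indicator (fun _ => (1 : ℝ)) ω *
          (Rm (Y ω) qhatm - ρhatm))
    (hφτ : ∀ ω, φτ ω = φ1 ω - φ0 ω) :
    τplus - (|ehat - estar| / ehat) * |ρhatp - ρbarp qhatp| -
        (|ehat - estar| / (1 - ehat)) * |ρhatm - ρbarm qhatm| ≤
      ∫ ω, φτ ω ∂P := by
  obtain ⟨he0, he1⟩ := he
  obtain ⟨heh0, heh1⟩ := hehat
  have heh1' : (0:ℝ) < 1 - ehat := by linarith
  have hPT : (P T).toReal = estar := hestar.symm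
  have hPTc : (P Tᶜ).toReal = 1 - estar := by
    rw [measure_compl hT (measure_ne_top P T), measure_univ,
      ENNReal.toReal_sub_of_le prob_le_one (by simp), ENNReal.toReal_one, hPT]
  -- integrability of the R-transforms
  have hgq : ∀ q, Integrable (fun ω => Rp (Y ω) q) P := by
    intro q
    have : (fun ω => Rp (Y ω) q) =
        fun ω => Λ⁻¹ * Y ω + (1 - Λ⁻¹) * (q + (Λ + 1) * max (Y ω - q) 0) := by
      funext ω; rw [hRp]
    rw [this]
    exact (hY.const_mul Λ⁻¹).add (((integrable_const q).add
      (((hY.sub (integrable_const q)).pos_part).const_mul (Λ+1))).const_mul (1-Λ⁻¹))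
  have hhq : ∀ q, Integrable (fun ω => Rm (Y ω) q) P := by
    intro q
    have hmin : (fun ω => min (Y ω - q) 0) = fun ω => -(max (q - Y ω) 0) := by
      funext ω
      rcases le_total (Y ω - q) 0 with h | h
      · rw [min_eq_left h, max_eq_left (by linarith)]; ring
      · rw [min_eq_right h, max_eq_right (by linarith)]; simp
    have : (fun ω => Rm (Y ω) q) =
        fun ω => Λ⁻¹ * Y ω + (1 - Λ⁻¹) * (q + (Λ + 1) * min (Y ω - q) 0) := by
      funext ω; rw [hRm]
    rw [this]
    refine (hY.const_mul Λ⁻¹).add (((integrable_const q).add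
      (Integrable.const_mul ?_ (Λ+1))).const_mul (1-Λ⁻¹))
    rw [hmin]
    exact (((integrable_const q).sub hY).pos_part).neg
  set g : Ω → ℝ := fun ω => Rp (Y ω) qhatp with hg_def
  set h : Ω → ℝ := fun ω => Rm (Y ω) qhatm with hh_def
  have hg : Integrable g P := hgq qhatp
  have hh : Integrable h P := hhq qhatm
  -- bounds on ρbar
  have hμle : ∀ q, μstar ≤ ρbarp q := by
    intro q
    rw [hμstar, hρbarp]
    gcongr ?_ / _
    exact setIntegral_mono_on hY.integrableOn (hgq q).integrableOn hT
      (fun ω _ => by rw [hRp]; exact aux_Rp_ge Λ (Y ω) q hΛ)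
  have hμge : ∀ q, ρbarm q ≤ μstar0 := by
    intro q
    rw [hμstar0, hρbarm]
    have h1e : (0:ℝ) < 1 - estar := by linarith
    gcongr ?_ / _
    exact setIntegral_mono_on (hhq q).integrableOn hY.integrableOn hT.compl
      (fun ω _ => by rw [hRm]; exact aux_Rm_le Λ (Y ω) q hΛ)
  have hA : ρstarp ≤ ρbarp qhatp := by
    rw [hρstarp]
    exact csInf_le ⟨μstar, by rintro _ ⟨q, rfl⟩; exact hμle q⟩ ⟨qhatp, rfl⟩
  have hB : ρbarm qhatm ≤ ρstarm := by
    rw [hρstarm]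
    exact le_csSup ⟨μstar0, by rintro _ ⟨q, rfl⟩; exact hμge q⟩ ⟨qhatm, rfl⟩
  -- rewrite φ1 and φ0 as sums of integrable pieces
  have hφ1' : φ1 = fun ω => T.indicator Y ω +
      (ρhatp - ρhatp * T.indicator (fun _ => (1:ℝ)) ω) +
      ((1-ehat)/ehat) * T.indicator (fun ω' => g ω' - ρhatp) ω := by
    funext ω
    rw [hφ1 ω]
    by_cases hω : ω ∈ T <;>
      simp [Set.indicator_of_mem, Set.indicator_of_notMem, hω, hg_def] <;> ring
  have hφ0' : φ0 = fun ω => Tᶜ.indicator Y ω +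
      (ρhatm * T.indicator (fun _ => (1:ℝ)) ω) +
      (ehat/(1-ehat)) * Tᶜ.indicator (fun ω' => h ω' - ρhatm) ω := by
    funext ω
    rw [hφ0 ω]
    by_cases hω : ω ∈ T <;>
      simp [Set.indicator_of_mem, Set.indicator_of_notMem, hω, hh_def] <;> ring
  have I11 : Integrable (fun ω => T.indicator Y ω) P := hY.indicator hT
  have I12 : Integrable (fun ω => ρhatp - ρhatp * T.indicator (fun _ => (1:ℝ)) ω) P :=
    (integrable_const ρhatp).sub (((integrable_const (1:ℝ)).indicator hT).const_mul ρhatp)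
  have I13 : Integrable (fun ω => ((1-ehat)/ehat) * T.indicator (fun ω' => g ω' - ρhatp) ω) P :=
    ((hg.sub (integrable_const ρhatp)).indicator hT).const_mul _
  have I01 : Integrable (fun ω => Tᶜ.indicator Y ω) P := hY.indicator hT.compl
  have I02 : Integrable (fun ω => ρhatm * T.indicator (fun _ => (1:ℝ)) ω) P :=
    ((integrable_const (1:ℝ)).indicator hT).const_mul ρhatm
  have I03 : Integrable (fun ω => (ehat/(1-ehat)) * Tᶜ.indicator (fun ω' => h ω' - ρhatm) ω) P :=
    ((hh.sub (integrable_const ρhatm)).indicator hT.compl).const_mul _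
  have Iφ1 : Integrable φ1 P := by rw [hφ1']; exact (I11.add I12).add I13
  have Iφ0 : Integrable φ0 P := by rw [hφ0']; exact (I01.add I02).add I03
  have I112 : Integrable (fun ω => T.indicator Y ω +
      (ρhatp - ρhatp * T.indicator (fun _ => (1:ℝ)) ω)) P := I11.add I12
  have I012 : Integrable (fun ω => Tᶜ.indicator Y ω +
      ρhatm * T.indicator (fun _ => (1:ℝ)) ω) P := I01.add I02
  have hind1 : ∫ ω, T.indicator (fun _ => (1:ℝ)) ω ∂P = estar := by
    rw [integral_indicator hT, setIntegral_const, smul_eq_mul, measureReal_def, hPT, mul_one]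
  -- compute the integrals
  have hInt1 : ∫ ω, φ1 ω ∂P = (∫ ω in T, Y ω ∂P) + (ρhatp - ρhatp * estar) +
      ((1-ehat)/ehat) * ((∫ ω in T, g ω ∂P) - estar * ρhatp) := by
    simp only [hφ1']
    rw [integral_add I112 I13, integral_add I11 I12,
      integral_indicator hT, integral_sub (integrable_const ρhatp)
        (((integrable_const (1:ℝ)).indicator hT).const_mul ρhatp),
      integral_const, integral_const_mul, hind1, integral_const_mul,
      integral_indicator hT,
      integral_sub hg.integrableOn (integrable_const ρhatp).integrableOn,
      setIntegral_const, smul_eq_mul, measureReal_def, measureReal_def P T, hPT]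
    simp
  have hInt0 : ∫ ω, φ0 ω ∂P = (∫ ω in Tᶜ, Y ω ∂P) + ρhatm * estar +
      (ehat/(1-ehat)) * ((∫ ω in Tᶜ, h ω ∂P) - (1 - estar) * ρhatm) := by
    simp only [hφ0']
    rw [integral_add I012 I03, integral_add I01 I02,
      integral_indicator hT.compl, integral_const_mul, hind1, integral_const_mul,
      integral_indicator hT.compl,
      integral_sub hh.integrableOn (integrable_const ρhatm).integrableOn,
      setIntegral_const, smul_eq_mul, measureReal_def, hPTc]
  have hInt : ∫ ω, φτ ω ∂P = (∫ ω, φ1 ω ∂P) - ∫ ω, φ0 ω ∂P := by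
    have : φτ = fun ω => φ1 ω - φ0 ω := funext hφτ
    rw [this, integral_sub Iφ1 Iφ0]
  -- relate set integrals to μstar, ρbar
  have h1e : (1:ℝ) - estar ≠ 0 := sub_ne_zero_of_ne (ne_of_gt he1)
  have hAeq : ∫ ω in T, Y ω ∂P = estar * μstar := by
    rw [hμstar]; field_simp [he0.ne']
  have hA'eq : ∫ ω in Tᶜ, Y ω ∂P = (1 - estar) * μstar0 := by
    rw [hμstar0]; field_simp [h1e]
  have hBeq : ∫ ω in T, g ω ∂P = estar * ρbarp qhatp := by
    rw [hρbarp]; field_simp [he0.ne']; rfl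
  have hCeq : ∫ ω in Tᶜ, h ω ∂P = (1 - estar) * ρbarm qhatm := by
    rw [hρbarm]; field_simp [h1e]; rfl
  -- key error-term inequalities
  have habs1 : -( |ehat - estar| * |ρhatp - ρbarp qhatp| ) ≤
      (ehat - estar) * (ρhatp - ρbarp qhatp) := by
    rw [← abs_mul]; exact neg_abs_le _
  have habs2 : -( |ehat - estar| * |ρhatm - ρbarm qhatm| ) ≤
      (estar - ehat) * (ρhatm - ρbarm qhatm) := by
    have : |ehat - estar| * |ρhatm - ρbarm qhatm| = |(estar - ehat) * (ρhatm - ρbarm qhatm)| := by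
      rw [abs_mul, abs_sub_comm ehat estar]
    rw [this]; exact neg_abs_le _
  have key1 : -(|ehat - estar| / ehat * |ρhatp - ρbarp qhatp|) ≤
      (1 - estar) * ρhatp + ((1-ehat)/ehat) * estar * (ρbarp qhatp - ρhatp)
        - (1 - estar) * ρbarp qhatp := by
    have expand : (1 - estar) * ρhatp + ((1-ehat)/ehat) * estar * (ρbarp qhatp - ρhatp)
        - (1 - estar) * ρbarp qhatp
        = ((ehat - estar) * (ρhatp - ρbarp qhatp)) / ehat := by
      field_simp
      ring
    rw [expand, div_mul_eq_mul_div, ← neg_div]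
    gcongr
  have habs2' : (estar - ehat) * (ρhatm - ρbarm qhatm) ≤
      |ehat - estar| * |ρhatm - ρbarm qhatm| := by
    calc (estar - ehat) * (ρhatm - ρbarm qhatm)
        ≤ |(estar - ehat) * (ρhatm - ρbarm qhatm)| := le_abs_self _
      _ = |ehat - estar| * |ρhatm - ρbarm qhatm| := by
          rw [abs_mul, abs_sub_comm estar ehat]
  have key2 : (estar * ρhatm + (ehat/(1-ehat)) * (1-estar) * (ρbarm qhatm - ρhatm)
        - estar * ρbarm qhatm) ≤ |ehat - estar| / (1 - ehat) * |ρhatm - ρbarm qhatm| := by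
    have expand : estar * ρhatm + (ehat/(1-ehat)) * (1-estar) * (ρbarm qhatm - ρhatm)
        - estar * ρbarm qhatm
        = ((estar - ehat) * (ρhatm - ρbarm qhatm)) / (1 - ehat) := by
      field_simp
      ring
    rw [expand, div_mul_eq_mul_div]
    gcongr
  have hmul1 : (1 - estar) * ρstarp ≤ (1 - estar) * ρbarp qhatp :=
    mul_le_mul_of_nonneg_left hA (by linarith)
  have hmul2 : estar * ρbarm qhatm ≤ estar * ρstarm :=
    mul_le_mul_of_nonneg_left hB (by linarith)
  rw [hInt, hInt1, hInt0, hAeq, hA'eq, hBeq, hCeq, hτplus, hYplus, hYminus0]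
  linarith [key1, key2, hmul1, hmul2]
end

section
/- Assume additionally that the treated-arm conditional cdf F_T(s) := P({Y ≤ s} ∩ T)/e★ is Lipschitz with constant B ≥ 0 and that q★ ∈ ℝ satisfies F_T(q★) = α, and set ρ★₊ := ρ̄(q★). Then ρ̄(q) ≥ ρ★₊ for all q ∈ ℝ, and the treated-arm pseudo-outcome satisfies the absolute bias bound |E[φ₁⁺] - (e★·μ★ + (1 - e★)·ρ★₊)| ≤ (|ê - e★|/ê)·|ρ̂ - ρ★₊| + ((1 - e★) + |ê - e★|/ê)·((Λ² - 1)/(2Λ))·B·(q̂ - q★)². This is the first display (the product-of-rates absolute bias bound) of Theorem 4.2 for the treated arm, made explicit with constants at the point x. -/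
open MeasureTheory Filter

private lemma pin_low' (Λ u v y : ℝ) (hΛ : 1 ≤ Λ) :
    (v - u) * (1 - (Λ+1) * (if u < y then (1:ℝ) else 0)) ≤
      (v + (Λ+1)*max (y-v) 0) - (u + (Λ+1)*max (y-u) 0) := by
  rcases le_or_gt y u with h | h
  · rw [if_neg (not_lt.2 h), max_eq_right (by linarith : y - u ≤ 0)]
    nlinarith [le_max_right (y-v) (0:ℝ)]
  · rw [if_pos h, max_eq_left (by linarith : 0 ≤ y - u)]
    nlinarith [le_max_left (y-v) (0:ℝ)]

private lemma pin_up' (Λ u v y : ℝ) (hΛ : 1 ≤ Λ) :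
    (v + (Λ+1)*max (y-v) 0) - (u + (Λ+1)*max (y-u) 0) ≤
      (v - u) * (1 - (Λ+1) * (if v < y then (1:ℝ) else 0)) := by
  rcases le_or_gt y v with h | h
  · rw [if_neg (not_lt.2 h), max_eq_right (by linarith : y - v ≤ 0)]
    nlinarith [le_max_right (y-u) (0:ℝ)]
  · rw [if_pos h, max_eq_left (by linarith : 0 ≤ y - v)]
    nlinarith [le_max_left (y-u) (0:ℝ)]

private lemma sum_range_addone (n : ℕ) : (∑ i ∈ Finset.range n, ((i:ℝ)+1)) = n*(n+1)/2 := by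
  induction n with
  | zero => simp
  | succ k ih => rw [Finset.sum_range_succ, ih]; push_cast; ring

set_option maxHeartbeats 1000000 in
/-- Absolute bias bound for the treated-arm pseudo-outcome with explicit constants:
if the treated-arm conditional cdf is `B`-Lipschitz and `F_T(q★) = α`, then
`ρ̄(q) ≥ ρ★₊` for all `q` and
`|E[φ₁⁺] - (e★μ★ + (1-e★)ρ★₊)| ≤ (|ê-e★|/ê)|ρ̂-ρ★₊| + ((1-e★)+|ê-e★|/ê)·((Λ²-1)/(2Λ))·B·(q̂-q★)²`. -/
theorem treated_pseudo_outcome_absolute_bias_bound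
    {Ω : Type*} [MeasurableSpace Ω] (P : Measure Ω) [IsProbabilityMeasure P]
    (Y : Ω → ℝ) (hY : Integrable Y P)
    (T : Set Ω) (hT : MeasurableSet T)
    (estar : ℝ) (hestar : estar = (P T).toReal) (he : estar ∈ Set.Ioo (0 : ℝ) 1)
    (Λ : ℝ) (hΛ : 1 ≤ Λ) (α : ℝ) (hα : α = Λ / (Λ + 1))
    (Rp : ℝ → ℝ → ℝ)
    (hRp : ∀ y q : ℝ, Rp y q = Λ⁻¹ * y + (1 - Λ⁻¹) * (q + (Λ + 1) * max (y - q) 0))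
    (ehat : ℝ) (hehat : ehat ∈ Set.Ioo (0 : ℝ) 1) (ρhat qhat : ℝ)
    (μstar : ℝ) (hμstar : μstar = (∫ ω in T, Y ω ∂P) / estar)
    (ρbar : ℝ → ℝ)
    (hρbar : ∀ q : ℝ, ρbar q = (∫ ω in T, Rp (Y ω) q ∂P) / estar)
    (φ : Ω → ℝ)
    (hφ : ∀ ω, φ ω =
      T.indicator (fun _ => (1 : ℝ)) ω * Y ω +
        (1 - T.indicator (fun _ => (1 : ℝ)) ω) * ρhat +
        ((1 - ehat) / ehat) * T.indicator (fun _ => (1 : ℝ)) ω *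
          (Rp (Y ω) qhat - ρhat))
    (FT : ℝ → ℝ)
    (hFT : ∀ s : ℝ, FT s = (P ({ω | Y ω ≤ s} ∩ T)).toReal / estar)
    (B : ℝ) (hB : 0 ≤ B)
    (hLip : ∀ s t : ℝ, |FT s - FT t| ≤ B * |s - t|)
    (qstar : ℝ) (hqstar : FT qstar = α)
    (ρstar : ℝ) (hρstar : ρstar = ρbar qstar) :
    (∀ q : ℝ, ρstar ≤ ρbar q) ∧
    |(∫ ω, φ ω ∂P) - (estar * μstar + (1 - estar) * ρstar)| ≤
      (|ehat - estar| / ehat) * |ρhat - ρstar| +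
        ((1 - estar) + |ehat - estar| / ehat) * ((Λ ^ 2 - 1) / (2 * Λ)) * B *
          (qhat - qstar) ^ 2 := by
  classical
  obtain ⟨he0, he1⟩ := he
  obtain ⟨heh0, heh1⟩ := hehat
  have hΛ0 : (0:ℝ) < Λ := lt_of_lt_of_le one_pos hΛ
  have hΛ1 : (0:ℝ) < Λ + 1 := by linarith
  have hestar_ne : estar ≠ 0 := ne_of_gt he0
  -- measurable version of Y
  have hYae : AEStronglyMeasurable Y P := hY.aestronglyMeasurable
  set Y' : Ω → ℝ := hYae.mk Y with hY'def
  have hYY' : Y =ᵐ[P] Y' := hYae.ae_eq_mk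
  have hY'meas : Measurable Y' := hYae.stronglyMeasurable_mk.measurable
  -- integrability
  have hsub : ∀ q : ℝ, Integrable (fun ω => max (Y ω - q) 0) P :=
    fun q => (hY.sub (integrable_const q)).pos_part
  have hHint : ∀ q : ℝ, Integrable (fun ω => q + (Λ+1) * max (Y ω - q) 0) P :=
    fun q => (integrable_const q).add ((hsub q).const_mul _)
  set G : ℝ → ℝ := fun q => ∫ ω in T, (q + (Λ+1) * max (Y ω - q) 0) ∂P with hGdef
  -- ρbar in terms of G
  have hρbarG : ∀ q : ℝ, ρbar q = (Λ⁻¹ * (∫ ω in T, Y ω ∂P) + (1-Λ⁻¹) * G q) / estar := by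
    intro q
    rw [hρbar q]
    congr 1
    have : (fun ω => Rp (Y ω) q) = fun ω => Λ⁻¹ * Y ω + (1-Λ⁻¹) * (q + (Λ+1) * max (Y ω - q) 0) := by
      funext ω; exact hRp (Y ω) q
    rw [this, integral_add ((hY.const_mul Λ⁻¹).integrableOn)
        (((hHint q).const_mul (1-Λ⁻¹)).integrableOn), integral_const_mul, integral_const_mul]
  -- indicator integral fact
  have hPTR : (P T).toReal = estar := hestar.symm
  have hJ : ∀ v : ℝ, (P ({ω | Y ω ≤ v} ∩ T)).toReal = estar * FT v := by
    intro v; rw [hFT v]; field_simp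
  have hInd : ∀ v : ℝ,
      (∫ ω in T, ({ω | v < Y' ω}.indicator (fun _ => (1:ℝ))) ω ∂P)
        = estar - estar * FT v := by
    intro v
    have hms : MeasurableSet {ω | v < Y' ω} := measurableSet_lt measurable_const hY'meas
    have hms' : MeasurableSet {ω | Y' ω ≤ v} := measurableSet_le hY'meas measurable_const
    have h1 : (∫ ω in T, ({ω | v < Y' ω}.indicator (fun _ => (1:ℝ))) ω ∂P)
        = (P (T ∩ {ω | v < Y' ω})).toReal := by
      rw [setIntegral_indicator hms, setIntegral_const, measureReal_def, smul_eq_mul, mul_one]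
    have hsets : (({ω | Y ω ≤ v} ∩ T : Set Ω) : Set Ω) =ᵐ[P] (({ω | Y' ω ≤ v} ∩ T : Set Ω) : Set Ω) := by
      filter_upwards [hYY'] with ω h
      show ((Y ω ≤ v ∧ ω ∈ T) = (Y' ω ≤ v ∧ ω ∈ T))
      rw [h]
    have h2 : P ({ω | Y ω ≤ v} ∩ T) = P (T ∩ {ω | Y' ω ≤ v}) := by
      rw [measure_congr hsets, Set.inter_comm]
    have hdisj : Disjoint (T ∩ {ω | Y' ω ≤ v}) (T ∩ {ω | v < Y' ω}) := by
      apply Set.disjoint_left.2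
      rintro ω ⟨-, ha⟩ ⟨-, hb⟩
      exact absurd (show Y' ω ≤ v from ha) (not_le.2 (show v < Y' ω from hb))
    have hunion : (T ∩ {ω | Y' ω ≤ v}) ∪ (T ∩ {ω | v < Y' ω}) = T := by
      rw [← Set.inter_union_distrib_left]
      have : {ω | Y' ω ≤ v} ∪ {ω | v < Y' ω} = Set.univ := by
        ext ω; simp [le_or_gt]
      rw [this, Set.inter_univ]
    have hPT : P (T ∩ {ω | Y' ω ≤ v}) + P (T ∩ {ω | v < Y' ω}) = P T := by
      rw [← measure_union hdisj (hT.inter hms), hunion]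
    have hJ' := hJ v
    rw [h1]
    have := ENNReal.toReal_add (measure_ne_top P (T ∩ {ω | Y' ω ≤ v}))
      (measure_ne_top P (T ∩ {ω | v < Y' ω}))
    rw [hPT] at this
    rw [h2] at hJ'
    rw [hPTR] at this
    linarith
  -- integrability of indicator bound functions
  have hIndInt : ∀ v : ℝ, Integrable (fun ω => ({ω | v < Y' ω}.indicator (fun _ => (1:ℝ))) ω) P := by
    intro v
    exact (integrable_const (1:ℝ)).indicator (measurableSet_lt measurable_const hY'meas)
  -- upper subgradient bound
  have hup : ∀ u v : ℝ, G v - G u ≤ (v - u) * (estar - (Λ+1) * (estar - estar * FT v)) := by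
    intro u v
    have hdiff : G v - G u
        = ∫ ω in T, ((v + (Λ+1)*max (Y ω - v) 0) - (u + (Λ+1)*max (Y ω - u) 0)) ∂P :=
      (integral_sub ((hHint v).integrableOn) ((hHint u).integrableOn)).symm
    have hmono : (fun ω => (v + (Λ+1)*max (Y ω - v) 0) - (u + (Λ+1)*max (Y ω - u) 0))
        ≤ᵐ[P.restrict T]
        (fun ω => (v - u) * (1 - (Λ+1) * ({ω | v < Y' ω}.indicator (fun _ => (1:ℝ))) ω)) := by
      filter_upwards [ae_restrict_of_ae hYY'] with ω h
      have hp := pin_up' Λ u v (Y ω) hΛ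
      rw [Set.indicator_apply]
      simp only [Set.mem_setOf_eq, ← h]
      exact hp
    have hintb : Integrable
        (fun ω => (v - u) * (1 - (Λ+1) * ({ω | v < Y' ω}.indicator (fun _ => (1:ℝ))) ω))
        (P.restrict T) :=
      (((integrable_const (1:ℝ)).sub ((hIndInt v).const_mul (Λ+1))).const_mul (v-u)).integrableOn
    have hle := integral_mono_ae
      (((hHint v).sub (hHint u)).integrableOn) hintb hmono
    rw [hdiff]
    refine hle.trans (le_of_eq ?_)
    rw [integral_const_mul, integral_sub ((integrable_const (1:ℝ)).integrableOn)
        (((hIndInt v).const_mul (Λ+1)).integrableOn), integral_const_mul,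
        setIntegral_const, measureReal_def, smul_eq_mul, mul_one, hPTR, hInd v]
  -- lower subgradient bound
  have hlow : ∀ u v : ℝ, (v - u) * (estar - (Λ+1) * (estar - estar * FT u)) ≤ G v - G u := by
    intro u v
    have hdiff : G v - G u
        = ∫ ω in T, ((v + (Λ+1)*max (Y ω - v) 0) - (u + (Λ+1)*max (Y ω - u) 0)) ∂P :=
      (integral_sub ((hHint v).integrableOn) ((hHint u).integrableOn)).symm
    have hmono : (fun ω => (v - u) * (1 - (Λ+1) * ({ω | u < Y' ω}.indicator (fun _ => (1:ℝ))) ω))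
        ≤ᵐ[P.restrict T]
        (fun ω => (v + (Λ+1)*max (Y ω - v) 0) - (u + (Λ+1)*max (Y ω - u) 0)) := by
      filter_upwards [ae_restrict_of_ae hYY'] with ω h
      have hp := pin_low' Λ u v (Y ω) hΛ
      rw [Set.indicator_apply]
      simp only [Set.mem_setOf_eq, ← h]
      exact hp
    have hintb : Integrable
        (fun ω => (v - u) * (1 - (Λ+1) * ({ω | u < Y' ω}.indicator (fun _ => (1:ℝ))) ω))
        (P.restrict T) :=
      (((integrable_const (1:ℝ)).sub ((hIndInt u).const_mul (Λ+1))).const_mul (v-u)).integrableOn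
    have hle := integral_mono_ae hintb (((hHint v).sub (hHint u)).integrableOn) hmono
    rw [hdiff]
    refine le_trans (le_of_eq ?_) hle
    rw [integral_const_mul, integral_sub ((integrable_const (1:ℝ)).integrableOn)
        (((hIndInt u).const_mul (Λ+1)).integrableOn), integral_const_mul,
        setIntegral_const, measureReal_def, smul_eq_mul, mul_one, hPTR, hInd u]
  -- q★ minimizes G
  have hzero : estar - (Λ+1) * (estar - estar * FT qstar) = 0 := by
    rw [hqstar, hα]; field_simp; ring
  have hmin : ∀ v : ℝ, G qstar ≤ G v := by
    intro v
    have := hlow qstar v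
    rw [hzero, mul_zero] at this
    linarith
  -- claim 1
  have claim1 : ∀ q : ℝ, ρstar ≤ ρbar q := by
    intro q
    rw [hρstar, hρbarG q, hρbarG qstar]
    have hinv : Λ⁻¹ ≤ 1 := by
      rw [inv_le_one_iff₀]; right; exact hΛ
    have hnum : Λ⁻¹ * (∫ ω in T, Y ω ∂P) + (1-Λ⁻¹) * G qstar
        ≤ Λ⁻¹ * (∫ ω in T, Y ω ∂P) + (1-Λ⁻¹) * G q := by
      have := mul_le_mul_of_nonneg_left (hmin q) (by linarith : (0:ℝ) ≤ 1 - Λ⁻¹)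
      linarith
    exact (div_le_div_iff_of_pos_right he0).2 hnum
  have hinv' : (0:ℝ) ≤ 1 - Λ⁻¹ := by
    have : Λ⁻¹ ≤ 1 := by rw [inv_le_one_iff₀]; right; exact hΛ
    linarith
  -- quadratic bound via telescoping
  set d : ℝ := qhat - qstar with hd
  set A : ℝ := estar * (Λ+1) * B * d^2 with hA
  have hA0 : (0:ℝ) ≤ A :=
    mul_nonneg (mul_nonneg (mul_nonneg he0.le hΛ1.le) hB) (sq_nonneg d)
  have hstep : ∀ n : ℕ, 1 ≤ n → G qhat - G qstar ≤ A * (((n:ℝ)+1)/(2*(n:ℝ))) := by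
    intro n hn
    have hn0 : (0:ℝ) < (n:ℝ) := by exact_mod_cast hn
    set t : ℕ → ℝ := fun i => qstar + (i:ℝ) * (d / n) with ht
    have htel : G qhat - G qstar = ∑ i ∈ Finset.range n, (G (t (i+1)) - G (t i)) := by
      rw [Finset.sum_range_sub (fun i => G (t i))]
      have h0 : t 0 = qstar := by simp [ht]
      have hnn : t n = qhat := by
        simp only [ht]
        field_simp
        rw [hd]; ring
      rw [h0, hnn]
    have hterm : ∀ i : ℕ, G (t (i+1)) - G (t i) ≤ estar*(Λ+1)*B*(d^2/(n:ℝ)^2)*((i:ℝ)+1) := by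
      intro i
      have h4 : estar - (Λ+1)*(estar - estar * FT (t (i+1)))
          = (estar*(Λ+1))*(FT (t (i+1)) - FT qstar) := by
        rw [hqstar, hα]; field_simp; ring
      have h1 : G (t (i+1)) - G (t i)
          ≤ (t (i+1) - t i) * ((estar*(Λ+1))*(FT (t (i+1)) - FT qstar)) := by
        have := hup (t i) (t (i+1)); rw [h4] at this; exact this
      have h2 : t (i+1) - t i = d / n := by simp only [ht]; push_cast; ring
      have h3 : t (i+1) - qstar = ((i:ℝ)+1) * (d / n) := by simp only [ht]; push_cast; ring
      have h5 : |FT (t (i+1)) - FT qstar| ≤ B * (((i:ℝ)+1) * (|d| / n)) := by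
        refine (hLip _ _).trans (le_of_eq ?_)
        rw [h3, abs_mul, abs_div, abs_of_nonneg (by positivity : (0:ℝ) ≤ (i:ℝ)+1),
          abs_of_nonneg hn0.le]
      have h6 : (t (i+1) - t i) * ((estar*(Λ+1))*(FT (t (i+1)) - FT qstar))
          ≤ |t (i+1) - t i| * ((estar*(Λ+1))*|FT (t (i+1)) - FT qstar|) := by
        have hc : (0:ℝ) ≤ estar*(Λ+1) := mul_nonneg he0.le hΛ1.le
        have hab := le_abs_self ((t (i+1) - t i) * (FT (t (i+1)) - FT qstar))
        rw [abs_mul] at hab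
        nlinarith [abs_nonneg (t (i+1) - t i), abs_nonneg (FT (t (i+1)) - FT qstar)]
      refine h1.trans (h6.trans ?_)
      have h7 : |t (i+1) - t i| = |d| / n := by rw [h2, abs_div, abs_of_nonneg hn0.le]
      have hdd : |d| * |d| = d^2 := by rw [abs_mul_abs_self]; ring
      calc |t (i+1) - t i| * ((estar*(Λ+1))*|FT (t (i+1)) - FT qstar|)
          ≤ (|d| / n) * ((estar*(Λ+1))*(B * (((i:ℝ)+1) * (|d| / n)))) := by
            rw [h7]
            have hpos : (0:ℝ) ≤ |d| / n := by positivity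
            have hc : (0:ℝ) ≤ estar*(Λ+1) := mul_nonneg he0.le hΛ1.le
            exact mul_le_mul_of_nonneg_left (mul_le_mul_of_nonneg_left h5 hc) hpos
        _ = estar*(Λ+1)*B*(d^2/(n:ℝ)^2)*((i:ℝ)+1) := by
            rw [← hdd]; ring
    have hsum : ∑ i ∈ Finset.range n, (G (t (i+1)) - G (t i))
        ≤ ∑ i ∈ Finset.range n, estar*(Λ+1)*B*(d^2/(n:ℝ)^2)*((i:ℝ)+1) :=
      Finset.sum_le_sum (fun i _ => hterm i)
    have hsum2 : ∑ i ∈ Finset.range n, estar*(Λ+1)*B*(d^2/(n:ℝ)^2)*((i:ℝ)+1)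
        = A * (((n:ℝ)+1)/(2*(n:ℝ))) := by
      rw [← Finset.mul_sum, sum_range_addone, hA]
      field_simp
    rw [htel]
    linarith [hsum, hsum2.le, hsum2.ge]
  have hGq : G qhat - G qstar ≤ A / 2 := by
    have h1 : Tendsto (fun n : ℕ => 1/(n:ℝ)) atTop (nhds 0) :=
      tendsto_one_div_atTop_nhds_zero_nat
    have hlim : Tendsto (fun n : ℕ => A/2 + (A/2) * (1/(n:ℝ))) atTop (nhds (A/2)) := by
      have h2 := (h1.const_mul (A/2)).const_add (A/2)
      simpa using h2
    refine ge_of_tendsto hlim ?_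
    filter_upwards [eventually_ge_atTop 1] with n hn
    have hn0 : (0:ℝ) < (n:ℝ) := by exact_mod_cast hn
    have heqn : A*(((n:ℝ)+1)/(2*(n:ℝ))) = A/2 + (A/2)*(1/(n:ℝ)) := by
      field_simp
    have := hstep n hn
    linarith
  have hquad : ρbar qhat - ρstar ≤ ((Λ^2-1)/(2*Λ))*B*d^2 := by
    have heq : ρbar qhat - ρstar = ((1-Λ⁻¹)*(G qhat - G qstar))/estar := by
      rw [hρstar, hρbarG qhat, hρbarG qstar]; field_simp; ring
    have hle : ((1-Λ⁻¹)*(G qhat - G qstar))/estar ≤ ((1-Λ⁻¹)*(A/2))/estar :=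
      (div_le_div_iff_of_pos_right he0).2 (mul_le_mul_of_nonneg_left hGq hinv')
    have hfin : ((1-Λ⁻¹)*(A/2))/estar = ((Λ^2-1)/(2*Λ))*B*d^2 := by
      rw [hA]; field_simp; ring
    linarith [heq.le, heq.ge]
  -- integral of φ
  have hRpq : Integrable (fun ω => Rp (Y ω) qhat) P := by
    have hfe : (fun ω => Rp (Y ω) qhat)
        = fun ω => Λ⁻¹ * Y ω + (1-Λ⁻¹)*(qhat + (Λ+1)*max (Y ω - qhat) 0) := by
      funext ω; exact hRp (Y ω) qhat
    rw [hfe]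
    exact (hY.const_mul _).add ((hHint qhat).const_mul _)
  have hTRp : ∫ ω in T, Rp (Y ω) qhat ∂P = estar * ρbar qhat := by
    rw [hρbar qhat]; field_simp
  have hTY : ∫ ω in T, Y ω ∂P = estar * μstar := by rw [hμstar]; field_simp
  have hφeq : φ = fun ω => T.indicator Y ω + (ρhat - T.indicator (fun _ => ρhat) ω)
      + T.indicator (fun ω => ((1-ehat)/ehat) * (Rp (Y ω) qhat - ρhat)) ω := by
    funext ω
    rw [hφ ω]
    by_cases hω : ω ∈ T
    · simp only [Set.indicator_of_mem hω]; ring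
    · simp only [Set.indicator_of_notMem hω]; ring
  have hint1 : Integrable (fun ω => T.indicator Y ω) P := hY.indicator hT
  have hint2 : Integrable (fun ω => ρhat - T.indicator (fun _ => ρhat) ω) P :=
    (integrable_const ρhat).sub ((integrable_const ρhat).indicator hT)
  have hint3 : Integrable
      (fun ω => T.indicator (fun ω => ((1-ehat)/ehat) * (Rp (Y ω) qhat - ρhat)) ω) P :=
    ((hRpq.sub (integrable_const ρhat)).const_mul _).indicator hT
  have hIφ : ∫ ω, φ ω ∂P = estar * μstar + (ρhat - estar * ρhat)
      + ((1-ehat)/ehat) * (estar * ρbar qhat - estar * ρhat) := by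
    have hint12 : Integrable (fun ω => T.indicator Y ω
        + (ρhat - T.indicator (fun _ => ρhat) ω)) P := hint1.add hint2
    rw [hφeq, integral_add hint12 hint3]
    rw [integral_add hint1 hint2,
      integral_indicator hT, hTY,
      integral_sub (integrable_const ρhat) ((integrable_const ρhat).indicator hT),
      integral_indicator hT, setIntegral_const, integral_const,
      integral_indicator hT, integral_const_mul,
      integral_sub (hRpq.integrableOn) ((integrable_const ρhat).integrableOn),
      hTRp, setIntegral_const]
    simp [measureReal_def, hPTR]
  refine ⟨claim1, ?_⟩
  have hE : (∫ ω, φ ω ∂P) - (estar * μstar + (1 - estar) * ρstar)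
      = ((ehat - estar)/ehat) * (ρhat - ρstar)
        + ((1-ehat)*estar/ehat) * (ρbar qhat - ρstar) := by
    rw [hIφ]; field_simp; ring
  rw [hE]
  have hΔ0 : 0 ≤ ρbar qhat - ρstar := by linarith [claim1 qhat]
  have hcoef0 : 0 ≤ (1-ehat)*estar/ehat :=
    div_nonneg (mul_nonneg (by linarith) he0.le) heh0.le
  have hcoef : (1-ehat)*estar/ehat ≤ (1-estar) + |ehat-estar|/ehat := by
    have ha : estar - ehat ≤ |ehat - estar| := by rw [abs_sub_comm]; exact le_abs_self _
    have h2 : (1-ehat)*estar ≤ (1-estar)*ehat + |ehat-estar| := by nlinarith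
    calc (1-ehat)*estar/ehat ≤ ((1-estar)*ehat + |ehat-estar|)/ehat :=
          (div_le_div_iff_of_pos_right heh0).2 h2
      _ = (1-estar) + |ehat-estar|/ehat := by field_simp
  have hcoef0' : 0 ≤ (1-estar) + |ehat-estar|/ehat := le_trans hcoef0 hcoef
  calc |((ehat - estar)/ehat) * (ρhat - ρstar) + ((1-ehat)*estar/ehat) * (ρbar qhat - ρstar)|
      ≤ |((ehat - estar)/ehat) * (ρhat - ρstar)|
        + |((1-ehat)*estar/ehat) * (ρbar qhat - ρstar)| := abs_add_le _ _
    _ = (|ehat - estar|/ehat) * |ρhat - ρstar|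
        + ((1-ehat)*estar/ehat) * (ρbar qhat - ρstar) := by
        rw [abs_mul, abs_mul, abs_div, abs_of_pos heh0, abs_of_nonneg hΔ0,
          abs_of_nonneg hcoef0]
    _ ≤ (|ehat - estar|/ehat) * |ρhat - ρstar|
        + ((1-estar) + |ehat-estar|/ehat) * (((Λ^2-1)/(2*Λ))*B*d^2) := by
        have := mul_le_mul hcoef hquad hΔ0 hcoef0'
        linarith
    _ = (|ehat - estar|/ehat) * |ρhat - ρstar|
        + ((1-estar) + |ehat-estar|/ehat) * ((Λ^2-1)/(2*Λ)) * B * d^2 := by ring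
end

section
/- Assume additionally that the conditional cdfs F_T(s) := P({Y ≤ s} ∩ T)/e★ and F_{Tᶜ}(s) := P({Y ≤ s} ∩ Tᶜ)/(1 - e★) are Lipschitz with constant B ≥ 0, that q★₊ ∈ ℝ satisfies F_T(q★₊) = α and q★₋ ∈ ℝ satisfies F_{Tᶜ}(q★₋) = 1 - α, and set ρ★₊ := ρ̄₊(q★₊), ρ★₋ := ρ̄₋(q★₋), Y⁺ := e★·μ★ + (1 - e★)·ρ★₊, Y⁻₀ := (1 - e★)·μ★₀ + e★·ρ★₋, and τ⁺ := Y⁺ - Y⁻₀. Then the CATE upper-bound pseudo-outcome φ_τ⁺ := φ₁⁺ - φ₀⁻ satisfies |E[φ_τ⁺] - τ⁺| ≤ (|ê - e★|/ê)·|ρ̂₊ - ρ★₊| + (|ê - e★|/(1 - ê))·|ρ̂₋ - ρ★₋| + ((1 - e★) + |ê - e★|/ê)·((Λ² - 1)/(2Λ))·B·(q̂₊ - q★₊)² + (e★ + |ê - e★|/(1 - ê))·((Λ² - 1)/(2Λ))·B·(q̂₋ - q★₋)². This is the first display of Theorem 4.2 (the product-of-rates absolute bias bound for the CATE upper bound)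 made explicit with constants at the point x. -/
open MeasureTheory

set_option maxHeartbeats 4000000

open MeasureTheory Set intervalIntegral

lemma lip_integral_bound (F : ℝ → ℝ) (B : ℝ) (hB : 0 ≤ B)
    (hLip : ∀ s t, |F s - F t| ≤ B * |s - t|) (qs q C : ℝ) (hC : F qs = C) :
    |∫ t in qs..q, (F t - C)| ≤ B * (q - qs)^2 / 2 := by
  have hcont : Continuous F := by
    have : LipschitzWith ⟨B, hB⟩ F :=
      LipschitzWith.of_dist_le_mul (fun x y => by
        simp only [Real.dist_eq]; exact hLip x y)
    exact this.continuous
  have hint : ∀ a b : ℝ, IntervalIntegrable (fun t => |F t - C|) volume a b :=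
    fun a b => ((hcont.sub continuous_const).abs).intervalIntegrable a b
  rcases le_total qs q with h | h
  · have h1 : |∫ t in qs..q, (F t - C)| ≤ ∫ t in qs..q, |F t - C| := by
      simpa [Real.norm_eq_abs] using
        intervalIntegral.norm_integral_le_integral_norm (f := fun t => F t - C) h
    have h2 : ∫ t in qs..q, |F t - C| ≤ ∫ t in qs..q, B * (t - qs) := by
      apply intervalIntegral.integral_mono_on h (hint qs q)
        (((continuous_const.mul (continuous_id.sub continuous_const))).intervalIntegrable qs q)
      intro t ht
      calc |F t - C| = |F t - F qs| := by rw [hC]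
        _ ≤ B * |t - qs| := hLip t qs
        _ = B * (t - qs) := by rw [abs_of_nonneg (by linarith [ht.1])]
    have h3 : ∫ t in qs..q, B * (t - qs) = B * (q - qs)^2 / 2 := by
      rw [intervalIntegral.integral_const_mul]
      rw [intervalIntegral.integral_sub intervalIntegrable_id intervalIntegrable_const,
        integral_id, intervalIntegral.integral_const]
      simp; ring
    linarith
  · have h0 : |∫ t in qs..q, (F t - C)| = |∫ t in q..qs, (F t - C)| := by
      rw [intervalIntegral.integral_symm, abs_neg]
    have h1 : |∫ t in q..qs, (F t - C)| ≤ ∫ t in q..qs, |F t - C| := by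
      simpa [Real.norm_eq_abs] using
        intervalIntegral.norm_integral_le_integral_norm (f := fun t => F t - C) h
    have h2 : ∫ t in q..qs, |F t - C| ≤ ∫ t in q..qs, B * (qs - t) := by
      apply intervalIntegral.integral_mono_on h (hint q qs)
        (((continuous_const.mul (continuous_const.sub continuous_id))).intervalIntegrable q qs)
      intro t ht
      calc |F t - C| = |F t - F qs| := by rw [hC]
        _ ≤ B * |t - qs| := hLip t qs
        _ = B * (qs - t) := by rw [abs_of_nonpos (by linarith [ht.2])]; ring
    have h3 : ∫ t in q..qs, B * (qs - t) = B * (q - qs)^2 / 2 := by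
      rw [intervalIntegral.integral_const_mul]
      rw [intervalIntegral.integral_sub intervalIntegrable_const intervalIntegrable_id,
        integral_id, intervalIntegral.integral_const]
      simp; ring
    rw [h0]; linarith

lemma minmax (y a b : ℝ) (hab : a ≤ b) :
    max (y - a) 0 - max (y - b) 0 = min (max (y - a) 0) (b - a) := by
  simp only [max_def, min_def]; split_ifs <;> linarith

lemma integral_posPart_sub_aux {Ω : Type*} [MeasurableSpace Ω] (μ : Measure Ω)
    [IsFiniteMeasure μ] (Y : Ω → ℝ) (hY : Integrable Y μ) (hYm : Measurable Y)
    (a b : ℝ) (hab : a ≤ b) :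
    ∫ ω, (max (Y ω - a) 0 - max (Y ω - b) 0) ∂μ
      = ∫ t in a..b, ((μ Set.univ).toReal - (μ {ω | Y ω ≤ t}).toReal) := by
  set m := (μ Set.univ).toReal with hm
  set g : Ω → ℝ := fun ω => min (max (Y ω - a) 0) (b - a) with hg
  have hgm : Measurable g := ((hYm.sub measurable_const).max measurable_const).min measurable_const
  have hgnn : ∀ ω, 0 ≤ g ω := fun ω => le_min (le_max_right _ _) (by linarith)
  have hgint : Integrable g μ := by
    refine Integrable.mono' (integrable_const (b - a)) hgm.aestronglyMeasurable ?_
    filter_upwards with ω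
    rw [Real.norm_eq_abs, abs_of_nonneg (hgnn ω)]
    exact min_le_right _ _
  have key := hgint.integral_eq_integral_meas_lt (Filter.Eventually.of_forall hgnn)
  have hL : ∫ ω, (max (Y ω - a) 0 - max (Y ω - b) 0) ∂μ = ∫ ω, g ω ∂μ :=
    integral_congr_ae (Filter.Eventually.of_forall fun ω => minmax _ _ _ hab)
  have hpt : ∀ t ∈ Set.Ioi (0:ℝ), (μ {ω | t < g ω}).toReal
      = (Set.Ioo 0 (b - a)).indicator (fun t => (μ {ω | a + t < Y ω}).toReal) t := by
    intro t ht
    have ht0 : (0:ℝ) < t := ht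
    rcases lt_or_ge t (b - a) with h | h
    · rw [Set.indicator_of_mem (Set.mem_Ioo.mpr ⟨ht0, h⟩)]
      congr 2
      ext ω
      simp only [Set.mem_setOf_eq, hg, lt_min_iff, lt_max_iff]
      constructor
      · rintro ⟨h1 | h1, h2⟩
        · linarith
        · linarith
      · intro h1; exact ⟨Or.inl (by linarith), h⟩
    · rw [Set.indicator_of_notMem (fun hmem => absurd hmem.2 (not_lt.mpr h))]
      have hempty : {ω | t < g ω} = ∅ := by
        ext ω
        simp only [Set.mem_setOf_eq, Set.mem_empty_iff_false, iff_false, not_lt, hg]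
        exact le_trans (min_le_right _ _) h
      simp [hempty]
  have h2 : ∫ t in Set.Ioi (0:ℝ), (μ {ω | t < g ω}).toReal
      = ∫ t in Set.Ioo 0 (b-a), (μ {ω | a + t < Y ω}).toReal := by
    rw [setIntegral_congr_fun measurableSet_Ioi hpt,
      setIntegral_indicator measurableSet_Ioo,
      Set.inter_eq_self_of_subset_right Set.Ioo_subset_Ioi_self]
  have h3 : ∫ t in Set.Ioo (0:ℝ) (b-a), (μ {ω | a + t < Y ω}).toReal
      = ∫ t in (0:ℝ)..(b-a), (μ {ω | a + t < Y ω}).toReal := by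
    rw [intervalIntegral.integral_of_le (by linarith),
      MeasureTheory.integral_Ioc_eq_integral_Ioo]
  have h4 : ∫ t in (0:ℝ)..(b-a), (μ {ω | a + t < Y ω}).toReal
      = ∫ t in a..b, (μ {ω | t < Y ω}).toReal := by
    have := intervalIntegral.integral_comp_add_left (a := (0:ℝ)) (b := b - a)
      (fun t => (μ {ω | t < Y ω}).toReal) a
    rw [show a + (0:ℝ) = a by ring, show a + (b - a) = b by ring] at this
    exact this
  have h5 : ∀ t : ℝ, (μ {ω | t < Y ω}).toReal = m - (μ {ω | Y ω ≤ t}).toReal := by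
    intro t
    have hs : MeasurableSet {ω | Y ω ≤ t} := measurableSet_le hYm measurable_const
    have hc : {ω | t < Y ω} = {ω | Y ω ≤ t}ᶜ := by ext ω; simp [not_le]
    rw [hc, measure_compl hs (measure_ne_top μ _),
      ENNReal.toReal_sub_of_le (measure_mono (Set.subset_univ _)) (measure_ne_top μ _)]
  rw [hL, key]
  simp only [measureReal_def]
  rw [h2, h3, h4]
  simp only [h5]

lemma integral_posPart_sub {Ω : Type*} [MeasurableSpace Ω] (μ : Measure Ω)
    [IsFiniteMeasure μ] (Y : Ω → ℝ) (hY : Integrable Y μ) (hYm : Measurable Y)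
    (a b : ℝ) :
    ∫ ω, (max (Y ω - a) 0 - max (Y ω - b) 0) ∂μ
      = ∫ t in a..b, ((μ Set.univ).toReal - (μ {ω | Y ω ≤ t}).toReal) := by
  rcases le_total a b with h | h
  · exact integral_posPart_sub_aux μ Y hY hYm a b h
  · calc ∫ ω, (max (Y ω - a) 0 - max (Y ω - b) 0) ∂μ
        = -∫ ω, (max (Y ω - b) 0 - max (Y ω - a) 0) ∂μ := by
          rw [← MeasureTheory.integral_neg]; congr 1; funext ω; ring
      _ = -∫ t in b..a, ((μ Set.univ).toReal - (μ {ω | Y ω ≤ t}).toReal) := by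
          rw [integral_posPart_sub_aux μ Y hY hYm b a h]
      _ = ∫ t in a..b, ((μ Set.univ).toReal - (μ {ω | Y ω ≤ t}).toReal) := by
          rw [intervalIntegral.integral_symm a b, neg_neg]

lemma arm_bound {Ω : Type*} [MeasurableSpace Ω] (μ : Measure Ω) [IsFiniteMeasure μ]
    (Y : Ω → ℝ) (hY : Integrable Y μ) (hYm : Measurable Y)
    (Λ : ℝ) (hΛ : 1 ≤ Λ) (B' : ℝ) (hB' : 0 ≤ B')
    (F : ℝ → ℝ) (hF : ∀ t, F t = (μ {ω | Y ω ≤ t}).toReal)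
    (hLip : ∀ s t, |F s - F t| ≤ B' * |s - t|)
    (qs : ℝ) (hqs : F qs = (Λ / (Λ + 1)) * (μ Set.univ).toReal) (q : ℝ) :
    |∫ ω, ((q + (Λ+1) * max (Y ω - q) 0) - (qs + (Λ+1) * max (Y ω - qs) 0)) ∂μ|
      ≤ (Λ+1) * (B' * (q - qs)^2 / 2) := by
  set m := (μ Set.univ).toReal with hm
  have hpos : (0:ℝ) < Λ + 1 := by linarith
  have hcont : Continuous F := by
    have : LipschitzWith ⟨B', hB'⟩ F :=
      LipschitzWith.of_dist_le_mul (fun x y => by simp only [Real.dist_eq]; exact hLip x y)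
    exact this.continuous
  have hi : ∀ c : ℝ, Integrable (fun ω => max (Y ω - c) 0) μ :=
    fun c => (hY.sub (integrable_const c)).pos_part
  have hsplit : ∫ ω, ((q + (Λ+1) * max (Y ω - q) 0) - (qs + (Λ+1) * max (Y ω - qs) 0)) ∂μ
      = m * (q - qs) + (Λ+1) * ∫ ω, (max (Y ω - q) 0 - max (Y ω - qs) 0) ∂μ := by
    have hfun : (fun ω => (q + (Λ+1) * max (Y ω - q) 0) - (qs + (Λ+1) * max (Y ω - qs) 0))
        = fun ω => (q - qs) + (Λ+1) * (max (Y ω - q) 0 - max (Y ω - qs) 0) :=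
      funext fun ω => by ring
    have hint2 : Integrable (fun ω => (Λ+1) * (max (Y ω - q) 0 - max (Y ω - qs) 0)) μ := by
      exact ((hi q).sub (hi qs)).const_mul _
    rw [hfun, MeasureTheory.integral_add (integrable_const _) hint2,
      MeasureTheory.integral_const, MeasureTheory.integral_const_mul]
    simp only [smul_eq_mul, hm, measureReal_def]
    try ring
  have e1 : ∫ ω, (max (Y ω - q) 0 - max (Y ω - qs) 0) ∂μ
      = -∫ t in qs..q, (m - F t) := by
    rw [integral_posPart_sub μ Y hY hYm q qs, intervalIntegral.integral_symm qs q]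
    congr 1
    apply intervalIntegral.integral_congr
    intro t _
    show (μ Set.univ).toReal - (μ {ω | Y ω ≤ t}).toReal = m - F t
    rw [hF, hm]
  have e2 : ∫ t in qs..q, (m - (Λ+1)*(m - F t))
      = m * (q - qs) - (Λ+1) * ∫ t in qs..q, (m - F t) := by
    rw [intervalIntegral.integral_sub (f := fun _ => m) (g := fun t => (Λ+1)*(m - F t))
      (intervalIntegrable_const)
      ((continuous_const.mul (continuous_const.sub hcont)).intervalIntegrable qs q),
      intervalIntegral.integral_const_mul, intervalIntegral.integral_const]
    simp [smul_eq_mul]; ring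
  have e3 : ∀ t : ℝ, m - (Λ+1)*(m - F t) = (Λ+1) * (F t - F qs) := by
    intro t
    have h : (Λ+1) * F qs = Λ * m := by rw [hqs]; field_simp
    nlinarith [h]
  simp only [e3] at e2
  rw [intervalIntegral.integral_const_mul] at e2
  have e4 : ∫ ω, ((q + (Λ+1) * max (Y ω - q) 0) - (qs + (Λ+1) * max (Y ω - qs) 0)) ∂μ
      = (Λ+1) * ∫ t in qs..q, (F t - F qs) := by
    rw [hsplit, e1, e2]; ring
  rw [e4, abs_mul, abs_of_pos hpos]
  exact mul_le_mul_of_nonneg_left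
    (lip_integral_bound F B' hB' hLip qs q (F qs) rfl) (le_of_lt hpos)



/-- Absolute bias bound with explicit constants for the CATE upper-bound
pseudo-outcome `φ_τ⁺ = φ₁⁺ - φ₀⁻` (Theorem 4.2, first display, at a point `x`). -/
theorem cate_pseudo_outcome_absolute_bias_bound
    {Ω : Type*} [MeasurableSpace Ω] (P : Measure Ω) [IsProbabilityMeasure P]
    (Y : Ω → ℝ) (hY : Integrable Y P)
    (T : Set Ω) (hT : MeasurableSet T)
    (estar : ℝ) (hestar : estar = (P T).toReal) (he : estar ∈ Set.Ioo (0 : ℝ) 1)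
    (Λ : ℝ) (hΛ : 1 ≤ Λ) (α : ℝ) (hα : α = Λ / (Λ + 1))
    (Rp Rm : ℝ → ℝ → ℝ)
    (hRp : ∀ y q : ℝ, Rp y q = Λ⁻¹ * y + (1 - Λ⁻¹) * (q + (Λ + 1) * max (y - q) 0))
    (hRm : ∀ y q : ℝ, Rm y q = Λ⁻¹ * y + (1 - Λ⁻¹) * (q + (Λ + 1) * min (y - q) 0))
    (ehat : ℝ) (hehat : ehat ∈ Set.Ioo (0 : ℝ) 1)
    (ρhatp qhatp ρhatm qhatm : ℝ)
    (μstar : ℝ) (hμstar : μstar = (∫ ω in T, Y ω ∂P) / estar)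
    (μstar0 : ℝ) (hμstar0 : μstar0 = (∫ ω in Tᶜ, Y ω ∂P) / (1 - estar))
    (ρbarp ρbarm : ℝ → ℝ)
    (hρbarp : ∀ q : ℝ, ρbarp q = (∫ ω in T, Rp (Y ω) q ∂P) / estar)
    (hρbarm : ∀ q : ℝ, ρbarm q = (∫ ω in Tᶜ, Rm (Y ω) q ∂P) / (1 - estar))
    (FT FTc : ℝ → ℝ)
    (hFT : ∀ s : ℝ, FT s = (P ({ω | Y ω ≤ s} ∩ T)).toReal / estar)
    (hFTc : ∀ s : ℝ, FTc s = (P ({ω | Y ω ≤ s} ∩ Tᶜ)).toReal / (1 - estar))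
    (B : ℝ) (hB : 0 ≤ B)
    (hLipT : ∀ s t : ℝ, |FT s - FT t| ≤ B * |s - t|)
    (hLipTc : ∀ s t : ℝ, |FTc s - FTc t| ≤ B * |s - t|)
    (qstarp : ℝ) (hqstarp : FT qstarp = α)
    (qstarm : ℝ) (hqstarm : FTc qstarm = 1 - α)
    (ρstarp : ℝ) (hρstarp : ρstarp = ρbarp qstarp)
    (ρstarm : ℝ) (hρstarm : ρstarm = ρbarm qstarm)
    (Yplus : ℝ) (hYplus : Yplus = estar * μstar + (1 - estar) * ρstarp)
    (Yminus0 : ℝ) (hYminus0 : Yminus0 = (1 - estar) * μstar0 + estar * ρstarm)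
    (τplus : ℝ) (hτplus : τplus = Yplus - Yminus0)
    (φ1 φ0 φτ : Ω → ℝ)
    (hφ1 : ∀ ω, φ1 ω =
      T.indicator (fun _ => (1 : ℝ)) ω * Y ω +
        (1 - T.indicator (fun _ => (1 : ℝ)) ω) * ρhatp +
        ((1 - ehat) / ehat) * T.indicator (fun _ => (1 : ℝ)) ω *
          (Rp (Y ω) qhatp - ρhatp))
    (hφ0 : ∀ ω, φ0 ω =
      Tᶜ.indicator (fun _ => (1 : ℝ)) ω * Y ω +
        T.indicator (fun _ => (1 : ℝ)) ω * ρhatm +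
        (ehat / (1 - ehat)) * Tᶜ.indicator (fun _ => (1 : ℝ)) ω *
          (Rm (Y ω) qhatm - ρhatm))
    (hφτ : ∀ ω, φτ ω = φ1 ω - φ0 ω) :
    |(∫ ω, φτ ω ∂P) - τplus| ≤
      (|ehat - estar| / ehat) * |ρhatp - ρstarp| +
        (|ehat - estar| / (1 - ehat)) * |ρhatm - ρstarm| +
        ((1 - estar) + |ehat - estar| / ehat) * ((Λ ^ 2 - 1) / (2 * Λ)) * B *
          (qhatp - qstarp) ^ 2 +
        (estar + |ehat - estar| / (1 - ehat)) * ((Λ ^ 2 - 1) / (2 * Λ)) * B *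
          (qhatm - qstarm) ^ 2 := by
  obtain ⟨he0, he1⟩ := he
  obtain ⟨hh0, hh1⟩ := hehat
  have hΛ0 : (0:ℝ) < Λ := by linarith
  have hΛ1 : (0:ℝ) < Λ + 1 := by linarith
  have hesne : estar ≠ 0 := ne_of_gt he0
  have h1e : (0:ℝ) < 1 - estar := by linarith
  have h1ene : (1:ℝ) - estar ≠ 0 := ne_of_gt h1e
  have hhne : ehat ≠ 0 := ne_of_gt hh0
  have h1h : (0:ℝ) < 1 - ehat := by linarith
  have h1hne : (1:ℝ) - ehat ≠ 0 := ne_of_gt h1h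
  have hinv1 : Λ⁻¹ ≤ 1 := by
    nlinarith only [mul_nonneg (inv_nonneg.mpr hΛ0.le) (sub_nonneg.mpr hΛ),
      inv_mul_cancel₀ (ne_of_gt hΛ0)]
  have hinvnn : (0:ℝ) ≤ 1 - Λ⁻¹ := by linarith
  have hCnn : (0:ℝ) ≤ (Λ ^ 2 - 1) / (2 * Λ) :=
    div_nonneg (by nlinarith only [hΛ]) (by linarith only [hΛ0])
  -- measurable representative of Y
  obtain ⟨Y', hY'sm, hae⟩ : ∃ Y' : Ω → ℝ, StronglyMeasurable Y' ∧ Y =ᵐ[P] Y' :=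
    ⟨hY.1.mk Y, hY.1.stronglyMeasurable_mk, hY.1.ae_eq_mk⟩
  have hY'm : Measurable Y' := hY'sm.measurable
  have hY' : Integrable Y' P := hY.congr hae
  have hmeasEq : ∀ (s : Set Ω) (t : ℝ),
      P ({ω | Y ω ≤ t} ∩ s) = P ({ω | Y' ω ≤ t} ∩ s) := by
    intro s t
    apply measure_congr
    apply Filter.eventuallyEq_set.mpr
    filter_upwards [hae] with ω h
    simp [Set.mem_inter_iff, h]
  have hPTc : (P Tᶜ).toReal = 1 - estar := by
    rw [measure_compl hT (measure_ne_top P T),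
      ENNReal.toReal_sub_of_le (measure_mono (Set.subset_univ T)) (measure_ne_top P _)]
    simp [hestar]
  -- integrability
  have hmaxI : ∀ q : ℝ, Integrable (fun ω => max (Y ω - q) 0) P :=
    fun q => (hY.sub (integrable_const q)).pos_part
  have hRpInt : ∀ q : ℝ, Integrable (fun ω => Rp (Y ω) q) P := by
    intro q
    have h : (fun ω => Rp (Y ω) q)
        = fun ω => Λ⁻¹ * Y ω + (1 - Λ⁻¹) * (q + (Λ + 1) * max (Y ω - q) 0) :=
      funext fun ω => hRp _ _
    rw [h]
    exact (hY.const_mul _).add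
      (((integrable_const q).add ((hmaxI q).const_mul _)).const_mul _)
  have hminid : ∀ a : ℝ, min a 0 = a - max a 0 := by
    intro a
    rcases le_total a 0 with h | h
    · simp [min_eq_left h, max_eq_right h]
    · simp [min_eq_right h, max_eq_left h]
  have hminmax : ∀ a : ℝ, min a 0 = -max (-a) 0 := by
    intro a
    rcases le_total a 0 with h | h
    · simp [min_eq_left h, max_eq_left (by linarith : (0:ℝ) ≤ -a)]
    · simp [min_eq_right h, max_eq_right (by linarith : -a ≤ (0:ℝ))]
  have hRmInt : ∀ q : ℝ, Integrable (fun ω => Rm (Y ω) q) P := by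
    intro q
    have h : (fun ω => Rm (Y ω) q)
        = fun ω => Λ⁻¹ * Y ω + (1 - Λ⁻¹) * (q + (Λ + 1) * ((Y ω - q) - max (Y ω - q) 0)) :=
      funext fun ω => by rw [hRm, hminid]
    rw [h]
    exact (hY.const_mul _).add
      (((integrable_const q).add
        (((hY.sub (integrable_const q)).sub (hmaxI q)).const_mul _)).const_mul _)
  -- expectation of φ1
  have hφ1eq : φ1 = fun ω => T.indicator Y ω + (ρhatp - T.indicator (fun _ => ρhatp) ω)
      + T.indicator (fun ω' => ((1 - ehat) / ehat) * (Rp (Y ω') qhatp - ρhatp)) ω := by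
    funext ω
    rw [hφ1]
    by_cases h : ω ∈ T <;>
      simp [Set.indicator_of_mem, Set.indicator_of_notMem, h] <;> ring
  have intA1 : Integrable (T.indicator Y) P := hY.indicator hT
  have intB1 : Integrable (fun ω => ρhatp - T.indicator (fun _ => ρhatp) ω) P := by
    exact (integrable_const _).sub ((integrable_const _).indicator hT)
  have intC1 : Integrable
      (fun ω => T.indicator (fun ω' => ((1 - ehat) / ehat) * (Rp (Y ω') qhatp - ρhatp)) ω) P := by
    exact (((hRpInt qhatp).sub (integrable_const _)).const_mul _).indicator hT
  have hIφ1 : ∫ ω, φ1 ω ∂P = (∫ ω in T, Y ω ∂P) + (ρhatp - estar * ρhatp)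
      + ((1 - ehat) / ehat) * ((∫ ω in T, Rp (Y ω) qhatp ∂P) - estar * ρhatp) := by
    have intAB1 : Integrable (fun ω => T.indicator Y ω
        + (ρhatp - T.indicator (fun _ => ρhatp) ω)) P := by exact intA1.add intB1
    have intA1' : Integrable (fun ω => T.indicator Y ω) P := by exact intA1
    rw [hφ1eq, MeasureTheory.integral_add intAB1 intC1,
      MeasureTheory.integral_add intA1' intB1]
    congr 1
    · congr 1
      · exact MeasureTheory.integral_indicator hT
      · rw [MeasureTheory.integral_sub (integrable_const _)
          ((integrable_const _).indicator hT), MeasureTheory.integral_const,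
          MeasureTheory.integral_indicator hT, setIntegral_const]
        simp [← hestar, smul_eq_mul]
        exact Or.inl (by rw [measureReal_def, hestar])
    · rw [MeasureTheory.integral_indicator hT, MeasureTheory.integral_const_mul,
        MeasureTheory.integral_sub ((hRpInt qhatp).restrict) (integrable_const _),
        setIntegral_const]
      rw [measureReal_def, ← hestar, smul_eq_mul]
  -- expectation of φ0
  have hφ0eq : φ0 = fun ω => Tᶜ.indicator Y ω + T.indicator (fun _ => ρhatm) ω
      + Tᶜ.indicator (fun ω' => (ehat / (1 - ehat)) * (Rm (Y ω') qhatm - ρhatm)) ω := by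
    funext ω
    rw [hφ0]
    by_cases h : ω ∈ T <;>
      simp [Set.indicator_of_mem, Set.indicator_of_notMem, h] <;> ring
  have intA0 : Integrable (Tᶜ.indicator Y) P := hY.indicator hT.compl
  have intB0 : Integrable (fun ω => T.indicator (fun _ => ρhatm) ω) P := by
    exact (integrable_const _).indicator hT
  have intC0 : Integrable
      (fun ω => Tᶜ.indicator (fun ω' => (ehat / (1 - ehat)) * (Rm (Y ω') qhatm - ρhatm)) ω) P := by
    exact (((hRmInt qhatm).sub (integrable_const _)).const_mul _).indicator hT.compl
  have hIφ0 : ∫ ω, φ0 ω ∂P = (∫ ω in Tᶜ, Y ω ∂P) + estar * ρhatm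
      + (ehat / (1 - ehat)) * ((∫ ω in Tᶜ, Rm (Y ω) qhatm ∂P) - (1 - estar) * ρhatm) := by
    have intAB0 : Integrable (fun ω => Tᶜ.indicator Y ω
        + T.indicator (fun _ => ρhatm) ω) P := by exact intA0.add intB0
    have intA0' : Integrable (fun ω => Tᶜ.indicator Y ω) P := by exact intA0
    rw [hφ0eq, MeasureTheory.integral_add intAB0 intC0,
      MeasureTheory.integral_add intA0' intB0]
    congr 1
    · congr 1
      · exact MeasureTheory.integral_indicator hT.compl
      · rw [MeasureTheory.integral_indicator hT, setIntegral_const, measureReal_def, ← hestar, smul_eq_mul]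
    · rw [MeasureTheory.integral_indicator hT.compl, MeasureTheory.integral_const_mul,
        MeasureTheory.integral_sub ((hRmInt qhatm).restrict) (integrable_const _),
        setIntegral_const]
      rw [measureReal_def, hPTc, smul_eq_mul]
  have hIφτ : ∫ ω, φτ ω ∂P = (∫ ω, φ1 ω ∂P) - ∫ ω, φ0 ω ∂P := by
    have i1 : Integrable φ1 P := by
      rw [hφ1eq]; exact (intA1.add intB1).add intC1
    have i0 : Integrable φ0 P := by
      rw [hφ0eq]; exact (intA0.add intB0).add intC0
    rw [show (fun ω => φτ ω) = fun ω => φ1 ω - φ0 ω from funext hφτ]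
    exact MeasureTheory.integral_sub i1 i0
  have hAsp_eq : (∫ ω in T, Rp (Y ω) qstarp ∂P) = estar * ρstarp := by
    rw [hρstarp, hρbarp]; field_simp
  have hAsm_eq : (∫ ω in Tᶜ, Rm (Y ω) qstarm ∂P) = (1 - estar) * ρstarm := by
    rw [hρstarm, hρbarm]; field_simp
  have hτ : τplus = (∫ ω in T, Y ω ∂P) + (1 - estar) * ρstarp
      - ((∫ ω in Tᶜ, Y ω ∂P) + estar * ρstarm) := by
    rw [hτplus, hYplus, hYminus0, hμstar, hμstar0]
    field_simp
    try ring
  have hkey : (∫ ω, φτ ω ∂P) - τplus =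
      ((ehat - estar) / ehat) * (ρhatp - ρstarp)
      + ((1 - ehat) / ehat) * ((∫ ω in T, Rp (Y ω) qhatp ∂P) - estar * ρstarp)
      - ((estar - ehat) / (1 - ehat)) * (ρhatm - ρstarm)
      - (ehat / (1 - ehat)) * ((∫ ω in Tᶜ, Rm (Y ω) qhatm ∂P) - (1 - estar) * ρstarm) := by
    rw [hIφτ, hIφ1, hIφ0, hτ]
    field_simp
    ring
  -- plus arm bound
  have hFp : ∀ t : ℝ, estar * FT t = ((P.restrict T) {ω | Y' ω ≤ t}).toReal := by
    intro t
    rw [Measure.restrict_apply (measurableSet_le hY'm measurable_const),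
      ← hmeasEq T t, hFT]
    field_simp
  have hFpLip : ∀ s t : ℝ, |estar * FT s - estar * FT t| ≤ (estar * B) * |s - t| := by
    intro s t
    rw [← mul_sub, abs_mul, abs_of_pos he0, mul_assoc]
    exact mul_le_mul_of_nonneg_left (hLipT s t) he0.le
  have hmT : ((P.restrict T) Set.univ).toReal = estar := by
    rw [Measure.restrict_apply_univ]; exact hestar.symm
  have hFpq : estar * FT qstarp = (Λ / (Λ + 1)) * ((P.restrict T) Set.univ).toReal := by
    rw [hqstarp, hα, hmT]; ring
  have harmp := arm_bound (P.restrict T) Y' (hY'.restrict) hY'm Λ hΛ (estar * B)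
    (by positivity) (fun t => estar * FT t) hFp hFpLip qstarp hFpq qhatp
  have hApdiff : (∫ ω in T, Rp (Y ω) qhatp ∂P) - estar * ρstarp
      = (1 - Λ⁻¹) * ∫ ω, ((qhatp + (Λ + 1) * max (Y' ω - qhatp) 0)
          - (qstarp + (Λ + 1) * max (Y' ω - qstarp) 0)) ∂(P.restrict T) := by
    rw [← hAsp_eq,
      ← MeasureTheory.integral_sub ((hRpInt qhatp).restrict) ((hRpInt qstarp).restrict),
      ← MeasureTheory.integral_const_mul]
    apply MeasureTheory.integral_congr_ae
    filter_upwards [ae_restrict_of_ae hae] with ω h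
    rw [hRp, hRp, h]
    ring
  have hboundp : |(∫ ω in T, Rp (Y ω) qhatp ∂P) - estar * ρstarp|
      ≤ estar * ((Λ ^ 2 - 1) / (2 * Λ)) * B * (qhatp - qstarp) ^ 2 := by
    rw [hApdiff, abs_mul, abs_of_nonneg hinvnn]
    calc (1 - Λ⁻¹) * |∫ ω, ((qhatp + (Λ + 1) * max (Y' ω - qhatp) 0)
          - (qstarp + (Λ + 1) * max (Y' ω - qstarp) 0)) ∂(P.restrict T)|
        ≤ (1 - Λ⁻¹) * ((Λ + 1) * ((estar * B) * (qhatp - qstarp) ^ 2 / 2)) :=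
          mul_le_mul_of_nonneg_left harmp hinvnn
      _ = estar * ((Λ ^ 2 - 1) / (2 * Λ)) * B * (qhatp - qstarp) ^ 2 := by
          field_simp
          ring
  -- minus arm bound
  have hFc' : ∀ t : ℝ, ((P.restrict Tᶜ) {ω | Y' ω ≤ t}).toReal = (1 - estar) * FTc t := by
    intro t
    rw [Measure.restrict_apply (measurableSet_le hY'm measurable_const),
      ← hmeasEq Tᶜ t, hFTc]
    field_simp
  have hatom : ∀ u : ℝ, ((P.restrict Tᶜ) {ω | Y' ω = u}).toReal = 0 := by
    intro u
    have hnn : 0 ≤ ((P.restrict Tᶜ) {ω | Y' ω = u}).toReal := ENNReal.toReal_nonneg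
    have hb : ∀ ε : ℝ, 0 < ε →
        ((P.restrict Tᶜ) {ω | Y' ω = u}).toReal ≤ ((1 - estar) * B) * ε := by
      intro ε hε
      have hsub : {ω | Y' ω = u} ⊆ {ω | Y' ω ≤ u} \ {ω | Y' ω ≤ u - ε} := by
        intro ω h
        have h' : Y' ω = u := h
        refine ⟨le_of_eq h', fun hle => ?_⟩
        have h2 : Y' ω ≤ u - ε := hle
        rw [h'] at h2
        linarith only [h2, hε]
      have hsub2 : {ω | Y' ω ≤ u - ε} ⊆ {ω | Y' ω ≤ u} :=
        fun ω h => le_trans (show Y' ω ≤ u - ε from h) (by linarith only [hε])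
      have hdiff : (P.restrict Tᶜ) ({ω | Y' ω ≤ u} \ {ω | Y' ω ≤ u - ε})
          = (P.restrict Tᶜ) {ω | Y' ω ≤ u} - (P.restrict Tᶜ) {ω | Y' ω ≤ u - ε} :=
        measure_diff hsub2 (measurableSet_le hY'm measurable_const).nullMeasurableSet
          (measure_ne_top _ _)
      have step1 : ((P.restrict Tᶜ) {ω | Y' ω = u}).toReal
          ≤ ((P.restrict Tᶜ) ({ω | Y' ω ≤ u} \ {ω | Y' ω ≤ u - ε})).toReal :=
        ENNReal.toReal_mono (measure_ne_top _ _) (measure_mono hsub)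
      have step2 : ((P.restrict Tᶜ) ({ω | Y' ω ≤ u} \ {ω | Y' ω ≤ u - ε})).toReal
          = (1 - estar) * FTc u - (1 - estar) * FTc (u - ε) := by
        rw [hdiff, ENNReal.toReal_sub_of_le (measure_mono hsub2) (measure_ne_top _ _),
          hFc', hFc']
      have habs : |FTc u - FTc (u - ε)| ≤ B * ε := by
        have h0 := hLipTc u (u - ε)
        have h2 : |u - (u - ε)| = ε := by
          rw [show u - (u - ε) = ε from by ring, abs_of_pos hε]
        rw [h2] at h0
        exact h0
      have h3 : FTc u - FTc (u - ε) ≤ B * ε := le_trans (le_abs_self _) habs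
      have h4 : (1 - estar) * (FTc u - FTc (u - ε)) ≤ (1 - estar) * (B * ε) :=
        mul_le_mul_of_nonneg_left h3 h1e.le
      calc ((P.restrict Tᶜ) {ω | Y' ω = u}).toReal
          ≤ (1 - estar) * FTc u - (1 - estar) * FTc (u - ε) := by
            rw [← step2]; exact step1
        _ = (1 - estar) * (FTc u - FTc (u - ε)) := by ring
        _ ≤ (1 - estar) * (B * ε) := h4
        _ = ((1 - estar) * B) * ε := by ring
    by_contra hne
    have hpos : 0 < ((P.restrict Tᶜ) {ω | Y' ω = u}).toReal :=
      lt_of_le_of_ne hnn (Ne.symm hne)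
    set r := ((P.restrict Tᶜ) {ω | Y' ω = u}).toReal with hr
    set K := (1 - estar) * B with hK
    have hKnn : 0 ≤ K := by positivity
    have h5 := hb (r / (2 * (K + 1))) (div_pos hpos (by linarith))
    have h6 : K * (r / (2 * (K + 1))) < r := by
      rw [show K * (r / (2 * (K + 1))) = (K * r) / (2 * (K + 1)) from by ring,
        div_lt_iff₀ (by linarith)]
      nlinarith only [mul_nonneg hKnn hpos.le, hpos, hKnn]
    linarith only [h5, h6]
  have hG : ∀ t : ℝ, (1 - estar) * (1 - FTc (-t)) = ((P.restrict Tᶜ) {ω | -Y' ω ≤ t}).toReal := by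
    intro t
    have hset : {ω | -Y' ω ≤ t} = {ω | Y' ω < -t}ᶜ := by
      ext ω
      simp only [Set.mem_setOf_eq, Set.mem_compl_iff, not_lt, neg_le]
    rw [hset, measure_compl (measurableSet_lt hY'm measurable_const) (measure_ne_top _ _),
      ENNReal.toReal_sub_of_le (measure_mono (Set.subset_univ _)) (measure_ne_top _ _)]
    have huniv : ((P.restrict Tᶜ) Set.univ).toReal = 1 - estar := by
      rw [Measure.restrict_apply_univ]; exact hPTc
    have hsplitset : {ω | Y' ω ≤ -t} = {ω | Y' ω < -t} ∪ {ω | Y' ω = -t} := by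
      ext ω
      simp only [Set.mem_setOf_eq, Set.mem_union, le_iff_lt_or_eq]
    have hmeas2 : MeasurableSet {ω | Y' ω = -t} := by
      have h : {ω | Y' ω = -t} = Y' ⁻¹' {-t} := rfl
      rw [h]; exact hY'm (measurableSet_singleton _)
    have hdisj : Disjoint {ω | Y' ω < -t} {ω | Y' ω = -t} := by
      rw [Set.disjoint_left]
      intro ω h1 h2
      have h1' : Y' ω < -t := h1
      have h2' : Y' ω = -t := h2
      rw [h2'] at h1'
      exact lt_irrefl _ h1'
    have hlt : ((P.restrict Tᶜ) {ω | Y' ω < -t}).toReal = (1 - estar) * FTc (-t) := by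
      have hu := measure_union (μ := P.restrict Tᶜ) hdisj hmeas2
      rw [← hsplitset] at hu
      have hu2 := congrArg ENNReal.toReal hu
      rw [ENNReal.toReal_add (measure_ne_top _ _) (measure_ne_top _ _), hFc', hatom] at hu2
      linarith only [hu2]
    rw [hlt, huniv]
    ring
  have hGlip : ∀ s t : ℝ, |(1 - estar) * (1 - FTc (-s)) - (1 - estar) * (1 - FTc (-t))|
      ≤ ((1 - estar) * B) * |s - t| := by
    intro s t
    rw [show (1 - estar) * (1 - FTc (-s)) - (1 - estar) * (1 - FTc (-t))
        = (1 - estar) * (FTc (-t) - FTc (-s)) from by ring,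
      abs_mul, abs_of_pos h1e, mul_assoc]
    refine mul_le_mul_of_nonneg_left ?_ h1e.le
    have h0 := hLipTc (-t) (-s)
    have h2 : |(-t) - (-s)| = |s - t| := by
      rw [show (-t) - (-s) = -(t - s) from by ring, abs_neg, abs_sub_comm]
    rw [h2] at h0
    exact h0
  have hGq : (1 - estar) * (1 - FTc (-(-qstarm)))
      = (Λ / (Λ + 1)) * ((P.restrict Tᶜ) Set.univ).toReal := by
    rw [neg_neg, hqstarm, Measure.restrict_apply_univ, hPTc, hα]
    ring
  have harmm := arm_bound (P.restrict Tᶜ) (fun ω => -Y' ω) ((hY'.restrict).neg) hY'm.neg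
    Λ hΛ ((1 - estar) * B) (by positivity) (fun t => (1 - estar) * (1 - FTc (-t))) hG hGlip
    (-qstarm) hGq (-qhatm)
  have hAmdiff : (∫ ω in Tᶜ, Rm (Y ω) qhatm ∂P) - (1 - estar) * ρstarm
      = -((1 - Λ⁻¹) * ∫ ω, (((-qhatm) + (Λ + 1) * max (-Y' ω - -qhatm) 0)
          - ((-qstarm) + (Λ + 1) * max (-Y' ω - -qstarm) 0)) ∂(P.restrict Tᶜ)) := by
    rw [← hAsm_eq,
      ← MeasureTheory.integral_sub ((hRmInt qhatm).restrict) ((hRmInt qstarm).restrict),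
      ← MeasureTheory.integral_const_mul, ← MeasureTheory.integral_neg]
    apply MeasureTheory.integral_congr_ae
    filter_upwards [ae_restrict_of_ae hae] with ω h
    rw [hRm, hRm, h, hminmax (Y' ω - qhatm), hminmax (Y' ω - qstarm)]
    simp only [neg_sub, neg_sub_neg]
    ring
  have hboundm : |(∫ ω in Tᶜ, Rm (Y ω) qhatm ∂P) - (1 - estar) * ρstarm|
      ≤ (1 - estar) * ((Λ ^ 2 - 1) / (2 * Λ)) * B * (qhatm - qstarm) ^ 2 := by
    rw [hAmdiff, abs_neg, abs_mul, abs_of_nonneg hinvnn]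
    calc (1 - Λ⁻¹) * |∫ ω, (((-qhatm) + (Λ + 1) * max (-Y' ω - -qhatm) 0)
          - ((-qstarm) + (Λ + 1) * max (-Y' ω - -qstarm) 0)) ∂(P.restrict Tᶜ)|
        ≤ (1 - Λ⁻¹) * ((Λ + 1) * (((1 - estar) * B) * ((-qhatm) - (-qstarm)) ^ 2 / 2)) :=
          mul_le_mul_of_nonneg_left harmm hinvnn
      _ = (1 - estar) * ((Λ ^ 2 - 1) / (2 * Λ)) * B * (qhatm - qstarm) ^ 2 := by
          field_simp
          ring
  -- final assembly
  have t1 : |((ehat - estar) / ehat) * (ρhatp - ρstarp)|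
      = (|ehat - estar| / ehat) * |ρhatp - ρstarp| := by
    rw [abs_mul, abs_div, abs_of_pos hh0]
  have t2 : |((estar - ehat) / (1 - ehat)) * (ρhatm - ρstarm)|
      = (|ehat - estar| / (1 - ehat)) * |ρhatm - ρstarm| := by
    rw [abs_mul, abs_div, abs_of_pos h1h, abs_sub_comm estar ehat]
  have hq2p : 0 ≤ ((Λ ^ 2 - 1) / (2 * Λ)) * B * (qhatp - qstarp) ^ 2 :=
    mul_nonneg (mul_nonneg hCnn hB) (sq_nonneg _)
  have hq2m : 0 ≤ ((Λ ^ 2 - 1) / (2 * Λ)) * B * (qhatm - qstarm) ^ 2 :=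
    mul_nonneg (mul_nonneg hCnn hB) (sq_nonneg _)
  have t3 : |((1 - ehat) / ehat) * ((∫ ω in T, Rp (Y ω) qhatp ∂P) - estar * ρstarp)|
      ≤ ((1 - estar) + |ehat - estar| / ehat) * ((Λ ^ 2 - 1) / (2 * Λ)) * B
        * (qhatp - qstarp) ^ 2 := by
    rw [abs_mul, abs_of_pos (div_pos h1h hh0)]
    have step : ((1 - ehat) / ehat) * |(∫ ω in T, Rp (Y ω) qhatp ∂P) - estar * ρstarp|
        ≤ ((1 - ehat) / ehat) * (estar * ((Λ ^ 2 - 1) / (2 * Λ)) * B * (qhatp - qstarp) ^ 2) :=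
      mul_le_mul_of_nonneg_left hboundp (div_pos h1h hh0).le
    refine le_trans step ?_
    have hcancel : |ehat - estar| / ehat * ehat = |ehat - estar| := div_mul_cancel₀ _ hhne
    have hcoef : ((1 - ehat) / ehat) * estar ≤ (1 - estar) + |ehat - estar| / ehat := by
      rw [div_mul_eq_mul_div, div_le_iff₀ hh0]
      nlinarith only [neg_abs_le (ehat - estar), hcancel, hh0, hh1, he0, he1]
    calc ((1 - ehat) / ehat) * (estar * ((Λ ^ 2 - 1) / (2 * Λ)) * B * (qhatp - qstarp) ^ 2)
        = (((1 - ehat) / ehat) * estar) * (((Λ ^ 2 - 1) / (2 * Λ)) * B * (qhatp - qstarp) ^ 2) := by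
          ring
      _ ≤ ((1 - estar) + |ehat - estar| / ehat)
          * (((Λ ^ 2 - 1) / (2 * Λ)) * B * (qhatp - qstarp) ^ 2) :=
          mul_le_mul_of_nonneg_right hcoef hq2p
      _ = ((1 - estar) + |ehat - estar| / ehat) * ((Λ ^ 2 - 1) / (2 * Λ)) * B
          * (qhatp - qstarp) ^ 2 := by ring
  have t4 : |(ehat / (1 - ehat)) * ((∫ ω in Tᶜ, Rm (Y ω) qhatm ∂P) - (1 - estar) * ρstarm)|
      ≤ (estar + |ehat - estar| / (1 - ehat)) * ((Λ ^ 2 - 1) / (2 * Λ)) * B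
        * (qhatm - qstarm) ^ 2 := by
    rw [abs_mul, abs_of_pos (div_pos hh0 h1h)]
    have step : (ehat / (1 - ehat)) * |(∫ ω in Tᶜ, Rm (Y ω) qhatm ∂P) - (1 - estar) * ρstarm|
        ≤ (ehat / (1 - ehat)) * ((1 - estar) * ((Λ ^ 2 - 1) / (2 * Λ)) * B * (qhatm - qstarm) ^ 2) :=
      mul_le_mul_of_nonneg_left hboundm (div_pos hh0 h1h).le
    refine le_trans step ?_
    have hcancel : |ehat - estar| / (1 - ehat) * (1 - ehat) = |ehat - estar| :=
      div_mul_cancel₀ _ h1hne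
    have hcoef : (ehat / (1 - ehat)) * (1 - estar) ≤ estar + |ehat - estar| / (1 - ehat) := by
      rw [div_mul_eq_mul_div, div_le_iff₀ h1h]
      nlinarith only [le_abs_self (ehat - estar), hcancel, hh0, hh1, he0, he1]
    calc (ehat / (1 - ehat)) * ((1 - estar) * ((Λ ^ 2 - 1) / (2 * Λ)) * B * (qhatm - qstarm) ^ 2)
        = ((ehat / (1 - ehat)) * (1 - estar)) * (((Λ ^ 2 - 1) / (2 * Λ)) * B * (qhatm - qstarm) ^ 2) := by
          ring
      _ ≤ (estar + |ehat - estar| / (1 - ehat))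
          * (((Λ ^ 2 - 1) / (2 * Λ)) * B * (qhatm - qstarm) ^ 2) :=
          mul_le_mul_of_nonneg_right hcoef hq2m
      _ = (estar + |ehat - estar| / (1 - ehat)) * ((Λ ^ 2 - 1) / (2 * Λ)) * B
          * (qhatm - qstarm) ^ 2 := by ring
  have habs4 : ∀ a b c d : ℝ, |a + b - c - d| ≤ |a| + |b| + |c| + |d| := by
    intro a b c d
    calc |a + b - c - d| = |(a + b) + (-c + -d)| := by rw [show a + b - c - d = (a + b) + (-c + -d) from by ring]
      _ ≤ |a + b| + |(-c + -d)| := abs_add_le _ _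
      _ ≤ (|a| + |b|) + (|(-c)| + |(-d)|) := add_le_add (abs_add_le _ _) (abs_add_le _ _)
      _ = |a| + |b| + |c| + |d| := by rw [abs_neg, abs_neg]; ring
  rw [hkey]
  have hfin := habs4 (((ehat - estar) / ehat) * (ρhatp - ρstarp))
    (((1 - ehat) / ehat) * ((∫ ω in T, Rp (Y ω) qhatp ∂P) - estar * ρstarp))
    (((estar - ehat) / (1 - ehat)) * (ρhatm - ρstarm))
    ((ehat / (1 - ehat)) * ((∫ ω in Tᶜ, Rm (Y ω) qhatm ∂P) - (1 - estar) * ρstarm))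
  rw [t1, t2] at hfin
  linarith only [t3, t4, hfin]
end

section
/- Double validity and double sharpness of the treated-arm pseudo-outcome: (i) if ê = e★ or ρ̂ = ρ̄(q̂), then E[φ₁⁺] = e★·μ★ + (1 - e★)·ρ̄(q̂) ≥ Y⁺, so the pseudo-outcome is exactly valid (conservative) for the sharp bound even with an arbitrary putative quantile q̂; (ii) if, in addition, ρ̄(q̂) = ρ★₊ (e.g., q̂ is a minimizer of ρ̄, such as a conditional α-quantile), then E[φ₁⁺] = Y⁺ exactly. These are the 'doubly valid' and 'doubly sharp' pseudo-outcome properties of Section 4.1 at the point x; in particular, with oracle nuisances the pseudo-outcome is an unbiased characterization of the sharp bound of Result 2.3. -/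
open MeasureTheory

/-- Double validity and double sharpness of the treated-arm pseudo-outcome:
(i) if `ê = e★` or `ρ̂ = ρ̄(q̂)`, then `E[φ₁⁺] = e★μ★ + (1-e★)ρ̄(q̂) ≥ Y⁺`;
(ii) if in addition `ρ̄(q̂) = ρ★₊`, then `E[φ₁⁺] = Y⁺` exactly. -/
theorem treated_pseudo_outcome_doubly_valid_doubly_sharp
    {Ω : Type*} [MeasurableSpace Ω] (P : Measure Ω) [IsProbabilityMeasure P]
    (Y : Ω → ℝ) (hY : Integrable Y P)
    (T : Set Ω) (hT : MeasurableSet T)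
    (estar : ℝ) (hestar : estar = (P T).toReal) (he : estar ∈ Set.Ioo (0 : ℝ) 1)
    (Λ : ℝ) (hΛ : 1 ≤ Λ)
    (Rp : ℝ → ℝ → ℝ)
    (hRp : ∀ y q : ℝ, Rp y q = Λ⁻¹ * y + (1 - Λ⁻¹) * (q + (Λ + 1) * max (y - q) 0))
    (ehat : ℝ) (hehat : ehat ∈ Set.Ioo (0 : ℝ) 1) (ρhat qhat : ℝ)
    (μstar : ℝ) (hμstar : μstar = (∫ ω in T, Y ω ∂P) / estar)
    (ρbar : ℝ → ℝ)
    (hρbar : ∀ q : ℝ, ρbar q = (∫ ω in T, Rp (Y ω) q ∂P) / estar)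
    (φ : Ω → ℝ)
    (hφ : ∀ ω, φ ω =
      T.indicator (fun _ => (1 : ℝ)) ω * Y ω +
        (1 - T.indicator (fun _ => (1 : ℝ)) ω) * ρhat +
        ((1 - ehat) / ehat) * T.indicator (fun _ => (1 : ℝ)) ω *
          (Rp (Y ω) qhat - ρhat))
    (ρstar : ℝ) (hρstar : ρstar = sInf (Set.range ρbar))
    (Yplus : ℝ) (hYplus : Yplus = estar * μstar + (1 - estar) * ρstar) :
    (ehat = estar ∨ ρhat = ρbar qhat →
      ∫ ω, φ ω ∂P = estar * μstar + (1 - estar) * ρbar qhat ∧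
        Yplus ≤ estar * μstar + (1 - estar) * ρbar qhat) ∧
    ((ehat = estar ∨ ρhat = ρbar qhat) → ρbar qhat = ρstar →
      ∫ ω, φ ω ∂P = Yplus) := by
  obtain ⟨he0, he1⟩ := he
  obtain ⟨heh0, heh1⟩ := hehat
  have hΛ0 : (0:ℝ) < Λ := lt_of_lt_of_le one_pos hΛ
  have hinv1 : Λ⁻¹ ≤ 1 := by
    rw [inv_le_one_iff₀]; right; exact hΛ
  -- pointwise bound Y ≤ Rp
  have hRge : ∀ y q : ℝ, y ≤ Rp y q := by
    intro y q
    rw [hRp]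
    have hm1 : y - q ≤ max (y - q) 0 := le_max_left _ _
    have hm2 : (0:ℝ) ≤ max (y - q) 0 := le_max_right _ _
    have key : 0 ≤ (1 - Λ⁻¹) * (q + (Λ + 1) * max (y - q) 0 - y) := by
      apply mul_nonneg (by linarith)
      nlinarith [mul_nonneg hΛ0.le hm2]
    nlinarith [key]
  -- integrability of Rp (Y ·) q
  have hRint : ∀ q : ℝ, Integrable (fun ω => Rp (Y ω) q) P := by
    intro q
    have heq : (fun ω => Rp (Y ω) q)
        = fun ω => Λ⁻¹ * Y ω + (1 - Λ⁻¹) * q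
            + ((1 - Λ⁻¹) * (Λ + 1)) * max (Y ω - q) 0 := by
      funext ω; rw [hRp]; ring
    rw [heq]
    exact ((hY.const_mul _).add (integrable_const _)).add
      (((hY.sub (integrable_const q)).pos_part).const_mul _)
  have hestar_ne : estar ≠ 0 := ne_of_gt he0
  have hehat_ne : ehat ≠ 0 := ne_of_gt heh0
  -- set integral abbreviations
  set IY := ∫ ω in T, Y ω ∂P with hIY
  set IR := ∫ ω in T, Rp (Y ω) qhat ∂P with hIR
  have hIYe : IY = estar * μstar := by
    rw [hμstar]; field_simp
  have hIRe : IR = estar * ρbar qhat := by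
    rw [hρbar]; field_simp; exact hIR
  set c := (1 - ehat) / ehat with hc
  set g : Ω → ℝ := fun ω => Y ω + c * (Rp (Y ω) qhat - ρhat) - ρhat with hg
  have hgint : Integrable g P :=
    (hY.add (((hRint qhat).sub (integrable_const ρhat)).const_mul c)).sub
      (integrable_const ρhat)
  have hφeq : φ = fun ω => T.indicator g ω + ρhat := by
    funext ω
    rw [hφ]
    by_cases h : ω ∈ T
    · simp only [Set.indicator_of_mem h, hg]; ring
    · simp only [Set.indicator_of_notMem h]; ring
  have hPT : (P T).toReal = estar := hestar.symm
  have hconst : ∀ r : ℝ, ∫ _ω in T, r ∂P = estar * r := by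
    intro r
    rw [setIntegral_const, smul_eq_mul]; exact congrArg (· * r) hPT
  have h2 : Integrable (fun ω => c * (Rp (Y ω) qhat - ρhat)) P := by
    simpa using ((hRint qhat).sub (integrable_const ρhat)).const_mul c
  have h1 : Integrable (fun ω => Y ω + c * (Rp (Y ω) qhat - ρhat)) P := by
    exact hY.add h2
  have hIT : ∫ ω in T, g ω ∂P = IY + c * (IR - estar * ρhat) - estar * ρhat := by
    rw [hg]
    rw [integral_sub h1.integrableOn (integrable_const ρhat).integrableOn]
    rw [integral_add hY.integrableOn h2.integrableOn]
    rw [integral_const_mul]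
    rw [integral_sub (hRint qhat).integrableOn (integrable_const ρhat).integrableOn]
    rw [hconst ρhat]
  have hI : ∫ ω, φ ω ∂P = IY + c * (IR - estar * ρhat) - estar * ρhat + ρhat := by
    rw [hφeq]
    rw [integral_add (hgint.indicator hT) (integrable_const ρhat)]
    rw [integral_indicator hT, hIT, integral_const]
    simp
  -- validity: mean under either correct nuisance
  have hmain : ehat = estar ∨ ρhat = ρbar qhat →
      ∫ ω, φ ω ∂P = estar * μstar + (1 - estar) * ρbar qhat := by
    rintro (h | h)
    · rw [hI, hIYe, hIRe, hc, h]
      field_simp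
      ring
    · rw [hI, hIYe, hIRe, h]
      ring
  -- lower boundedness and sharpness inequality
  have hmono : ∀ q : ℝ, μstar ≤ ρbar q := by
    intro q
    rw [hμstar, hρbar]
    have hIle : (∫ ω in T, Y ω ∂P) ≤ ∫ ω in T, Rp (Y ω) q ∂P :=
      integral_mono hY.integrableOn (hRint q).integrableOn (fun ω => hRge (Y ω) q)
    exact (div_le_div_iff_of_pos_right he0).mpr hIle
  have hbdd : BddBelow (Set.range ρbar) := ⟨μstar, by rintro _ ⟨q, rfl⟩; exact hmono q⟩
  have hρle : ρstar ≤ ρbar qhat := by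
    rw [hρstar]; exact csInf_le hbdd (Set.mem_range_self qhat)
  constructor
  · intro h
    refine ⟨hmain h, ?_⟩
    rw [hYplus]
    have h1e : (0:ℝ) ≤ 1 - estar := by linarith
    nlinarith [mul_le_mul_of_nonneg_left hρle h1e]
  · intro h hq
    rw [hmain h, hq, hYplus]
end
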